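/- arXiv:1511.07396 — 7 statements merged into one kernel-verified Lean document; each statement's English description precedes it below -/
import Mathlib

section
/- Let α > 0, β ∈ (0,1] and γ > 0. There exists C > 0 such that for every x ∈ 𝔇_α and every K ≥ 2/α: ‖ b^K_{β,γ}(x) − b(x) ‖₂ ≤ (C/K) · ‖x‖₂, where b^K_{β,γ}(x) = J_{F_{β,γ}}(x)^{−1} h^K_{β,γ}(x) = ( h^{K,(1)}_{β,γ}(x)/(β x₁^{β−1}), h^{K,(2)}_{β,γ}(x)/(γ β x₂^{β−1}) ). -/
open Real Set

/-- The competitive Lotka–Volterra vector field (with `τᵢ = λᵢ − μᵢ`). -/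
noncomputable def bLVbd (lam₁ lam₂ mu₁ mu₂ a b c d : ℝ) (x : ℝ × ℝ) : ℝ × ℝ :=
  (x.1 * ((lam₁ - mu₁) - a * x.1 - c * x.2), x.2 * ((lam₂ - mu₂) - b * x.2 - d * x.1))

/-- The jump compensator `h^K_{β,γ}` of the transformed scaled birth–death
process. -/
noncomputable def hKbd (lam₁ lam₂ mu₁ mu₂ a b c d β γ K : ℝ) (x : ℝ × ℝ) : ℝ × ℝ :=
  (lam₁ * K * x.1 * ((x.1 + 1 / K) ^ β - x.1 ^ β)
      + K * x.1 * (mu₁ + a * x.1 + c * x.2) * ((x.1 - 1 / K) ^ β - x.1 ^ β),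
   γ * lam₂ * K * x.2 * ((x.2 + 1 / K) ^ β - x.2 ^ β)
      + γ * K * x.2 * (mu₂ + b * x.2 + d * x.1) * ((x.2 - 1 / K) ^ β - x.2 ^ β))

/-- The drift `b^K_{β,γ} = J_{F_{β,γ}}⁻¹ h^K_{β,γ}`. -/
noncomputable def bKbd (lam₁ lam₂ mu₁ mu₂ a b c d β γ K : ℝ) (x : ℝ × ℝ) : ℝ × ℝ :=
  ((hKbd lam₁ lam₂ mu₁ mu₂ a b c d β γ K x).1 / (β * x.1 ^ (β - 1)),
   (hKbd lam₁ lam₂ mu₁ mu₂ a b c d β γ K x).2 / (γ * β * x.2 ^ (β - 1)))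

/-- The cone-like domain `𝔇_α = { x ∈ (α,∞)² : x₁ ≥ α x₂, x₂ ≥ α x₁ }`. -/
def Dfrak (α : ℝ) : Set (ℝ × ℝ) :=
  {x | α < x.1 ∧ α < x.2 ∧ α * x.2 ≤ x.1 ∧ α * x.1 ≤ x.2}

/-- Euclidean norm on `ℝ²`. -/
noncomputable def nrm2 (u : ℝ × ℝ) : ℝ := Real.sqrt (u.1 ^ 2 + u.2 ^ 2)

/-!
Each coordinate of `b^K_{β,γ}` is a one-species drift
`K x (λ ((x + 1/K)^β − x^β) + M ((x − 1/K)^β − x^β)) / (β x^(β−1))`, to be compared with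
`x (λ − M)`. The first-order Taylor expansion of `u ↦ u^β` at `x` with step `±1/K` has a remainder
of order `x^β (Kx)⁻²`, so after the normalisation by `K x / (β x^(β−1))` each coordinate error is
`O((|λ| + |M|)/K)`. On `𝔇_α` both coordinates exceed `α`, so the rates `λ` and
`M = μ + (linear in x)` are `O(‖x‖₂)`.
-/

/-- The lower bound applies Bernoulli's inequality to `(1 + t)⁻¹ = 1 - t / (1 + t)`. -/
lemma abs_one_add_rpow_sub_one_sub_mul_le {β t : ℝ} (hβ0 : 0 ≤ β) (hβ1 : β ≤ 1)
    (ht : -(1 / 2) ≤ t) : |(1 + t) ^ β - 1 - β * t| ≤ 2 * β * t ^ 2 := by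
  have h1t : 0 < 1 + t := by linarith
  have hupper : (1 + t) ^ β ≤ 1 + β * t :=
    rpow_one_add_le_one_add_mul_self (by linarith) hβ0 hβ1
  have hinv : ((1 + t) ^ β)⁻¹ ≤ (1 + (1 - β) * t) / (1 + t) := by
    have hs : -1 ≤ -t / (1 + t) := by
      rw [le_div_iff₀ h1t]
      linarith
    have h := rpow_one_add_le_one_add_mul_self hs hβ0 hβ1
    rwa [show 1 + -t / (1 + t) = (1 + t)⁻¹ by field_simp; ring, inv_rpow h1t.le,
      show 1 + β * (-t / (1 + t)) = (1 + (1 - β) * t) / (1 + t) by field_simp; ring] at h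
  have hpow : 0 < (1 + t) ^ β := rpow_pos_of_pos h1t β
  have hD : 1 / 2 ≤ 1 + (1 - β) * t := by nlinarith
  have hlower : 1 + t ≤ (1 + t) ^ β * (1 + (1 - β) * t) := by
    rw [inv_le_iff_one_le_mul₀' hpow, mul_div_assoc', le_div_iff₀ h1t, one_mul] at hinv
    linarith
  rw [abs_le]
  constructor <;> nlinarith [sq_nonneg t, mul_nonneg hβ0 (sq_nonneg t)]

lemma abs_rpow_add_sub_rpow_div_sub_le {β x h : ℝ} (hβ0 : 0 < β) (hβ1 : β ≤ 1) (hx : 0 < x)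
    (hh : -(x / 2) ≤ h) :
    |((x + h) ^ β - x ^ β) / (β * x ^ (β - 1)) - h| ≤ 2 * h ^ 2 / x := by
  have ht : -(1 / 2) ≤ h / x := by
    rw [le_div_iff₀ hx]
    linarith
  have hscale : ((x + h) ^ β - x ^ β) / (β * x ^ (β - 1)) - h
      = x / β * ((1 + h / x) ^ β - 1 - β * (h / x)) := by
    rw [show x + h = x * (1 + h / x) by field_simp, mul_rpow hx.le (by linarith),
      rpow_sub_one hx.ne']
    field_simp
  calc |((x + h) ^ β - x ^ β) / (β * x ^ (β - 1)) - h|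
      = x / β * |(1 + h / x) ^ β - 1 - β * (h / x)| := by
        rw [hscale, abs_mul, abs_of_pos (div_pos hx hβ0)]
    _ ≤ x / β * (2 * β * (h / x) ^ 2) := by
        gcongr
        exact abs_one_add_rpow_sub_one_sub_mul_le hβ0.le hβ1 ht
    _ = 2 * h ^ 2 / x := by
        field_simp

/-- One coordinate of `J_F⁻¹ h^K`: birth rate `lam`, death rate `M` per individual. -/
noncomputable def birthDeathDrift (β K lam M x : ℝ) : ℝ :=
  (lam * K * x * ((x + 1 / K) ^ β - x ^ β) + K * x * M * ((x - 1 / K) ^ β - x ^ β))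
    / (β * x ^ (β - 1))

lemma abs_birthDeathDrift_sub_le {β K x : ℝ} (lam M : ℝ) (hβ0 : 0 < β) (hβ1 : β ≤ 1)
    (hx : 0 < x) (hK : 2 / x ≤ K) :
    |birthDeathDrift β K lam M x - x * (lam - M)| ≤ 2 * (|lam| + |M|) / K := by
  have hK0 : 0 < K := (div_pos two_pos hx).trans_le hK
  have hstep : 1 / K ≤ x / 2 := by
    rw [div_le_iff₀ hK0]
    rw [div_le_iff₀ hx] at hK
    linarith
  set u := ((x + 1 / K) ^ β - x ^ β) / (β * x ^ (β - 1)) - 1 / K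
  set v := ((x + -(1 / K)) ^ β - x ^ β) / (β * x ^ (β - 1)) - -(1 / K)
  have hu : |u| ≤ 2 * (1 / K) ^ 2 / x :=
    abs_rpow_add_sub_rpow_div_sub_le hβ0 hβ1 hx (by linarith [one_div_pos.mpr hK0])
  have hv : |v| ≤ 2 * (1 / K) ^ 2 / x := by
    rw [← neg_sq]
    exact abs_rpow_add_sub_rpow_div_sub_le hβ0 hβ1 hx (by linarith)
  have hsplit :
      birthDeathDrift β K lam M x - x * (lam - M) = lam * (K * x) * u + M * (K * x) * v := by
    simp only [birthDeathDrift, u, v, ← sub_eq_add_neg]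
    field_simp
    ring
  have hKx : 0 < K * x := mul_pos hK0 hx
  calc |birthDeathDrift β K lam M x - x * (lam - M)|
      ≤ |lam| * (K * x) * |u| + |M| * (K * x) * |v| := by
        rw [hsplit]
        refine (abs_add_le _ _).trans_eq ?_
        rw [abs_mul (lam * (K * x)), abs_mul lam, abs_mul (M * (K * x)), abs_mul M,
          abs_of_pos hKx]
    _ ≤ |lam| * (K * x) * (2 * (1 / K) ^ 2 / x) + |M| * (K * x) * (2 * (1 / K) ^ 2 / x) := by
        gcongr
    _ = 2 * (|lam| + |M|) / K := by
        field_simp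

lemma bKbd_fst (lam₁ lam₂ mu₁ mu₂ a b c d β γ K : ℝ) (x : ℝ × ℝ) :
    (bKbd lam₁ lam₂ mu₁ mu₂ a b c d β γ K x).1
      = birthDeathDrift β K lam₁ (mu₁ + a * x.1 + c * x.2) x.1 :=
  rfl

lemma bKbd_snd (lam₁ lam₂ mu₁ mu₂ a b c d β K : ℝ) {γ : ℝ} (hγ : γ ≠ 0) (x : ℝ × ℝ) :
    (bKbd lam₁ lam₂ mu₁ mu₂ a b c d β γ K x).2
      = birthDeathDrift β K lam₂ (mu₂ + b * x.2 + d * x.1) x.2 := by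
  simp only [bKbd, hKbd, birthDeathDrift]
  field_simp

lemma bLVbd_fst (lam₁ lam₂ mu₁ mu₂ a b c d : ℝ) (x : ℝ × ℝ) :
    (bLVbd lam₁ lam₂ mu₁ mu₂ a b c d x).1 = x.1 * (lam₁ - (mu₁ + a * x.1 + c * x.2)) := by
  simp only [bLVbd]
  ring

lemma bLVbd_snd (lam₁ lam₂ mu₁ mu₂ a b c d : ℝ) (x : ℝ × ℝ) :
    (bLVbd lam₁ lam₂ mu₁ mu₂ a b c d x).2 = x.2 * (lam₂ - (mu₂ + b * x.2 + d * x.1)) := by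
  simp only [bLVbd]
  ring

lemma nrm2_le_abs_add_abs (u : ℝ × ℝ) : nrm2 u ≤ |u.1| + |u.2| := by
  rw [nrm2, sqrt_le_left (by positivity)]
  nlinarith [sq_abs u.1, sq_abs u.2, abs_nonneg u.1, abs_nonneg u.2]

lemma abs_fst_le_nrm2 (u : ℝ × ℝ) : |u.1| ≤ nrm2 u :=
  abs_le_sqrt (by nlinarith [sq_nonneg u.2])

lemma abs_snd_le_nrm2 (u : ℝ × ℝ) : |u.2| ≤ nrm2 u :=
  abs_le_sqrt (by nlinarith [sq_nonneg u.1])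

lemma abs_add_abs_affine_le {α N p q r s y z : ℝ} (hα : 0 < α) (hN : α ≤ N) (hy : |y| ≤ N)
    (hz : |z| ≤ N) :
    |p| + |q + r * y + s * z| ≤ ((|p| + |q|) / α + |r| + |s|) * N := by
  have hpq : |p| + |q| ≤ (|p| + |q|) / α * N := by
    rw [div_mul_eq_mul_div, le_div_iff₀ hα]
    exact mul_le_mul_of_nonneg_left hN (by positivity)
  calc |p| + |q + r * y + s * z| ≤ (|p| + |q|) + |r| * |y| + |s| * |z| := by
        have := abs_add_three q (r * y) (s * z)
        rw [abs_mul, abs_mul] at this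
        linarith
    _ ≤ (|p| + |q|) / α * N + |r| * N + |s| * N := by gcongr
    _ = ((|p| + |q|) / α + |r| + |s|) * N := by ring

theorem stmt12_general (lam₁ lam₂ mu₁ mu₂ a b c d : ℝ)
    (α : ℝ) (hα : 0 < α) (β : ℝ) (hβ : β ∈ Set.Ioc (0 : ℝ) 1) (γ : ℝ) (hγ : 0 < γ) :
    ∃ C > 0, ∀ x ∈ Dfrak α, ∀ K : ℝ, 2 / α ≤ K →
      nrm2 (bKbd lam₁ lam₂ mu₁ mu₂ a b c d β γ K x
          - bLVbd lam₁ lam₂ mu₁ mu₂ a b c d x) ≤ C / K * nrm2 x := by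
  obtain ⟨hβ0, hβ1⟩ := hβ
  set C₁ := (|lam₁| + |mu₁|) / α + |a| + |c|
  set C₂ := (|lam₂| + |mu₂|) / α + |b| + |d|
  refine ⟨2 * (C₁ + C₂) + 1, by positivity, ?_⟩
  rintro x ⟨hx₁, hx₂, -, -⟩ K hK
  have hK₀ : 0 < K := (div_pos two_pos hα).trans_le hK
  have hKy {y : ℝ} (hy : α < y) : 2 / y ≤ K :=
    (div_le_div_of_nonneg_left zero_le_two hα hy.le).trans hK
  have hN : α ≤ nrm2 x := hx₁.le.trans ((le_abs_self _).trans (abs_fst_le_nrm2 x))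
  have h₁ := abs_birthDeathDrift_sub_le lam₁ (mu₁ + a * x.1 + c * x.2) hβ0 hβ1
    (hα.trans hx₁) (hKy hx₁)
  have h₂ := abs_birthDeathDrift_sub_le lam₂ (mu₂ + b * x.2 + d * x.1) hβ0 hβ1
    (hα.trans hx₂) (hKy hx₂)
  have hM₁ : |lam₁| + |mu₁ + a * x.1 + c * x.2| ≤ C₁ * nrm2 x :=
    abs_add_abs_affine_le hα hN (abs_fst_le_nrm2 x) (abs_snd_le_nrm2 x)
  have hM₂ : |lam₂| + |mu₂ + b * x.2 + d * x.1| ≤ C₂ * nrm2 x :=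
    abs_add_abs_affine_le hα hN (abs_snd_le_nrm2 x) (abs_fst_le_nrm2 x)
  calc nrm2 (bKbd lam₁ lam₂ mu₁ mu₂ a b c d β γ K x - bLVbd lam₁ lam₂ mu₁ mu₂ a b c d x)
      ≤ 2 * (|lam₁| + |mu₁ + a * x.1 + c * x.2|) / K
        + 2 * (|lam₂| + |mu₂ + b * x.2 + d * x.1|) / K := by
        refine (nrm2_le_abs_add_abs _).trans (add_le_add ?_ ?_)
        · rwa [Prod.fst_sub, bKbd_fst, bLVbd_fst]
        · rwa [Prod.snd_sub, bKbd_snd _ _ _ _ _ _ _ _ _ _ hγ.ne', bLVbd_snd]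
    _ ≤ 2 * (C₁ * nrm2 x) / K + 2 * (C₂ * nrm2 x) / K := by gcongr
    _ ≤ (2 * (C₁ + C₂) + 1) / K * nrm2 x := by
        rw [← add_div, div_mul_eq_mul_div]
        gcongr
        nlinarith [hα.trans_le hN]

/-- `‖b^K_{β,γ}(x) − b(x)‖₂ ≤ (C/K)‖x‖₂` uniformly on `𝔇_α` for `K ≥ 2/α`. -/
theorem stmt12 (lam₁ lam₂ mu₁ mu₂ a b c d : ℝ)
    (hlam₁ : 0 ≤ lam₁) (hlam₂ : 0 ≤ lam₂) (hmu₁ : 0 ≤ mu₁) (hmu₂ : 0 ≤ mu₂)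
    (ha : 0 ≤ a) (hb : 0 ≤ b) (hc : 0 ≤ c) (hd : 0 ≤ d)
    (α : ℝ) (hα : 0 < α) (β : ℝ) (hβ : β ∈ Set.Ioc (0 : ℝ) 1) (γ : ℝ) (hγ : 0 < γ) :
    ∃ C > 0, ∀ x ∈ Dfrak α, ∀ K : ℝ, 2 / α ≤ K →
      nrm2 (bKbd lam₁ lam₂ mu₁ mu₂ a b c d β γ K x
          - bLVbd lam₁ lam₂ mu₁ mu₂ a b c d x) ≤ C / K * nrm2 x :=
  stmt12_general lam₁ lam₂ mu₁ mu₂ a b c d α hα β hβ γ hγ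
end

section
/- Let α > 0, β ∈ (0,1] and γ > 0. There exists C > 0 such that for every y ∈ F_{β,γ}(𝔇_α) and every K ≥ 2/α: ‖ ψ^K_{β,γ}(y) − ψ_{β,γ}(y) ‖₂ ≤ C (1 + ‖y‖₂)/K, where ψ^K_{β,γ}(y) = h^K_{β,γ}(F_{β,γ}^{−1}(y)) with F_{β,γ}^{−1}(y) = (y₁^{1/β}, (y₂/γ)^{1/β}). -/
open Real Set

/-- The push-forward field `ψ^K_{β,γ} = h^K_{β,γ} ∘ F_{β,γ}⁻¹`,
with `F_{β,γ}⁻¹(y) = (y₁^{1/β}, (y₂/γ)^{1/β})`. -/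
noncomputable def psiKbd (lam₁ lam₂ mu₁ mu₂ a b c d β γ K : ℝ) (y : ℝ × ℝ) : ℝ × ℝ :=
  hKbd lam₁ lam₂ mu₁ mu₂ a b c d β γ K (y.1 ^ (1 / β), (y.2 / γ) ^ (1 / β))

/-- The limiting push-forward vector field `ψ_{β,γ}` (with `τᵢ = λᵢ − μᵢ`). -/
noncomputable def psiLVbd (lam₁ lam₂ mu₁ mu₂ a b c d β γ : ℝ) (y : ℝ × ℝ) : ℝ × ℝ :=
  (β * y.1 * ((lam₁ - mu₁) - a * y.1 ^ (1 / β) - c * γ ^ (-(1 / β)) * y.2 ^ (1 / β)),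
   β * y.2 * ((lam₂ - mu₂) - b * γ ^ (-(1 / β)) * y.2 ^ (1 / β) - d * y.1 ^ (1 / β)))

/-- The transformation `F_{β,γ}(x₁,x₂) = (x₁^β, γ x₂^β)`. -/
noncomputable def FLV (β γ : ℝ) (x : ℝ × ℝ) : ℝ × ℝ := (x.1 ^ β, γ * x.2 ^ β)

/-!
Put `x = F⁻¹(y)`. Up to the factor `γ`, each coordinate of `ψ^K(y) − ψ(y)` is
`λ K x ((x + 1/K)^β − x^β) + δ K x ((x − 1/K)^β − x^β) − β x^β (λ − δ)`, where `δ` is the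
total death rate of that coordinate. This is exactly what remains after removing the first-order
Taylor terms of `t ↦ t^β` at `x`. Since `1/K ≤ α/2 < x/2`, the second-order Taylor bound
`|(x + h)^β − x^β − β x^{β−1} h| ≤ x^{β−2} h²` makes it at most `x^{β−1} (λ + δ) / K`. On `𝔇_α`
we have `x^{β−1} ≤ α^{β−1}`, and the cone condition bounds the cross-competition term by the
diagonal one, so `x^{β−1} (λ + δ)` is affine in `x^β`, i.e. in the coordinate of `y`.
-/

lemma abs_rpow_sub_rpow_le {p m s t : ℝ} (hp : p ≤ 1) (hm : 0 < m) (hs : m ≤ s) (ht : m ≤ t) :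
    |s ^ p - t ^ p| ≤ |p| * m ^ (p - 1) * |s - t| := by
  have hderiv : ∀ u ∈ Ici m, HasDerivWithinAt (· ^ p) (p * u ^ (p - 1)) (Ici m) u :=
    fun u hu => (hasDerivAt_rpow_const (Or.inl (hm.trans_le hu).ne')).hasDerivWithinAt
  have hbound : ∀ u ∈ Ici m, ‖p * u ^ (p - 1)‖ ≤ |p| * m ^ (p - 1) := fun u hu => by
    rw [norm_mul, norm_eq_abs, norm_of_nonneg (rpow_nonneg (hm.trans_le hu).le _)]
    exact mul_le_mul_of_nonneg_left (rpow_le_rpow_of_nonpos hm hu (by linarith)) (abs_nonneg p)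
  simpa only [norm_eq_abs] using
    (convex_Ici m).norm_image_sub_le_of_norm_hasDerivWithin_le hderiv hbound ht hs

lemma abs_rpow_add_sub_sub_le {p x h : ℝ} (hp : p ≤ 2) (hx : 0 < x) (hh : |h| ≤ x / 2) :
    |(x + h) ^ p - x ^ p - p * x ^ (p - 1) * h| ≤ |p * (p - 1)| * (x / 2) ^ (p - 2) * h ^ 2 := by
  have hmem : ∀ t ∈ uIcc 0 h, |t| ≤ |h| ∧ x / 2 ≤ x + t := fun t ht => by
    have hth := abs_sub_left_of_mem_uIcc ht
    simp only [sub_zero] at hth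
    exact ⟨hth, by linarith [neg_abs_le t]⟩
  have hderiv : ∀ t ∈ uIcc 0 h, HasDerivWithinAt (fun t => (x + t) ^ p - p * x ^ (p - 1) * t)
      (p * (x + t) ^ (p - 1) - p * x ^ (p - 1)) (uIcc 0 h) t := fun t ht => by
    have hxt : x + t ≠ 0 := by linarith [(hmem t ht).2]
    have hpow : HasDerivAt (fun t => (x + t) ^ p) (1 * p * (x + t) ^ (p - 1)) t :=
      ((hasDerivAt_id' t).const_add x).rpow_const (Or.inl hxt)
    exact ((hpow.fun_sub ((hasDerivAt_id' t).const_mul (p * x ^ (p - 1)))).congr_deriv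
      (by ring)).hasDerivWithinAt
  have hbound : ∀ t ∈ uIcc 0 h, ‖p * (x + t) ^ (p - 1) - p * x ^ (p - 1)‖
      ≤ |p * (p - 1)| * (x / 2) ^ (p - 2) * |h| := fun t ht => by
    obtain ⟨hth, hxt⟩ := hmem t ht
    have hlip := abs_rpow_sub_rpow_le (p := p - 1) (by linarith) (by positivity) hxt
      (by linarith : x / 2 ≤ x)
    rw [add_sub_cancel_left, show p - 1 - 1 = p - 2 by ring] at hlip
    rw [norm_eq_abs, ← mul_sub, abs_mul, abs_mul]
    calc |p| * |(x + t) ^ (p - 1) - x ^ (p - 1)|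
        ≤ |p| * (|p - 1| * (x / 2) ^ (p - 2) * |t|) := by gcongr
      _ ≤ |p| * (|p - 1| * (x / 2) ^ (p - 2) * |h|) := by gcongr
      _ = _ := by ring
  have hmvt := (convex_uIcc 0 h).norm_image_sub_le_of_norm_hasDerivWithin_le hderiv hbound
    left_mem_uIcc right_mem_uIcc
  simp only [norm_eq_abs, add_zero, mul_zero, sub_zero] at hmvt
  calc |(x + h) ^ p - x ^ p - p * x ^ (p - 1) * h|
      = |(x + h) ^ p - p * x ^ (p - 1) * h - x ^ p| := by ring_nf
    _ ≤ |p * (p - 1)| * (x / 2) ^ (p - 2) * |h| * |h| := hmvt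
    _ = _ := by rw [mul_assoc, ← sq, sq_abs]

lemma abs_rpow_add_sub_sub_le_of_mem_Ioc {β x h : ℝ} (hβ : β ∈ Ioc 0 1) (hx : 0 < x)
    (hh : |h| ≤ x / 2) :
    |(x + h) ^ β - x ^ β - β * x ^ (β - 1) * h| ≤ x ^ (β - 2) * h ^ 2 := by
  obtain ⟨hβ0, hβ1⟩ := hβ
  have hcoef : |β * (β - 1)| ≤ 1 / 4 := by
    rw [abs_of_nonpos (by nlinarith)]
    nlinarith [sq_nonneg (β - 1 / 2)]
  have hquarter : 1 / 4 ≤ (2 : ℝ) ^ (β - 2) := by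
    calc (1 / 4 : ℝ) = 2 ^ (-2 : ℝ) := by norm_num [rpow_neg]
      _ ≤ 2 ^ (β - 2) := rpow_le_rpow_of_exponent_le one_le_two (by linarith)
  have hhalf : |β * (β - 1)| * (x / 2) ^ (β - 2) ≤ x ^ (β - 2) := by
    rw [div_rpow hx.le zero_le_two]
    calc |β * (β - 1)| * (x ^ (β - 2) / 2 ^ (β - 2))
        ≤ 1 / 4 * (x ^ (β - 2) / (1 / 4)) := by gcongr
      _ = x ^ (β - 2) := by ring
  calc _ ≤ |β * (β - 1)| * (x / 2) ^ (β - 2) * h ^ 2 :=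
        abs_rpow_add_sub_sub_le (by linarith) hx hh
    _ ≤ x ^ (β - 2) * h ^ 2 := by gcongr

noncomputable def driftError (lam δ β K x : ℝ) : ℝ :=
  lam * K * x * ((x + 1 / K) ^ β - x ^ β) + K * x * δ * ((x - 1 / K) ^ β - x ^ β)
    - β * x ^ β * (lam - δ)

lemma abs_driftError_le {lam δ β K x : ℝ} (hlam : 0 ≤ lam) (hδ : 0 ≤ δ) (hβ : β ∈ Ioc 0 1)
    (hx : 0 < x) (hKx : 2 ≤ K * x) :
    |driftError lam δ β K x| ≤ x ^ (β - 1) * (lam + δ) / K := by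
  have hK : 0 < K := pos_of_mul_pos_left (by linarith) hx.le
  have hh : |1 / K| ≤ x / 2 := by
    rw [abs_of_pos (by positivity), div_le_div_iff₀ hK two_pos]
    linarith
  have hplus := abs_rpow_add_sub_sub_le_of_mem_Ioc hβ hx hh
  have hminus := abs_rpow_add_sub_sub_le_of_mem_Ioc hβ hx (h := -(1 / K)) (by rwa [abs_neg])
  have hpow : x ^ β = x * x ^ (β - 1) := by rw [rpow_sub_one hx.ne']; field_simp
  have hpow' : x ^ (β - 1) = x * x ^ (β - 2) := by
    rw [show β - 2 = β - 1 - 1 by ring, rpow_sub_one hx.ne' (β - 1)]; field_simp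
  have hsplit : driftError lam δ β K x
      = lam * K * x * ((x + 1 / K) ^ β - x ^ β - β * x ^ (β - 1) * (1 / K))
        + K * x * δ * ((x + -(1 / K)) ^ β - x ^ β - β * x ^ (β - 1) * -(1 / K)) := by
    rw [driftError, ← sub_eq_add_neg, hpow]
    field_simp
    ring
  calc |driftError lam δ β K x|
      ≤ lam * K * x * (x ^ (β - 2) * (1 / K) ^ 2) + K * x * δ * (x ^ (β - 2) * (-(1 / K)) ^ 2) := by
        rw [hsplit]
        refine (abs_add_le _ _).trans ?_
        rw [abs_mul, abs_mul (K * x * δ), abs_of_nonneg (by positivity),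
          abs_of_nonneg (by positivity : 0 ≤ K * x * δ)]
        gcongr
    _ = x ^ (β - 1) * (lam + δ) / K := by
        rw [neg_sq, hpow']
        field_simp

lemma rpow_sub_one_mul_le_of_cone {r a c α β x x' : ℝ} (hr : 0 ≤ r) (hc : 0 ≤ c)
    (hβ : β ≤ 1) (hα : 0 < α) (hx : α ≤ x) (hcone : α * x' ≤ x) :
    x ^ (β - 1) * (r + a * x + c * x') ≤ α ^ (β - 1) * r + (a + c / α) * x ^ β := by
  have hx0 : 0 < x := hα.trans_le hx
  have hpow : x ^ (β - 1) * x = x ^ β := by rw [rpow_sub_one hx0.ne']; field_simp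
  have hr' : x ^ (β - 1) * r ≤ α ^ (β - 1) * r :=
    mul_le_mul_of_nonneg_right (rpow_le_rpow_of_nonpos hα hx (by linarith)) hr
  have hc' : c * x' ≤ c / α * x := by
    rw [div_mul_eq_mul_div, le_div_iff₀ hα]
    nlinarith
  have hc'' : x ^ (β - 1) * (c * x') ≤ c / α * x ^ β := by
    rw [← hpow]
    nlinarith [rpow_nonneg hx0.le (β - 1)]
  calc x ^ (β - 1) * (r + a * x + c * x')
      = x ^ (β - 1) * r + a * (x ^ (β - 1) * x) + x ^ (β - 1) * (c * x') := by ring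
    _ ≤ α ^ (β - 1) * r + a * x ^ β + c / α * x ^ β := by rw [hpow]; linarith
    _ = _ := by ring

lemma abs_driftError_competition_le {lam mu a c α β K x x' : ℝ} (hlam : 0 ≤ lam) (hmu : 0 ≤ mu)
    (ha : 0 ≤ a) (hc : 0 ≤ c) (hα : 0 < α) (hβ : β ∈ Ioc 0 1) (hx : α < x) (hx' : 0 < x')
    (hcone : α * x' ≤ x) (hK : 2 / α ≤ K) :
    |driftError lam (mu + a * x + c * x') β K x|
      ≤ (α ^ (β - 1) * (lam + mu) + (a + c / α) * x ^ β) / K := by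
  have hx0 : 0 < x := hα.trans hx
  have hK0 : 0 < K := (by positivity : 0 < 2 / α).trans_le hK
  have hKx : 2 ≤ K * x := by
    rw [div_le_iff₀ hα] at hK
    nlinarith
  calc |driftError lam (mu + a * x + c * x') β K x|
      ≤ x ^ (β - 1) * (lam + (mu + a * x + c * x')) / K :=
        abs_driftError_le hlam (by positivity) hβ hx0 hKx
    _ ≤ _ := by
        rw [← add_assoc, ← add_assoc]
        gcongr
        exact rpow_sub_one_mul_le_of_cone (by positivity) hc hβ.2 hα hx.le hcone

section

variable {lam₁ lam₂ mu₁ mu₂ a b c d β γ : ℝ}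

lemma psiKbd_FLV_sub_psiLVbd (K : ℝ) (hβ : β ≠ 0) (hγ : 0 < γ) {x : ℝ × ℝ} (hx₁ : 0 ≤ x.1)
    (hx₂ : 0 ≤ x.2) :
    psiKbd lam₁ lam₂ mu₁ mu₂ a b c d β γ K (FLV β γ x)
        - psiLVbd lam₁ lam₂ mu₁ mu₂ a b c d β γ (FLV β γ x)
      = (driftError lam₁ (mu₁ + a * x.1 + c * x.2) β K x.1,
          γ * driftError lam₂ (mu₂ + b * x.2 + d * x.1) β K x.2) := by
  have hinv₁ : (x.1 ^ β) ^ (1 / β) = x.1 := by rw [one_div, rpow_rpow_inv hx₁ hβ]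
  have hinv₂ : (γ * x.2 ^ β / γ) ^ (1 / β) = x.2 := by
    rw [mul_div_cancel_left₀ _ hγ.ne', one_div, rpow_rpow_inv hx₂ hβ]
  have hscale : γ ^ (-(1 / β)) * (γ * x.2 ^ β) ^ (1 / β) = x.2 := by
    rw [mul_rpow hγ.le (rpow_nonneg hx₂ _), one_div, rpow_rpow_inv hx₂ hβ, ← mul_assoc,
      rpow_neg hγ.le, inv_mul_cancel₀ (rpow_pos_of_pos hγ _).ne', one_mul]
  simp only [psiKbd, hKbd, psiLVbd, FLV, driftError, Prod.mk_sub_mk, hinv₁, hinv₂, mul_assoc c,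
    mul_assoc b, hscale]
  congr 1 <;> ring

lemma nrm2_psiKbd_sub_psiLVbd_le (hlam₁ : 0 ≤ lam₁) (hlam₂ : 0 ≤ lam₂) (hmu₁ : 0 ≤ mu₁)
    (hmu₂ : 0 ≤ mu₂) (ha : 0 ≤ a) (hb : 0 ≤ b) (hc : 0 ≤ c) (hd : 0 ≤ d) {α : ℝ} (hα : 0 < α)
    (hβ : β ∈ Ioc 0 1) (hγ : 0 < γ) {x : ℝ × ℝ} (hx : x ∈ Dfrak α) {K : ℝ} (hK : 2 / α ≤ K) :
    nrm2 (psiKbd lam₁ lam₂ mu₁ mu₂ a b c d β γ K (FLV β γ x)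
        - psiLVbd lam₁ lam₂ mu₁ mu₂ a b c d β γ (FLV β γ x))
      ≤ (α ^ (β - 1) * (lam₁ + mu₁ + γ * (lam₂ + mu₂))
          + (a + c / α + (b + d / α)) * nrm2 (FLV β γ x)) / K := by
  obtain ⟨hx₁, hx₂, hcone₁, hcone₂⟩ := hx
  have hK0 : 0 < K := (by positivity : 0 < 2 / α).trans_le hK
  have hy₁ : x.1 ^ β ≤ nrm2 (FLV β γ x) := (le_abs_self _).trans (abs_fst_le_nrm2 (FLV β γ x))
  have hy₂ : γ * x.2 ^ β ≤ nrm2 (FLV β γ x) := (le_abs_self _).trans (abs_snd_le_nrm2 (FLV β γ x))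
  have hD₁ := abs_driftError_competition_le hlam₁ hmu₁ ha hc hα hβ hx₁ (hα.trans hx₂) hcone₁ hK
  have hD₂ := abs_driftError_competition_le hlam₂ hmu₂ hb hd hα hβ hx₂ (hα.trans hx₁) hcone₂ hK
  rw [psiKbd_FLV_sub_psiLVbd K hβ.1.ne' hγ (hα.trans hx₁).le (hα.trans hx₂).le]
  refine (nrm2_le_abs_add_abs _).trans ?_
  calc |driftError lam₁ (mu₁ + a * x.1 + c * x.2) β K x.1|
        + |γ * driftError lam₂ (mu₂ + b * x.2 + d * x.1) β K x.2|
      ≤ (α ^ (β - 1) * (lam₁ + mu₁) + (a + c / α) * x.1 ^ β) / K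
        + γ * ((α ^ (β - 1) * (lam₂ + mu₂) + (b + d / α) * x.2 ^ β) / K) := by
        rw [abs_mul, abs_of_pos hγ]
        gcongr
    _ = (α ^ (β - 1) * (lam₁ + mu₁ + γ * (lam₂ + mu₂))
          + ((a + c / α) * x.1 ^ β + (b + d / α) * (γ * x.2 ^ β))) / K := by ring
    _ ≤ _ := by
        rw [add_mul (a + c / α)]
        gcongr

end

/-- `‖ψ^K_{β,γ}(y) − ψ_{β,γ}(y)‖₂ ≤ C(1+‖y‖₂)/K` uniformly on `F_{β,γ}(𝔇_α)`
for `K ≥ 2/α`. -/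
theorem stmt13 (lam₁ lam₂ mu₁ mu₂ a b c d : ℝ)
    (hlam₁ : 0 ≤ lam₁) (hlam₂ : 0 ≤ lam₂) (hmu₁ : 0 ≤ mu₁) (hmu₂ : 0 ≤ mu₂)
    (ha : 0 ≤ a) (hb : 0 ≤ b) (hc : 0 ≤ c) (hd : 0 ≤ d)
    (α : ℝ) (hα : 0 < α) (β : ℝ) (hβ : β ∈ Set.Ioc (0 : ℝ) 1) (γ : ℝ) (hγ : 0 < γ) :
    ∃ C > 0, ∀ y ∈ FLV β γ '' Dfrak α, ∀ K : ℝ, 2 / α ≤ K →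
      nrm2 (psiKbd lam₁ lam₂ mu₁ mu₂ a b c d β γ K y
          - psiLVbd lam₁ lam₂ mu₁ mu₂ a b c d β γ y) ≤ C * (1 + nrm2 y) / K := by
  set A := α ^ (β - 1) * (lam₁ + mu₁ + γ * (lam₂ + mu₂))
  set B := a + c / α + (b + d / α)
  have hA : 0 ≤ A := by positivity
  have hB : 0 ≤ B := by positivity
  refine ⟨A + B + 1, by positivity, ?_⟩
  rintro _ ⟨x, hx, rfl⟩ K hK
  have hK0 : 0 < K := (by positivity : 0 < 2 / α).trans_le hK
  have hN : 0 ≤ nrm2 (FLV β γ x) := sqrt_nonneg _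
  refine (nrm2_psiKbd_sub_psiLVbd_le hlam₁ hlam₂ hmu₁ hmu₂ ha hb hc hd hα hβ hγ hx hK).trans ?_
  gcongr
  nlinarith
end

section
/- Assume a, b, c, d > 0, τ̄ = max(τ₁,τ₂) ≥ 0, and let β ∈ (0,1) with β ≠ 1/2 and q_β = 4ab(1+β)² + 4(β²−1)cd > 0. Then there exist an integer N ≥ 1, reals γ₁, …, γ_N > 0 and open convex cones C₁, …, C_N ⊆ (0,∞)² such that C₁ ∪ … ∪ C_N = (0,∞)² and, for each i = 1,…,N, ψ_{β,γᵢ} is τ̄ non-expansive on F_{β,γᵢ}(Cᵢ), i.e. (ψ_{β,γᵢ}(y) − ψ_{β,γᵢ}(y'))·(y − y') ≤ τ̄ ‖y − y'‖₂² for all y, y' ∈ F_{β,γᵢ}(Cᵢ). -/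
open Real Set

/-- The competitive Lotka–Volterra push-forward vector field
`ψ_{β,γ} = (J_{F_{β,γ}} b) ∘ F_{β,γ}⁻¹` on `(0,∞)²`. -/
noncomputable def psiLV (τ₁ τ₂ a b c d β γ : ℝ) (y : ℝ × ℝ) : ℝ × ℝ :=
  (β * y.1 * (τ₁ - a * y.1 ^ (1 / β) - c * γ ^ (-(1 / β)) * y.2 ^ (1 / β)),
   β * y.2 * (τ₂ - b * γ ^ (-(1 / β)) * y.2 ^ (1 / β) - d * y.1 ^ (1 / β)))

/-- Euclidean scalar product on `ℝ²`. -/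
def dot2 (u v : ℝ × ℝ) : ℝ := u.1 * v.1 + u.2 * v.2

/-!
Along a segment `y' + t h` of a convex set, `t ↦ dot2 (ψ (y' + t h)) h` has derivative
`⟨Dψ h, h⟩`, so `ψ` is `τ̄` non-expansive on a convex set as soon as `⟨Dψ(z) h, h⟩ ≤ τ̄ |h|²`
there. At `z = F_{β,γ}(x)`, and since `β τᵢ ≤ τ̄`, this reduces to the nonnegativity of a
quadratic form in `h` with coefficients homogeneous of degree one in `x`, i.e. to a discriminant
inequality `DiscCondition γ u` in the ratio `u = x₂ / x₁`. Moreover `F_{β,γ}` maps the cone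
`{x₂ / x₁ ∈ I}` onto a cone of the same kind, which is convex when `I` is an interval.

It remains to cover `(0, ∞)` by finitely many intervals, each with a `γ` satisfying
`DiscCondition γ` on it. The choice `γ = 1` works near `0` and, by the symmetry exchanging the two
species, near `∞`. In between, choosing `γ` to balance the two terms of the discriminant at a
centre `u₀` makes the inequality strict at `u₀` exactly when `q_β > 0`, and by scaling it then
holds on `(u₀ / ρ, u₀ ρ)` with `ρ` independent of `u₀`; a geometric progression of centres
covers the compact middle part.
-/

lemma nrm2_sq (h : ℝ × ℝ) : nrm2 h ^ 2 = h.1 ^ 2 + h.2 ^ 2 :=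
  Real.sq_sqrt (by positivity)

theorem dot2_sub_le_of_hasDerivAt {F : ℝ × ℝ → ℝ × ℝ} {U : Set (ℝ × ℝ)} {τ : ℝ}
    (hU : Convex ℝ U)
    (hF : ∀ z ∈ U, ∀ h, ∃ D ≤ τ * nrm2 h ^ 2,
      HasDerivAt (fun s : ℝ => dot2 (F (z + s • h)) h) D 0) :
    ∀ y ∈ U, ∀ y' ∈ U, dot2 (F y - F y') (y - y') ≤ τ * nrm2 (y - y') ^ 2 := by
  intro y hy y' hy'
  set h := y - y'
  set f : ℝ → ℝ := fun t => dot2 (F (y' + t • h)) h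
  have hf : ∀ t ∈ Icc (0 : ℝ) 1, ∃ D ≤ τ * nrm2 h ^ 2, HasDerivAt f D t := by
    intro t ht
    obtain ⟨D, hD, hder⟩ := hF _ (hU.add_smul_sub_mem hy' hy ht) h
    refine ⟨D, hD, ?_⟩
    rw [← sub_self t] at hder
    have hshift : f = fun s => dot2 (F (y' + t • h + (s - t) • h)) h := by
      funext s
      simp only [f, add_assoc, ← add_smul, add_sub_cancel]
    rw [hshift]
    exact hder.comp_sub_const t t
  choose! D hD hder using hf
  have hmono := (convex_Icc (0 : ℝ) 1).image_sub_le_mul_sub_of_deriv_le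
    (fun t ht => (hder t ht).continuousAt.continuousWithinAt)
    (fun t ht => (hder t (interior_subset ht)).differentiableAt.differentiableWithinAt)
    (fun t ht => (hder t (interior_subset ht)).deriv ▸ hD t (interior_subset ht))
    0 (by simp) 1 (by simp) zero_le_one
  have hdot : dot2 (F y - F y') h = f 1 - f 0 := by
    simp only [f, dot2, one_smul, zero_smul, add_zero, h, add_sub_cancel, Prod.fst_sub,
      Prod.snd_sub]
    ring
  rw [hdot]
  simpa using hmono

def ratioCone (I : Set ℝ) : Set (ℝ × ℝ) := {x | 0 < x.1 ∧ 0 < x.2 ∧ x.2 / x.1 ∈ I}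

lemma ratioCone_subset (I : Set ℝ) : ratioCone I ⊆ {x : ℝ × ℝ | 0 < x.1 ∧ 0 < x.2} :=
  fun _ hx => ⟨hx.1, hx.2.1⟩

lemma isOpen_ratioCone {I : Set ℝ} (hI : IsOpen I) : IsOpen (ratioCone I) := by
  have hQ : IsOpen {x : ℝ × ℝ | 0 < x.1 ∧ 0 < x.2} :=
    (isOpen_lt continuous_const continuous_fst).inter (isOpen_lt continuous_const continuous_snd)
  have hcont : ContinuousOn (fun x : ℝ × ℝ => x.2 / x.1) {x | 0 < x.1 ∧ 0 < x.2} :=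
    continuous_snd.continuousOn.div continuous_fst.continuousOn fun x hx => hx.1.ne'
  convert hcont.isOpen_inter_preimage hQ hI using 1
  ext x
  simp [ratioCone, and_assoc]

lemma smul_mem_ratioCone {I : Set ℝ} {x : ℝ × ℝ} (hx : x ∈ ratioCone I) {l : ℝ} (hl : 0 < l) :
    l • x ∈ ratioCone I := by
  obtain ⟨h1, h2, h3⟩ := hx
  refine ⟨mul_pos hl h1, mul_pos hl h2, ?_⟩
  simpa [mul_div_mul_left _ _ hl.ne'] using h3

lemma convex_ratioCone {I : Set ℝ} (hI : I.OrdConnected) : Convex ℝ (ratioCone I) := by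
  intro x hx y hy s t hs ht hst
  obtain ⟨hx1, hx2, hxI⟩ := hx
  obtain ⟨hy1, hy2, hyI⟩ := hy
  have hpos : ∀ {p r : ℝ}, 0 < p → 0 < r → 0 < s * p + t * r := fun hp hr =>
    convex_Ioi (0 : ℝ) hp hr hs ht hst
  have hD := hpos hx1 hy1
  refine ⟨hD, hpos hx2 hy2, ?_⟩
  -- the ratio of a convex combination is a convex combination of the ratios
  have hmem := hI.convex hxI hyI (div_nonneg (mul_nonneg hs hx1.le) hD.le)
    (div_nonneg (mul_nonneg ht hy1.le) hD.le) (by field_simp)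
  convert hmem using 1
  simp only [Prod.fst_add, Prod.snd_add, Prod.smul_fst, Prod.smul_snd, smul_eq_mul]
  field_simp

lemma iUnion_ratioCone {ι : Sort*} {I : ι → Set ℝ} (hI : Ioi 0 ⊆ ⋃ i, I i) :
    ⋃ i, ratioCone (I i) = {x : ℝ × ℝ | 0 < x.1 ∧ 0 < x.2} := by
  refine (iUnion_subset fun i => ratioCone_subset _).antisymm fun x hx => ?_
  obtain ⟨i, hi⟩ := mem_iUnion.1 (hI (div_pos hx.2 hx.1 : x.2 / x.1 ∈ Ioi 0))
  exact mem_iUnion.2 ⟨i, hx.1, hx.2, hi⟩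

lemma image_FLV_ratioCone {β γ : ℝ} (hβ : β ≠ 0) (hγ : 0 < γ) (I : Set ℝ) :
    FLV β γ '' ratioCone I = ratioCone ((fun u => γ * u ^ β) '' (I ∩ Ioi 0)) := by
  ext z
  constructor
  · rintro ⟨x, ⟨hx1, hx2, hxI⟩, rfl⟩
    refine ⟨rpow_pos_of_pos hx1 β, mul_pos hγ (rpow_pos_of_pos hx2 β), x.2 / x.1,
      ⟨hxI, div_pos hx2 hx1⟩, ?_⟩
    simp only [FLV, div_rpow hx2.le hx1.le, mul_div_assoc]
  · rintro ⟨hz1, hz2, u, ⟨huI, hu⟩, hzu⟩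
    have hw : 0 < z.1 ^ β⁻¹ := rpow_pos_of_pos hz1 _
    refine ⟨(z.1 ^ β⁻¹, u * z.1 ^ β⁻¹), ⟨hw, mul_pos hu hw, by simpa [hw.ne'] using huI⟩, ?_⟩
    simp only at hzu
    rw [eq_div_iff hz1.ne'] at hzu
    simp only [FLV, mul_rpow hu.le hw.le, rpow_inv_rpow hz1.le hβ, ← mul_assoc, hzu]

lemma convex_image_FLV_ratioCone {β γ : ℝ} (hβ : β ≠ 0) (hγ : 0 < γ) {I : Set ℝ}
    (hI : I.OrdConnected) : Convex ℝ (FLV β γ '' ratioCone I) := by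
  rw [image_FLV_ratioCone hβ hγ]
  refine convex_ratioCone (IsPreconnected.ordConnected ?_)
  refine (hI.inter ordConnected_Ioi).isPreconnected.image _ ?_
  exact continuousOn_const.mul (continuousOn_id.rpow_const fun u hu => Or.inl hu.2.ne')

lemma rpow_mul_rpow_one_sub {y : ℝ} (hy : 0 < y) (β : ℝ) : y ^ β * y ^ (1 - β) = y := by
  rw [← rpow_add hy, add_sub_cancel, rpow_one]

noncomputable def psiLVQuadForm (a b c d β γ : ℝ) (x h : ℝ × ℝ) : ℝ :=
  ((1 + β) * a * x.1 + β * c * x.2) * h.1 ^ 2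
    + (c / γ * x.1 ^ β * x.2 ^ (1 - β) + d * γ * x.1 ^ (1 - β) * x.2 ^ β) * (h.1 * h.2)
    + ((1 + β) * b * x.2 + β * d * x.1) * h.2 ^ 2

lemma hasDerivAt_dot2_psiLV_FLV (τ₁ τ₂ a b c d : ℝ) {β γ : ℝ} (hβ : 0 < β) (hγ : 0 < γ)
    {x : ℝ × ℝ} (hx1 : 0 < x.1) (hx2 : 0 < x.2) (h : ℝ × ℝ) :
    HasDerivAt (fun s : ℝ => dot2 (psiLV τ₁ τ₂ a b c d β γ (FLV β γ x + s • h)) h)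
      (β * τ₁ * h.1 ^ 2 + β * τ₂ * h.2 ^ 2 - psiLVQuadForm a b c d β γ x h) 0 := by
  set p := 1 / β with hp
  have hz₁ : 0 < x.1 ^ β := rpow_pos_of_pos hx1 β
  have hz₂ : 0 < γ * x.2 ^ β := mul_pos hγ (rpow_pos_of_pos hx2 β)
  have hline : ∀ z v : ℝ, HasDerivAt (fun s : ℝ => z + s * v) v 0 := fun z v => by
    simpa using ((hasDerivAt_id (0 : ℝ)).mul_const v).const_add z
  have hpow : ∀ {z : ℝ}, 0 < z → ∀ v : ℝ,
      HasDerivAt (fun s : ℝ => (z + s * v) ^ p) (v * p * z ^ (p - 1)) 0 := fun hz v => by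
    simpa using (hline _ v).rpow_const (p := p) (Or.inl (by simpa using hz.ne'))
  have hψ₁ := (((hline (x.1 ^ β) h.1).const_mul β).fun_mul
    (((hasDerivAt_const (0 : ℝ) τ₁).fun_sub ((hpow hz₁ h.1).const_mul a)).fun_sub
      ((hpow hz₂ h.2).const_mul (c * γ ^ (-p))))).mul_const h.1
  have hψ₂ := (((hline (γ * x.2 ^ β) h.2).const_mul β).fun_mul
    (((hasDerivAt_const (0 : ℝ) τ₂).fun_sub ((hpow hz₂ h.2).const_mul (b * γ ^ (-p)))).fun_sub
      ((hpow hz₁ h.1).const_mul d))).mul_const h.2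
  refine (hψ₁.fun_add hψ₂).congr_deriv ?_
  clear_value p
  have hβp : β * p = 1 := by rw [hp]; field_simp
  have e1 : (x.1 ^ β) ^ p = x.1 := by rw [hp, one_div, rpow_rpow_inv hx1.le hβ.ne']
  have e2 : (γ * x.2 ^ β) ^ p = γ ^ p * x.2 := by
    rw [mul_rpow hγ.le (rpow_nonneg hx2.le _), hp, one_div, rpow_rpow_inv hx2.le hβ.ne']
  have e3 : ∀ {y : ℝ}, 0 < y → (y ^ β) ^ (p - 1) = y ^ (1 - β) := fun hy => by
    rw [← rpow_mul hy.le, mul_sub, hβp, mul_one]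
  have e4 : (γ * x.2 ^ β) ^ (p - 1) = γ ^ (p - 1) * x.2 ^ (1 - β) := by
    rw [mul_rpow hγ.le (rpow_nonneg hx2.le _), e3 hx2]
  have g1 : γ ^ (-p) * γ ^ p = 1 := by rw [← rpow_add hγ, neg_add_cancel, rpow_zero]
  have g2 : γ ^ (-p) * γ ^ (p - 1) = γ⁻¹ := by
    rw [← rpow_add hγ, show -p + (p - 1) = -1 by ring, rpow_neg_one]
  simp only [psiLVQuadForm, zero_mul, add_zero, e1, e2, e3 hx1, e4]
  linear_combination
    -(a * h.1 ^ 2 * x.1 ^ β * x.1 ^ (1 - β)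
      + c * x.1 ^ β * x.2 ^ (1 - β) * h.1 * h.2 * γ ^ (-p) * γ ^ (p - 1)
      + d * γ * x.1 ^ (1 - β) * x.2 ^ β * h.1 * h.2
      + b * h.2 ^ 2 * γ * γ ^ (-p) * γ ^ (p - 1) * x.2 ^ β * x.2 ^ (1 - β)) * hβp
    - a * h.1 ^ 2 * rpow_mul_rpow_one_sub hx1 β - β * c * x.2 * h.1 ^ 2 * g1
    - c * x.1 ^ β * x.2 ^ (1 - β) * h.1 * h.2 * g2 - β * b * x.2 * h.2 ^ 2 * g1
    - b * h.2 ^ 2 * γ * x.2 ^ β * x.2 ^ (1 - β) * g2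
    - b * h.2 ^ 2 * x.2 ^ β * x.2 ^ (1 - β) * mul_inv_cancel₀ hγ.ne'
    - b * h.2 ^ 2 * rpow_mul_rpow_one_sub hx2 β

lemma quadratic_nonneg_of_sq_le {X E W : ℝ} (hX : 0 ≤ X) (hW : 0 ≤ W) (hE : E ^ 2 ≤ 4 * X * W)
    (u v : ℝ) : 0 ≤ X * u ^ 2 + E * (u * v) + W * v ^ 2 := by
  rcases hX.eq_or_lt with rfl | hX
  · obtain rfl : E = 0 := pow_eq_zero_iff two_ne_zero |>.1 (by nlinarith [sq_nonneg E])
    simpa using mul_nonneg hW (sq_nonneg v)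
  · have key : 4 * X * (X * u ^ 2 + E * (u * v) + W * v ^ 2)
        = (2 * X * u + E * v) ^ 2 + (4 * X * W - E ^ 2) * v ^ 2 := by ring
    have : 0 ≤ 4 * X * (X * u ^ 2 + E * (u * v) + W * v ^ 2) := by
      rw [key]; nlinarith [sq_nonneg (2 * X * u + E * v), sq_nonneg v]
    exact (mul_nonneg_iff_of_pos_left (by positivity)).1 this

/-- The coefficients of `psiLVQuadForm a b c d β γ (1, u)` are nonnegative; this says that its
discriminant is nonpositive. -/
def DiscCondition (a b c d β γ u : ℝ) : Prop :=
  (c / γ * u ^ (1 - β) + d * γ * u ^ β) ^ 2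
    ≤ 4 * ((1 + β) * a + β * c * u) * ((1 + β) * b * u + β * d)

lemma psiLVQuadForm_nonneg {a b c d β γ : ℝ} (ha : 0 ≤ a) (hb : 0 ≤ b) (hc : 0 ≤ c) (hd : 0 ≤ d)
    (hβ : 0 ≤ β) {x : ℝ × ℝ} (hx1 : 0 < x.1) (hx2 : 0 < x.2)
    (hdisc : DiscCondition a b c d β γ (x.2 / x.1)) (h : ℝ × ℝ) :
    0 ≤ psiLVQuadForm a b c d β γ x h := by
  set u := x.2 / x.1
  have hu : 0 < u := div_pos hx2 hx1
  have hx : x.2 = u * x.1 := (div_mul_cancel₀ _ hx1.ne').symm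
  have hE : c / γ * x.1 ^ β * x.2 ^ (1 - β) + d * γ * x.1 ^ (1 - β) * x.2 ^ β
      = x.1 * (c / γ * u ^ (1 - β) + d * γ * u ^ β) := by
    rw [hx, mul_rpow hu.le hx1.le, mul_rpow hu.le hx1.le]
    linear_combination (c / γ * u ^ (1 - β) + d * γ * u ^ β) * rpow_mul_rpow_one_sub hx1 β
  have hform : psiLVQuadForm a b c d β γ x h = x.1 * (((1 + β) * a + β * c * u) * h.1 ^ 2
      + (c / γ * u ^ (1 - β) + d * γ * u ^ β) * (h.1 * h.2)
      + ((1 + β) * b * u + β * d) * h.2 ^ 2) := by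
    rw [psiLVQuadForm, hE, hx]
    ring
  rw [hform]
  exact mul_nonneg hx1.le (quadratic_nonneg_of_sq_le (by positivity) (by positivity) hdisc _ _)

theorem psiLV_dot2_sub_le_of_discCondition (τ₁ τ₂ : ℝ) {a b c d β γ : ℝ} (ha : 0 ≤ a)
    (hb : 0 ≤ b) (hc : 0 ≤ c) (hd : 0 ≤ d) (hτ : 0 ≤ max τ₁ τ₂) (hβ0 : 0 < β) (hβ1 : β ≤ 1)
    (hγ : 0 < γ) {I : Set ℝ} (hI : I.OrdConnected)
    (hdisc : ∀ u ∈ I, 0 < u → DiscCondition a b c d β γ u) :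
    ∀ y ∈ FLV β γ '' ratioCone I, ∀ y' ∈ FLV β γ '' ratioCone I,
      dot2 (psiLV τ₁ τ₂ a b c d β γ y - psiLV τ₁ τ₂ a b c d β γ y') (y - y')
        ≤ max τ₁ τ₂ * nrm2 (y - y') ^ 2 := by
  refine dot2_sub_le_of_hasDerivAt (convex_image_FLV_ratioCone hβ0.ne' hγ hI) ?_
  rintro _ ⟨x, ⟨hx1, hx2, hxI⟩, rfl⟩ h
  refine ⟨_, ?_, hasDerivAt_dot2_psiLV_FLV τ₁ τ₂ a b c d hβ0 hγ hx1 hx2 h⟩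
  have hQ := psiLVQuadForm_nonneg ha hb hc hd hβ0.le hx1 hx2 (hdisc _ hxI (div_pos hx2 hx1)) h
  have hβτ : ∀ τ ≤ max τ₁ τ₂, β * τ ≤ max τ₁ τ₂ := fun τ hτ' => by
    rcases le_total 0 τ with h | h <;> nlinarith
  rw [nrm2_sq]
  nlinarith [mul_le_mul_of_nonneg_right (hβτ τ₁ (le_max_left _ _)) (sq_nonneg h.1),
    mul_le_mul_of_nonneg_right (hβτ τ₂ (le_max_right _ _)) (sq_nonneg h.2)]

lemma discCondition_inv_iff {a b c d β γ u : ℝ} (hu : 0 < u) :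
    DiscCondition b a d c β γ⁻¹ u⁻¹ ↔ DiscCondition a b c d β γ u := by
  have i1 : u⁻¹ ^ (1 - β) * u = u ^ β := by
    rw [inv_rpow hu.le, inv_mul_eq_div, div_eq_iff (rpow_pos_of_pos hu _).ne',
      rpow_mul_rpow_one_sub hu]
  have i2 : u⁻¹ ^ β * u = u ^ (1 - β) := by
    rw [inv_rpow hu.le, inv_mul_eq_div, div_eq_iff (rpow_pos_of_pos hu _).ne', mul_comm,
      rpow_mul_rpow_one_sub hu]
  have eL : (d / γ⁻¹ * u⁻¹ ^ (1 - β) + c * γ⁻¹ * u⁻¹ ^ β) ^ 2 * u ^ 2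
      = (c / γ * u ^ (1 - β) + d * γ * u ^ β) ^ 2 := by
    rw [← i1, ← i2, div_inv_eq_mul]; ring
  have eR : 4 * ((1 + β) * b + β * d * u⁻¹) * ((1 + β) * a * u⁻¹ + β * c) * u ^ 2
      = 4 * ((1 + β) * a + β * c * u) * ((1 + β) * b * u + β * d) := by
    field_simp
  rw [DiscCondition, DiscCondition, ← mul_le_mul_iff_of_pos_right (pow_pos hu 2), eL, eR]

lemma exists_discCondition_one_of_lt {a b c d β : ℝ} (ha : 0 < a) (hd : 0 < d) (hβ0 : 0 < β)
    (hβ1 : β < 1) : ∃ ε > 0, ∀ u, 0 < u → u < ε → DiscCondition a b c d β 1 u := by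
  have hf : ContinuousAt (fun u : ℝ => (c / 1 * u ^ (1 - β) + d * 1 * u ^ β) ^ 2) 0 :=
    ((continuousAt_const.mul (continuousAt_id.rpow_const (Or.inr (by linarith)))).add
      (continuousAt_const.mul (continuousAt_id.rpow_const (Or.inr hβ0.le)))).pow 2
  have hg : ContinuousAt
      (fun u : ℝ => 4 * ((1 + β) * a + β * c * u) * ((1 + β) * b * u + β * d)) 0 := by
    fun_prop
  have h0 : (c / 1 * (0 : ℝ) ^ (1 - β) + d * 1 * (0 : ℝ) ^ β) ^ 2
      < 4 * ((1 + β) * a + β * c * 0) * ((1 + β) * b * 0 + β * d) := by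
    rw [zero_rpow (by linarith), zero_rpow hβ0.ne']
    norm_num
    positivity
  obtain ⟨ε, hε, hlt⟩ := Metric.eventually_nhds_iff.1 (hf.eventually_lt hg h0)
  refine ⟨ε, hε, fun u hu huε => (hlt ?_).le⟩
  rwa [Real.dist_0_eq_abs, abs_of_pos hu]

lemma exists_discCondition_one_of_gt {a b c d β : ℝ} (hb : 0 < b) (hc : 0 < c) (hβ0 : 0 < β)
    (hβ1 : β < 1) : ∃ M > 0, ∀ u, M < u → DiscCondition a b c d β 1 u := by
  obtain ⟨ε, hε, hlow⟩ := exists_discCondition_one_of_lt (a := b) (b := a) (c := d) hb hc hβ0 hβ1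
  refine ⟨ε⁻¹, inv_pos.2 hε, fun u hu => ?_⟩
  have hu0 : 0 < u := (inv_pos.2 hε).trans hu
  rw [← discCondition_inv_iff hu0, inv_one]
  exact hlow _ (inv_pos.2 hu0) (inv_lt_of_inv_lt₀ hε hu)

lemma mul_le_discCondition_rhs {a b c d β u : ℝ} (ha : 0 ≤ a) (hb : 0 ≤ b) (hc : 0 ≤ c)
    (hd : 0 ≤ d) (hβ : 0 ≤ β) :
    4 * u * ((1 + β) ^ 2 * a * b + β ^ 2 * c * d)
      ≤ 4 * ((1 + β) * a + β * c * u) * ((1 + β) * b * u + β * d) := by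
  have hgap : 0 ≤ 4 * β * (1 + β) * (a * d + b * c * u ^ 2) := by positivity
  linarith [show 4 * ((1 + β) * a + β * c * u) * ((1 + β) * b * u + β * d)
    - 4 * u * ((1 + β) ^ 2 * a * b + β ^ 2 * c * d)
    = 4 * β * (1 + β) * (a * d + b * c * u ^ 2) by ring]

lemma exists_discCondition_mul {a b c d β u₀ : ℝ} (ha : 0 ≤ a) (hb : 0 ≤ b) (hc : 0 < c)
    (hd : 0 < d) (hβ : 0 ≤ β) (hu₀ : 0 < u₀) :
    ∃ γ > 0, ∀ v > 0,
      c * d * (v ^ (1 - β) + v ^ β) ^ 2 ≤ 4 * v * ((1 + β) ^ 2 * a * b + β ^ 2 * c * d) →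
      DiscCondition a b c d β γ (u₀ * v) := by
  have hu₀β := rpow_pos_of_pos hu₀ β
  have hpos : 0 < c * u₀ ^ (1 - β) / (d * u₀ ^ β) := by
    have := rpow_pos_of_pos hu₀ (1 - β)
    positivity
  set γ := √(c * u₀ ^ (1 - β) / (d * u₀ ^ β))
  have hγ : 0 < γ := sqrt_pos.2 hpos
  -- `γ` balances the two terms of the left-hand side at `v = 1`
  have hbal : c / γ * u₀ ^ (1 - β) = d * γ * u₀ ^ β := by
    have hsq : γ ^ 2 = c * u₀ ^ (1 - β) / (d * u₀ ^ β) := sq_sqrt hpos.le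
    field_simp
    rw [hsq]
    field_simp
  have hprod : c / γ * u₀ ^ (1 - β) * (d * γ * u₀ ^ β) = c * d * u₀ := by
    calc _ = c * d * (u₀ ^ β * u₀ ^ (1 - β)) := by field_simp
      _ = c * d * u₀ := by rw [rpow_mul_rpow_one_sub hu₀]
  refine ⟨γ, hγ, fun v hv hlt => ?_⟩
  unfold DiscCondition
  rw [mul_rpow hu₀.le hv.le, mul_rpow hu₀.le hv.le]
  calc (c / γ * (u₀ ^ (1 - β) * v ^ (1 - β)) + d * γ * (u₀ ^ β * v ^ β)) ^ 2
      = u₀ * (c * d * (v ^ (1 - β) + v ^ β) ^ 2) := by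
        linear_combination (c / γ * u₀ ^ (1 - β) * (v ^ (1 - β)) ^ 2
          - d * γ * u₀ ^ β * (v ^ β) ^ 2) * hbal + (v ^ (1 - β) + v ^ β) ^ 2 * hprod
    _ ≤ u₀ * (4 * v * ((1 + β) ^ 2 * a * b + β ^ 2 * c * d)) :=
        mul_le_mul_of_nonneg_left hlt hu₀.le
    _ = 4 * (u₀ * v) * ((1 + β) ^ 2 * a * b + β ^ 2 * c * d) := by ring
    _ ≤ _ := mul_le_discCondition_rhs ha hb hc.le hd.le hβ

lemma exists_discCondition_of_mem_Ioo {a b c d β : ℝ} (ha : 0 ≤ a) (hb : 0 ≤ b) (hc : 0 < c)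
    (hd : 0 < d) (hβ : 0 ≤ β) (hq : 0 < 4 * a * b * (1 + β) ^ 2 + 4 * (β ^ 2 - 1) * c * d) :
    ∃ ρ > 1, ∀ u₀ > 0, ∃ γ > 0, ∀ u, u₀ * ρ⁻¹ < u → u < u₀ * ρ → DiscCondition a b c d β γ u := by
  set K := (1 + β) ^ 2 * a * b + β ^ 2 * c * d
  have hcont : ContinuousAt (fun v : ℝ => c * d * (v ^ (1 - β) + v ^ β) ^ 2) 1 :=
    continuousAt_const.mul (((continuousAt_id.rpow_const (Or.inl one_ne_zero)).add
      (continuousAt_id.rpow_const (Or.inl one_ne_zero))).pow 2)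
  have h1 : c * d * ((1 : ℝ) ^ (1 - β) + (1 : ℝ) ^ β) ^ 2 < 4 * 1 * K := by
    -- `hq` says exactly that `c * d < K`
    simp only [one_rpow, K]
    linarith
  obtain ⟨δ, hδ, hnear⟩ := Metric.eventually_nhds_iff.1
    (hcont.eventually_lt (show ContinuousAt (fun v : ℝ => 4 * v * K) 1 by fun_prop) h1)
  refine ⟨1 + δ, by linarith, fun u₀ hu₀ => ?_⟩
  obtain ⟨γ, hγ, hdisc⟩ := exists_discCondition_mul ha hb hc hd hβ hu₀
  refine ⟨γ, hγ, fun u hl hr => ?_⟩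
  have hl' : (1 + δ)⁻¹ < u / u₀ := by rw [lt_div_iff₀ hu₀]; linarith
  have hr' : u / u₀ < 1 + δ := by rw [div_lt_iff₀ hu₀]; linarith
  have hδ' : 1 - δ < (1 + δ)⁻¹ := by
    rw [← one_div, lt_div_iff₀ (by linarith)]
    nlinarith
  have hdist : dist (u / u₀) 1 < δ := by
    rw [Real.dist_eq, abs_lt]
    constructor <;> linarith
  have := hdisc _ ((inv_pos.2 (by linarith)).trans hl') (hnear hdist).le
  rwa [mul_div_cancel₀ _ hu₀.ne'] at this

lemma exists_lt_mem_Ioo_geom {ε ρ u : ℝ} {K : ℕ} (hε : 0 < ε) (hρ : 1 < ρ) (hu : ε ≤ u)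
    (huK : u < ε * ρ ^ K) : ∃ n < K, u ∈ Ioo (ε * ρ ^ n * ρ⁻¹) (ε * ρ ^ n * ρ) := by
  obtain ⟨n, hn, hn'⟩ := exists_nat_pow_near ((one_le_div hε).2 hu) hρ
  rw [le_div_iff₀ hε, mul_comm] at hn
  rw [div_lt_iff₀ hε, mul_comm, pow_succ, ← mul_assoc] at hn'
  refine ⟨n, (pow_lt_pow_iff_right₀ hρ).1 (lt_of_mul_lt_mul_left (hn.trans_lt huK) hε.le),
    lt_of_lt_of_le ?_ hn, hn'⟩
  exact mul_lt_of_lt_one_right (by positivity) (inv_lt_one_of_one_lt₀ hρ)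

theorem exists_discCondition_cover {a b c d β : ℝ} (ha : 0 < a) (hb : 0 < b) (hc : 0 < c)
    (hd : 0 < d) (hβ0 : 0 < β) (hβ1 : β < 1)
    (hq : 0 < 4 * a * b * (1 + β) ^ 2 + 4 * (β ^ 2 - 1) * c * d) :
    ∃ N, ∃ γ : Fin N → ℝ, ∃ I : Fin N → Set ℝ, (∀ i, 0 < γ i) ∧
      (∀ i, IsOpen (I i) ∧ (I i).OrdConnected) ∧
      (∀ i, ∀ u ∈ I i, 0 < u → DiscCondition a b c d β (γ i) u) ∧ Ioi 0 ⊆ ⋃ i, I i := by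
  obtain ⟨ε, hε, hlow⟩ := exists_discCondition_one_of_lt (b := b) (c := c) ha hd hβ0 hβ1
  obtain ⟨M, hM, hhigh⟩ := exists_discCondition_one_of_gt (a := a) (d := d) hb hc hβ0 hβ1
  obtain ⟨ρ, hρ, hmid⟩ := exists_discCondition_of_mem_Ioo ha.le hb.le hc hd hβ0.le hq
  choose! γmid hγmid hmid using hmid
  obtain ⟨K, hK⟩ := pow_unbounded_of_one_lt (M / ε) hρ
  refine ⟨K + 2, Matrix.vecCons 1 (Matrix.vecCons 1 fun n : Fin K => γmid (ε * ρ ^ (n : ℕ))),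
    Matrix.vecCons (Ioo 0 ε) (Matrix.vecCons (Ioi M)
      fun n : Fin K => Ioo (ε * ρ ^ (n : ℕ) * ρ⁻¹) (ε * ρ ^ (n : ℕ) * ρ)), ?_, ?_, ?_, ?_⟩
  · simp only [Fin.forall_fin_succ, Matrix.cons_val_zero, Matrix.cons_val_succ]
    exact ⟨one_pos, one_pos, fun n => hγmid _ (by positivity)⟩
  · simp only [Fin.forall_fin_succ, Matrix.cons_val_zero, Matrix.cons_val_succ]
    exact ⟨⟨isOpen_Ioo, ordConnected_Ioo⟩, ⟨isOpen_Ioi, ordConnected_Ioi⟩,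
      fun _ => ⟨isOpen_Ioo, ordConnected_Ioo⟩⟩
  · simp only [Fin.forall_fin_succ, Matrix.cons_val_zero, Matrix.cons_val_succ]
    exact ⟨fun u hu _ => hlow u hu.1 hu.2, fun u hu _ => hhigh u hu,
      fun n u hu _ => hmid _ (by positivity) u hu.1 hu.2⟩
  · intro u hu
    simp only [mem_iUnion]
    rcases lt_or_ge u ε with hε' | hε'
    · exact ⟨0, hu, hε'⟩
    rcases lt_or_ge M u with hM' | hM'
    · exact ⟨1, hM'⟩
    rw [div_lt_iff₀ hε, mul_comm] at hK
    obtain ⟨n, hn, hmem⟩ := exists_lt_mem_Ioo_geom hε hρ hε' (hM'.trans_lt hK)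
    exact ⟨(⟨n, hn⟩ : Fin K).succ.succ, by simpa using hmem⟩

theorem stmt14_general (τ₁ τ₂ a b c d : ℝ) (ha : 0 < a) (hb : 0 < b) (hc : 0 < c) (hd : 0 < d)
    (hτ : 0 ≤ max τ₁ τ₂) (β : ℝ) (hβ : β ∈ Set.Ioo (0 : ℝ) 1)
    (hq : 0 < 4 * a * b * (1 + β) ^ 2 + 4 * (β ^ 2 - 1) * c * d) :
    ∃ N : ℕ, 1 ≤ N ∧ ∃ γ : Fin N → ℝ, ∃ C : Fin N → Set (ℝ × ℝ),
      (∀ i, 0 < γ i) ∧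
      (∀ i, IsOpen (C i)) ∧
      (∀ i, Convex ℝ (C i)) ∧
      (∀ i, ∀ x ∈ C i, ∀ l : ℝ, 0 < l → l • x ∈ C i) ∧
      (∀ i, C i ⊆ {x : ℝ × ℝ | 0 < x.1 ∧ 0 < x.2}) ∧
      (⋃ i, C i) = {x : ℝ × ℝ | 0 < x.1 ∧ 0 < x.2} ∧
      (∀ i, ∀ y ∈ FLV β (γ i) '' C i, ∀ y' ∈ FLV β (γ i) '' C i,
        dot2 (psiLV τ₁ τ₂ a b c d β (γ i) y - psiLV τ₁ τ₂ a b c d β (γ i) y')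
            (y - y') ≤ max τ₁ τ₂ * nrm2 (y - y') ^ 2) := by
  obtain ⟨hβ0, hβ1⟩ := hβ
  obtain ⟨N, γ, I, hγ, hI, hdisc, hcover⟩ := exists_discCondition_cover ha hb hc hd hβ0 hβ1 hq
  obtain ⟨i, -⟩ := mem_iUnion.1 (hcover (mem_Ioi.2 one_pos))
  exact ⟨N, i.pos, γ, fun i => ratioCone (I i), hγ, fun i => isOpen_ratioCone (hI i).1,
    fun i => convex_ratioCone (hI i).2, fun _ _ hx _ hl => smul_mem_ratioCone hx hl,
    fun _ => ratioCone_subset _, iUnion_ratioCone hcover,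
    fun i => psiLV_dot2_sub_le_of_discCondition τ₁ τ₂ ha.le hb.le hc.le hd.le hτ hβ0 hβ1.le
      (hγ i) (hI i).2 (hdisc i)⟩

/-- Covering of `(0,∞)²` by finitely many open convex cones `Cᵢ` on which the
transformed fields `ψ_{β,γᵢ}` are `max(τ₁,τ₂)` non-expansive. -/
theorem stmt14 (τ₁ τ₂ a b c d : ℝ) (ha : 0 < a) (hb : 0 < b) (hc : 0 < c) (hd : 0 < d)
    (hτ : 0 ≤ max τ₁ τ₂) (β : ℝ) (hβ : β ∈ Set.Ioo (0 : ℝ) 1) (hβ' : β ≠ 1 / 2)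
    (hq : 0 < 4 * a * b * (1 + β) ^ 2 + 4 * (β ^ 2 - 1) * c * d) :
    ∃ N : ℕ, 1 ≤ N ∧ ∃ γ : Fin N → ℝ, ∃ C : Fin N → Set (ℝ × ℝ),
      (∀ i, 0 < γ i) ∧
      (∀ i, IsOpen (C i)) ∧
      (∀ i, Convex ℝ (C i)) ∧
      (∀ i, ∀ x ∈ C i, ∀ l : ℝ, 0 < l → l • x ∈ C i) ∧
      (∀ i, C i ⊆ {x : ℝ × ℝ | 0 < x.1 ∧ 0 < x.2}) ∧
      (⋃ i, C i) = {x : ℝ × ℝ | 0 < x.1 ∧ 0 < x.2} ∧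
      (∀ i, ∀ y ∈ FLV β (γ i) '' C i, ∀ y' ∈ FLV β (γ i) '' C i,
        dot2 (psiLV τ₁ τ₂ a b c d β (γ i) y - psiLV τ₁ τ₂ a b c d β (γ i) y')
            (y - y') ≤ max τ₁ τ₂ * nrm2 (y - y') ^ 2) :=
  stmt14_general τ₁ τ₂ a b c d ha hb hc hd hτ β hβ hq
end

section
/- Let a ∈ ℝ and let b_F : (a,∞) → ℝ be locally Lipschitz with b_F(x) < 0 for all x > a. For x₀ > a, let φ(x₀,·) be the maximal solution of x' = b_F(x), x(0) = x₀, staying in (a,∞), defined on [0, T(x₀)). Then x₀ ↦ φ(x₀,t) (where defined) and x₀ ↦ T(x₀) are nondecreasing; set T(∞) = lim_{x₀→∞} T(x₀) and φ(∞,t) = lim_{x₀→∞} φ(x₀,t) for t < T(∞). (i) If the integral ∫^∞ dx/|b_F(x)| converges at +∞, then for every t ∈ (0, T(∞)) one has φ(∞,t) < ∞ and φ(∞,t) = inf{ u > a : ∫_u^∞ dx/|b_F(x)| < t } (the flow comes down from infinity instantaneously). (ii) Otherwise T(∞) = ∞ and φ(∞,t) = ∞ for every t ≥ 0, i.e. φ(x₀,t)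 → ∞ as x₀ → ∞ for every fixed t. -/
open Real Set Filter MeasureTheory ENNReal Topology

/-!
Along a solution `γ` started at `x₀` one has `d/dt ∫_{γ t}^{x₀} dx/|b| = 1`, hence
`∫_{γ t}^{x₀} dx/|b| = t`: the position at time `t` is the level whose descent time from `x₀`
is `t`, and the lifetime is at least the descent time from `x₀` to any level above `a`.
Monotonicity in `x₀` follows since `∫_z^w dx/|b|` increases in `w` and decreases in `z`.
If the tail `I u = ∫_u^∞ dx/|b|` is finite, the identity reads `I (γ t) = t + I x₀`, and
as `I x₀ → 0` the positions `φ(x₀,t)` fill up everything below the level where `I` drops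
below `t`. Otherwise `∫_M^{x₀} dx/|b| → ∞` as `x₀ → ∞`, which pushes both the lifetime
and `φ(x₀,t)` beyond any bound.
-/

section PositiveIntegrand

variable {a : ℝ} {f : ℝ → ℝ}

theorem intervalIntegrable_of_continuousOn_Ioi (hf : ContinuousOn f (Ioi a)) {z w : ℝ}
    (hz : a < z) (hw : a < w) : IntervalIntegrable f volume z w :=
  (hf.mono fun _ hx => (lt_min hz hw).trans_le hx.1).intervalIntegrable

theorem strictMonoOn_intervalIntegral_right (hf : ContinuousOn f (Ioi a))
    (hpos : ∀ x ∈ Ioi a, 0 < f x) {z : ℝ} (hz : a < z) :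
    StrictMonoOn (fun w => ∫ x in z..w, f x) (Ioi a) := by
  intro w (hw : a < w) w' (hw' : a < w') hww'
  have hgap : 0 < ∫ x in w..w', f x :=
    intervalIntegral.intervalIntegral_pos_of_pos_on
      (intervalIntegrable_of_continuousOn_Ioi hf hw hw') (fun x hx => hpos x (hw.trans hx.1)) hww'
  have hadd := intervalIntegral.integral_add_adjacent_intervals
    (intervalIntegrable_of_continuousOn_Ioi hf hz hw)
    (intervalIntegrable_of_continuousOn_Ioi hf hw hw')
  show ∫ x in z..w, f x < ∫ x in z..w', f x
  linarith

theorem strictAntiOn_intervalIntegral_left (hf : ContinuousOn f (Ioi a))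
    (hpos : ∀ x ∈ Ioi a, 0 < f x) {w : ℝ} (hw : a < w) :
    StrictAntiOn (fun z => ∫ x in z..w, f x) (Ioi a) := by
  intro z hz z' hz' hzz'
  show ∫ x in z'..w, f x < ∫ x in z..w, f x
  rw [intervalIntegral.integral_symm w z', intervalIntegral.integral_symm w z, neg_lt_neg_iff]
  exact strictMonoOn_intervalIntegral_right hf hpos hw hz hz' hzz'

theorem integrableOn_Ioi_of_continuousOn_Ioi (hf : ContinuousOn f (Ioi a)) {u : ℝ}
    (hint : IntegrableOn f (Ioi u)) {z : ℝ} (hz : a < z) : IntegrableOn f (Ioi z) := by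
  rcases le_total z u with hzu | huz
  · rw [← Ioc_union_Ioi_eq_Ioi hzu]
    exact (hf.mono fun _ hx => hz.trans_le hx.1).integrableOn_Icc.mono_set Ioc_subset_Icc_self
      |>.union hint
  · exact hint.mono_set (Ioi_subset_Ioi huz)

theorem strictAntiOn_integral_Ioi (hf : ContinuousOn f (Ioi a)) (hpos : ∀ x ∈ Ioi a, 0 < f x)
    (hint : ∀ z ∈ Ioi a, IntegrableOn f (Ioi z)) :
    StrictAntiOn (fun z => ∫ x in Ioi z, f x) (Ioi a) := by
  intro z hz w hw hzw
  have hsplit := intervalIntegral.integral_interval_add_Ioi (hint z hz) (hint w hw)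
  have hgap : 0 < ∫ x in z..w, f x :=
    intervalIntegral.intervalIntegral_pos_of_pos_on
      (intervalIntegrable_of_continuousOn_Ioi hf hz hw) (fun x hx => hpos x (hz.trans hx.1)) hzw
  show ∫ x in Ioi w, f x < ∫ x in Ioi z, f x
  linarith

theorem exists_lt_intervalIntegral_of_not_integrableOn_Ioi (hf : ContinuousOn f (Ioi a))
    (hnonneg : ∀ x ∈ Ioi a, 0 ≤ f x) {z : ℝ} (hz : a < z) (hnot : ¬ IntegrableOn f (Ioi z))
    (C : ℝ) : ∃ w, z ≤ w ∧ C < ∫ x in z..w, f x := by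
  by_contra! hbdd
  refine hnot (integrableOn_Ioi_of_intervalIntegral_norm_bounded C z (l := atTop)
    (fun w => ?_) tendsto_id ?_)
  · exact (hf.mono fun _ hx => hz.trans_le hx.1).integrableOn_Icc.mono_set Ioc_subset_Icc_self
  · filter_upwards [eventually_ge_atTop z] with w hzw
    rw [intervalIntegral.integral_congr fun x hx =>
      Real.norm_of_nonneg (hnonneg x (hz.trans_le (uIcc_of_le hzw ▸ hx).1))]
    exact hbdd w hzw

end PositiveIntegrand

section NegativeField

variable {a : ℝ} {b : ℝ → ℝ}

theorem continuousOn_one_div_abs (hb : ContinuousOn b (Ioi a)) (hneg : ∀ x ∈ Ioi a, b x < 0) :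
    ContinuousOn (fun x => 1 / |b x|) (Ioi a) :=
  continuousOn_const.div hb.abs fun x hx => (abs_pos.2 (hneg x hx).ne).ne'

theorem one_div_abs_pos (hneg : ∀ x ∈ Ioi a, b x < 0) : ∀ x ∈ Ioi a, 0 < 1 / |b x| :=
  fun x hx => one_div_pos.2 (abs_pos.2 (hneg x hx).ne)

end NegativeField

structure IsMaximalSolution (a : ℝ) (b : ℝ → ℝ) (x₀ : ℝ) (T : ℝ≥0∞) (γ : ℝ → ℝ) :
    Prop where
  lifetime_pos : 0 < T
  map_zero : γ 0 = x₀
  mem : ∀ t : ℝ, 0 ≤ t → ENNReal.ofReal t < T → γ t ∈ Ioi a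
  hasDerivAt : ∀ t : ℝ, 0 ≤ t → ENNReal.ofReal t < T → HasDerivAt γ (b (γ t)) t
  tendsto_of_ne_top : T ≠ ⊤ → Tendsto γ (𝓝[<] T.toReal) (𝓝 a)

namespace IsMaximalSolution

variable {a x₀ x₁ : ℝ} {b γ γ₁ : ℝ → ℝ} {T T₁ : ℝ≥0∞}

theorem init_mem (hγ : IsMaximalSolution a b x₀ T γ) : x₀ ∈ Ioi a :=
  hγ.map_zero ▸ hγ.mem 0 le_rfl (by simpa using hγ.lifetime_pos)

theorem intervalIntegral_eq (hγ : IsMaximalSolution a b x₀ T γ) (hb : ContinuousOn b (Ioi a))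
    (hneg : ∀ x ∈ Ioi a, b x < 0) {t : ℝ} (ht : 0 ≤ t) (htT : ENNReal.ofReal t < T) :
    ∫ x in γ t..x₀, 1 / |b x| = t := by
  have hf := continuousOn_one_div_abs hb hneg
  have hsT : ∀ s ∈ Icc 0 t, ENNReal.ofReal s < T :=
    fun s hs => (ENNReal.ofReal_le_ofReal hs.2).trans_lt htT
  have hderiv :
      ∀ s ∈ Icc 0 t, HasDerivAt (fun r => (∫ x in γ r..x₀, 1 / |b x|) - r) 0 s := by
    intro s hs
    have hγs := hγ.mem s hs.1 (hsT s hs)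
    have hF : HasDerivAt (fun y => ∫ x in y..x₀, 1 / |b x|) (-(1 / |b (γ s)|)) (γ s) :=
      intervalIntegral.integral_hasDerivAt_left
        (intervalIntegrable_of_continuousOn_Ioi hf hγs hγ.init_mem)
        (hf.stronglyMeasurableAtFilter isOpen_Ioi _ hγs)
        (hf.continuousAt (isOpen_Ioi.mem_nhds hγs))
    have hrate : -(1 / |b (γ s)|) * b (γ s) - 1 = 0 := by
      rw [abs_of_neg (hneg _ hγs), one_div_neg_eq_neg_one_div, neg_neg,
        one_div_mul_cancel (hneg _ hγs).ne, sub_self]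
    have hchain := (hF.comp s (hγ.hasDerivAt s hs.1 (hsT s hs))).sub (hasDerivAt_id s)
    rwa [hrate] at hchain
  have hconst := constant_of_has_deriv_right_zero
    (fun s hs => (hderiv s hs).continuousAt.continuousWithinAt)
    (fun s hs => (hderiv s (Ico_subset_Icc_self hs)).hasDerivWithinAt) t ⟨ht, le_rfl⟩
  simpa [hγ.map_zero, sub_eq_zero] using hconst

theorem ofReal_integral_le_lifetime (hγ : IsMaximalSolution a b x₀ T γ)
    (hb : ContinuousOn b (Ioi a)) (hneg : ∀ x ∈ Ioi a, b x < 0) {z : ℝ} (hz : a < z) :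
    ENNReal.ofReal (∫ x in z..x₀, 1 / |b x|) ≤ T := by
  rcases eq_or_ne T ⊤ with rfl | hT
  · exact le_top
  have hT0 : 0 < T.toReal := ENNReal.toReal_pos hγ.lifetime_pos.ne' hT
  obtain ⟨s, hγs, hs0, hsT⟩ : ∃ s, γ s < z ∧ 0 < s ∧ s < T.toReal :=
    (((hγ.tendsto_of_ne_top hT).eventually (eventually_lt_nhds hz)).and
      (((eventually_gt_nhds hT0).filter_mono nhdsWithin_le_nhds).and
        eventually_mem_nhdsWithin)).exists
  have hsT' : ENNReal.ofReal s < T := (ENNReal.ofReal_lt_iff_lt_toReal hs0.le hT).2 hsT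
  calc ENNReal.ofReal (∫ x in z..x₀, 1 / |b x|)
      ≤ ENNReal.ofReal (∫ x in γ s..x₀, 1 / |b x|) :=
        ENNReal.ofReal_le_ofReal <| (strictAntiOn_intervalIntegral_left
          (continuousOn_one_div_abs hb hneg) (one_div_abs_pos hneg) hγ.init_mem).antitoneOn
          (hγ.mem s hs0.le hsT') hz hγs.le
    _ = ENNReal.ofReal s := by rw [hγ.intervalIntegral_eq hb hneg hs0.le hsT']
    _ ≤ T := hsT'.le

theorem lifetime_le_of_le (hγ : IsMaximalSolution a b x₀ T γ)
    (hγ₁ : IsMaximalSolution a b x₁ T₁ γ₁)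
    (hb : ContinuousOn b (Ioi a)) (hneg : ∀ x ∈ Ioi a, b x < 0) (hx : x₀ ≤ x₁) : T ≤ T₁ := by
  by_contra! hlt
  obtain ⟨r, hr0, hr₁, hrT⟩ := ENNReal.lt_iff_exists_real_btwn.1 hlt
  have hγr := hγ.mem r hr0 hrT
  have : ENNReal.ofReal r ≤ T₁ :=
    calc ENNReal.ofReal r = ENNReal.ofReal (∫ x in γ r..x₀, 1 / |b x|) := by
          rw [hγ.intervalIntegral_eq hb hneg hr0 hrT]
      _ ≤ ENNReal.ofReal (∫ x in γ r..x₁, 1 / |b x|) :=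
          ENNReal.ofReal_le_ofReal <| (strictMonoOn_intervalIntegral_right
            (continuousOn_one_div_abs hb hneg) (one_div_abs_pos hneg) hγr).monotoneOn
            hγ.init_mem hγ₁.init_mem hx
      _ ≤ T₁ := hγ₁.ofReal_integral_le_lifetime hb hneg hγr
  exact hr₁.not_ge this

theorem apply_le_of_le (hγ : IsMaximalSolution a b x₀ T γ)
    (hγ₁ : IsMaximalSolution a b x₁ T₁ γ₁)
    (hb : ContinuousOn b (Ioi a)) (hneg : ∀ x ∈ Ioi a, b x < 0) (hx : x₀ ≤ x₁) {t : ℝ}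
    (ht : 0 ≤ t) (htT : ENNReal.ofReal t < T) : γ t ≤ γ₁ t := by
  have htT₁ := htT.trans_le (hγ.lifetime_le_of_le hγ₁ hb hneg hx)
  have hf := continuousOn_one_div_abs hb hneg
  by_contra! hlt
  have : t < t :=
    calc t = ∫ x in γ t..x₀, 1 / |b x| := (hγ.intervalIntegral_eq hb hneg ht htT).symm
      _ ≤ ∫ x in γ t..x₁, 1 / |b x| :=
          (strictMonoOn_intervalIntegral_right hf (one_div_abs_pos hneg)
            (hγ.mem t ht htT)).monotoneOn hγ.init_mem hγ₁.init_mem hx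
      _ < ∫ x in γ₁ t..x₁, 1 / |b x| :=
          strictAntiOn_intervalIntegral_left hf (one_div_abs_pos hneg) hγ₁.init_mem
            (hγ₁.mem t ht htT₁) (hγ.mem t ht htT) hlt
      _ = t := hγ₁.intervalIntegral_eq hb hneg ht htT₁
  exact lt_irrefl t this

theorem integral_Ioi_eq (hγ : IsMaximalSolution a b x₀ T γ) (hb : ContinuousOn b (Ioi a))
    (hneg : ∀ x ∈ Ioi a, b x < 0)
    (hint : ∀ z ∈ Ioi a, IntegrableOn (fun x => 1 / |b x|) (Ioi z)) {t : ℝ} (ht : 0 ≤ t)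
    (htT : ENNReal.ofReal t < T) :
    ∫ x in Ioi (γ t), 1 / |b x| = t + ∫ x in Ioi x₀, 1 / |b x| := by
  rw [← intervalIntegral.integral_interval_add_Ioi (hint _ (hγ.mem t ht htT))
    (hint _ hγ.init_mem), hγ.intervalIntegral_eq hb hneg ht htT]

theorem le_of_integral_Ioi_lt (hγ : IsMaximalSolution a b x₀ T γ) (hb : ContinuousOn b (Ioi a))
    (hneg : ∀ x ∈ Ioi a, b x < 0)
    (hint : ∀ z ∈ Ioi a, IntegrableOn (fun x => 1 / |b x|) (Ioi z)) {t : ℝ} (ht : 0 ≤ t)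
    (htT : ENNReal.ofReal t < T) {u : ℝ} (hu : a < u) (hut : ∫ x in Ioi u, 1 / |b x| < t) :
    γ t ≤ u := by
  by_contra! hlt
  have hanti := strictAntiOn_integral_Ioi (continuousOn_one_div_abs hb hneg)
    (one_div_abs_pos hneg) hint hu (hγ.mem t ht htT) hlt
  have htail : 0 ≤ ∫ x in Ioi x₀, 1 / |b x| :=
    setIntegral_nonneg measurableSet_Ioi fun x hx =>
      (one_div_abs_pos hneg x (show a < x from lt_trans hγ.init_mem hx)).le
  simp only [hγ.integral_Ioi_eq hb hneg hint ht htT] at hanti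
  exact (hanti.trans hut).not_ge (le_add_of_nonneg_right htail)

end IsMaximalSolution

section Family

variable {a : ℝ} {b : ℝ → ℝ} {T : ℝ → ℝ≥0∞} {φ : ℝ → ℝ → ℝ}

theorem exists_lt_flow_of_lt_integral_Ioi (hb : ContinuousOn b (Ioi a))
    (hneg : ∀ x ∈ Ioi a, b x < 0)
    (hsol : ∀ x₀ ∈ Ioi a, IsMaximalSolution a b x₀ (T x₀) (φ x₀))
    (hint : ∀ z ∈ Ioi a, IntegrableOn (fun x => 1 / |b x|) (Ioi z)) {t : ℝ} (ht : 0 ≤ t)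
    {x₀ : ℝ} (hx₀ : x₀ ∈ Ioi a) (hx₀T : ENNReal.ofReal t < T x₀) {c : ℝ} (hc : a < c)
    (htc : t < ∫ x in Ioi c, 1 / |b x|) :
    ∃ x₁ ∈ Ioi a, ENNReal.ofReal t < T x₁ ∧ c < φ x₁ t := by
  obtain ⟨x₁, hx₁small, hx₀x₁⟩ :=
    (((tendsto_integral_Ioi_zero tendsto_id).eventually_lt_const (sub_pos.2 htc)).and
      (eventually_ge_atTop x₀)).exists
  have hx₁ : x₁ ∈ Ioi a := mem_Ioi.2 (hx₀.trans_le hx₀x₁)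
  have hx₁T :=
    hx₀T.trans_le ((hsol x₀ hx₀).lifetime_le_of_le (hsol x₁ hx₁) hb hneg hx₀x₁)
  refine ⟨x₁, hx₁, hx₁T, ?_⟩
  refine (strictAntiOn_integral_Ioi (continuousOn_one_div_abs hb hneg) (one_div_abs_pos hneg)
    hint).lt_iff_gt ((hsol x₁ hx₁).mem t ht hx₁T) hc |>.1 ?_
  rw [(hsol x₁ hx₁).integral_Ioi_eq hb hneg hint ht hx₁T]
  exact lt_sub_iff_add_lt'.1 hx₁small

theorem bddAbove_flow_and_sSup_flow_eq_sInf (hb : ContinuousOn b (Ioi a))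
    (hneg : ∀ x ∈ Ioi a, b x < 0)
    (hsol : ∀ x₀ ∈ Ioi a, IsMaximalSolution a b x₀ (T x₀) (φ x₀))
    (hint : ∃ u ∈ Ioi a, IntegrableOn (fun x => 1 / |b x|) (Ioi u)) {t : ℝ} (ht : 0 < t)
    (htT : ENNReal.ofReal t < ⨆ x₀ ∈ Ioi a, T x₀) :
    BddAbove {y : ℝ | ∃ x₀ ∈ Ioi a, ENNReal.ofReal t < T x₀ ∧ y = φ x₀ t} ∧
      sSup {y : ℝ | ∃ x₀ ∈ Ioi a, ENNReal.ofReal t < T x₀ ∧ y = φ x₀ t} =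
        sInf {u : ℝ | a < u ∧ ∫ x in Ioi u, 1 / |b x| < t} := by
  set S := {u : ℝ | a < u ∧ ∫ x in Ioi u, 1 / |b x| < t}
  obtain ⟨u, -, hu⟩ := hint
  have hint' : ∀ z ∈ Ioi a, IntegrableOn (fun x => 1 / |b x|) (Ioi z) :=
    fun z hz => integrableOn_Ioi_of_continuousOn_Ioi (continuousOn_one_div_abs hb hneg) hu hz
  obtain ⟨x₀, hx₀, hx₀T⟩ : ∃ x₀ ∈ Ioi a, ENNReal.ofReal t < T x₀ := by
    simpa only [lt_iSup_iff, exists_prop] using htT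
  have hS : S.Nonempty := by
    obtain ⟨w, hwt, hw⟩ := (((tendsto_integral_Ioi_zero tendsto_id).eventually_lt_const ht).and
      (eventually_gt_atTop a)).exists
    exact ⟨w, hw, hwt⟩
  have hle :
      ∀ y ∈ {y : ℝ | ∃ x₀ ∈ Ioi a, ENNReal.ofReal t < T x₀ ∧ y = φ x₀ t}, y ≤ sInf S := by
    rintro _ ⟨x₁, hx₁, hx₁T, rfl⟩
    exact le_csInf hS fun v hv =>
      (hsol x₁ hx₁).le_of_integral_Ioi_lt hb hneg hint' ht.le hx₁T hv.1 hv.2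
  refine ⟨⟨sInf S, hle⟩, csSup_eq_of_forall_le_of_forall_lt_exists_gt
    ⟨φ x₀ t, x₀, hx₀, hx₀T, rfl⟩ hle fun w hw => ?_⟩
  rcases lt_or_ge w (φ x₀ t) with hlt | hge
  · exact ⟨φ x₀ t, ⟨x₀, hx₀, hx₀T, rfl⟩, hlt⟩
  have hwa : a < w := ((hsol x₀ hx₀).mem t ht.le hx₀T).trans_le hge
  obtain ⟨w', hww', hw'S⟩ := exists_between hw
  have htw' : t ≤ ∫ x in Ioi w', 1 / |b x| := by
    by_contra! h
    exact (csInf_le (s := S) ⟨a, fun v hv => hv.1.le⟩ ⟨hwa.trans hww', h⟩).not_gt hw'S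
  have htw : t < ∫ x in Ioi w, 1 / |b x| :=
    htw'.trans_lt (strictAntiOn_integral_Ioi (continuousOn_one_div_abs hb hneg)
      (one_div_abs_pos hneg) hint' hwa (hwa.trans hww') hww')
  obtain ⟨x₁, hx₁, hx₁T, hwx₁⟩ :=
    exists_lt_flow_of_lt_integral_Ioi hb hneg hsol hint' ht.le hx₀ hx₀T hwa htw
  exact ⟨φ x₁ t, ⟨x₁, hx₁, hx₁T, rfl⟩, hwx₁⟩

theorem exists_lifetime_gt_and_flow_ge_of_not_integrableOn (hb : ContinuousOn b (Ioi a))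
    (hneg : ∀ x ∈ Ioi a, b x < 0)
    (hsol : ∀ x₀ ∈ Ioi a, IsMaximalSolution a b x₀ (T x₀) (φ x₀))
    (hnot : ¬ ∃ u ∈ Ioi a, IntegrableOn (fun x => 1 / |b x|) (Ioi u)) {t : ℝ} (ht : 0 ≤ t)
    (M : ℝ) : ∃ x₁ ∈ Ioi a, ∀ x₀ : ℝ, x₁ ≤ x₀ → ENNReal.ofReal t < T x₀ ∧ M ≤ φ x₀ t := by
  have hf := continuousOn_one_div_abs hb hneg
  have hm : a < max M (a + 1) := (lt_add_one a).trans_le (le_max_right _ _)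
  obtain ⟨x₁, hmx₁, hlong₁⟩ := exists_lt_intervalIntegral_of_not_integrableOn_Ioi hf
    (fun x hx => (one_div_abs_pos hneg x hx).le) hm (fun h => hnot ⟨_, hm, h⟩) t
  have hx₁ : a < x₁ := hm.trans_le hmx₁
  refine ⟨x₁, hx₁, fun x₀ hx₁x₀ => ?_⟩
  have hx₀ : x₀ ∈ Ioi a := hx₁.trans_le hx₁x₀
  have hlong : t < ∫ x in max M (a + 1)..x₀, 1 / |b x| :=
    hlong₁.trans_le ((strictMonoOn_intervalIntegral_right hf (one_div_abs_pos hneg) hm).monotoneOn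
      hx₁ hx₀ hx₁x₀)
  have htT : ENNReal.ofReal t < T x₀ :=
    ((ENNReal.ofReal_lt_ofReal_iff_of_nonneg ht).2 hlong).trans_le
      ((hsol x₀ hx₀).ofReal_integral_le_lifetime hb hneg hm)
  refine ⟨htT, (le_max_left M (a + 1)).trans ?_⟩
  by_contra! hlt
  have hshort : ∫ x in max M (a + 1)..x₀, 1 / |b x| < ∫ x in φ x₀ t..x₀, 1 / |b x| :=
    strictAntiOn_intervalIntegral_left hf (one_div_abs_pos hneg) hx₀
      ((hsol x₀ hx₀).mem t ht htT) hm hlt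
  rw [(hsol x₀ hx₀).intervalIntegral_eq hb hneg ht htT] at hshort
  linarith

theorem iSup_lifetime_eq_top_of_not_integrableOn (hb : ContinuousOn b (Ioi a))
    (hneg : ∀ x ∈ Ioi a, b x < 0)
    (hsol : ∀ x₀ ∈ Ioi a, IsMaximalSolution a b x₀ (T x₀) (φ x₀))
    (hnot : ¬ ∃ u ∈ Ioi a, IntegrableOn (fun x => 1 / |b x|) (Ioi u)) :
    ⨆ x₀ ∈ Ioi a, T x₀ = ⊤ := by
  refine ENNReal.eq_top_of_forall_nnreal_le fun r => ?_
  obtain ⟨x₁, hx₁, hT⟩ :=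
    exists_lifetime_gt_and_flow_ge_of_not_integrableOn hb hneg hsol hnot r.coe_nonneg 0
  exact (ENNReal.ofReal_coe_nnreal ▸ (hT x₁ le_rfl).1).le.trans (le_biSup T hx₁)

end Family

/-- Coming down from infinity for the one-dimensional ODE `x' = b_F(x)` on
`(a,∞)` with a negative, locally Lipschitz right-hand side. `T x₀ ∈ (0,∞]`
denotes the maximal existence time in `(a,∞)` of the flow `φ x₀` and
maximality is expressed by the fact that, if `T x₀` is finite, the solution
converges to the boundary point `a` at time `T x₀`. -/
theorem stmt15 (a : ℝ) (bF : ℝ → ℝ)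
    (hLip : ∀ x ∈ Set.Ioi a, ∃ s ∈ nhdsWithin x (Set.Ioi a), ∃ L : NNReal,
      LipschitzOnWith L bF s)
    (hneg : ∀ x ∈ Set.Ioi a, bF x < 0)
    (T : ℝ → ℝ≥0∞) (φ : ℝ → ℝ → ℝ)
    (hTpos : ∀ x₀ ∈ Set.Ioi a, 0 < T x₀)
    (hinit : ∀ x₀ ∈ Set.Ioi a, φ x₀ 0 = x₀)
    (hmem : ∀ x₀ ∈ Set.Ioi a, ∀ t : ℝ, 0 ≤ t → ENNReal.ofReal t < T x₀ →
      φ x₀ t ∈ Set.Ioi a)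
    (hder : ∀ x₀ ∈ Set.Ioi a, ∀ t : ℝ, 0 ≤ t → ENNReal.ofReal t < T x₀ →
      HasDerivAt (φ x₀) (bF (φ x₀ t)) t)
    (hmax : ∀ x₀ ∈ Set.Ioi a, T x₀ ≠ ⊤ →
      Filter.Tendsto (φ x₀) (nhdsWithin (T x₀).toReal (Set.Iio (T x₀).toReal))
        (nhds a)) :
    -- the flow and its lifetime are nondecreasing in the initial condition
    (∀ x₀ ∈ Set.Ioi a, ∀ x₁ : ℝ, x₀ ≤ x₁ → T x₀ ≤ T x₁) ∧
    (∀ x₀ ∈ Set.Ioi a, ∀ x₁ : ℝ, x₀ ≤ x₁ →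
      ∀ t : ℝ, 0 ≤ t → ENNReal.ofReal t < T x₀ → φ x₀ t ≤ φ x₁ t) ∧
    -- (i) if `∫^∞ dx/|b_F(x)|` converges, instantaneous coming down from
    -- infinity, with the explicit formula for `φ(∞,t)`
    ((∃ u ∈ Set.Ioi a, MeasureTheory.IntegrableOn (fun x => 1 / |bF x|) (Set.Ioi u)) →
      ∀ t : ℝ, 0 < t → ENNReal.ofReal t < ⨆ x₀ ∈ Set.Ioi a, T x₀ →
        BddAbove {y : ℝ | ∃ x₀ ∈ Set.Ioi a, ENNReal.ofReal t < T x₀ ∧ y = φ x₀ t} ∧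
        sSup {y : ℝ | ∃ x₀ ∈ Set.Ioi a, ENNReal.ofReal t < T x₀ ∧ y = φ x₀ t} =
          sInf {u : ℝ | a < u ∧ ∫ x in Set.Ioi u, 1 / |bF x| < t}) ∧
    -- (ii) otherwise `T(∞) = ∞` and `φ(∞,t) = ∞` for every `t ≥ 0`
    ((¬ ∃ u ∈ Set.Ioi a, MeasureTheory.IntegrableOn (fun x => 1 / |bF x|) (Set.Ioi u)) →
      (⨆ x₀ ∈ Set.Ioi a, T x₀) = ⊤ ∧
      ∀ t : ℝ, 0 ≤ t → ∀ M : ℝ, ∃ x₁ ∈ Set.Ioi a, ∀ x₀ : ℝ, x₁ ≤ x₀ →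
        ENNReal.ofReal t < T x₀ ∧ M ≤ φ x₀ t) := by
  have hb : ContinuousOn bF (Ioi a) :=
    LocallyLipschitzOn.continuousOn fun x hx =>
      let ⟨s, hs, L, hL⟩ := hLip x hx
      ⟨L, s, hs, hL⟩
  have hsol : ∀ x₀ ∈ Ioi a, IsMaximalSolution a bF x₀ (T x₀) (φ x₀) := fun x₀ hx₀ =>
    ⟨hTpos x₀ hx₀, hinit x₀ hx₀, hmem x₀ hx₀, hder x₀ hx₀, hmax x₀ hx₀⟩
  refine ⟨fun x₀ hx₀ x₁ hx => ?_, fun x₀ hx₀ x₁ hx t ht htT => ?_,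
    fun hint t ht htT => bddAbove_flow_and_sSup_flow_eq_sInf hb hneg hsol hint ht htT,
    fun hnot => ⟨iSup_lifetime_eq_top_of_not_integrableOn hb hneg hsol hnot,
      fun t ht => exists_lifetime_gt_and_flow_ge_of_not_integrableOn hb hneg hsol hnot ht⟩⟩
  · exact (hsol x₀ hx₀).lifetime_le_of_le (hsol x₁ (lt_of_lt_of_le hx₀ hx)) hb hneg hx
  · exact (hsol x₀ hx₀).apply_le_of_le (hsol x₁ (lt_of_lt_of_le hx₀ hx)) hb hneg hx ht htT
end

section
/- Let ψ₁, ψ₂ : (0,∞) → ℝ be locally Lipschitz, with ψ₁ negative for all large x and ∫^∞ dx/|ψ₁(x)| < ∞. Assume ψ₁ is (L,α) non-expansive on (0,∞) for some L, α ≥ 0, and that ψ₂ = ψ₁ + h with h bounded. Let φ₁, φ₂ denote the flows of ψ₁ and ψ₂ and φᵢ(∞,t) = lim_{x₀→∞} φᵢ(x₀,t) the monotone limits. Then the flow φ₂ comes down from infinity (there is t* > 0 such that φ₂(∞,t) < ∞ for all t ∈ (0,t*)) and lim_{t→0+} ( φ₂(∞,t) − φ₁(∞,t) ) = 0. -/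
/-
Integrability of `1/|ψ₁|` at infinity together with the one-sided Lipschitz bound
`ψ₁ x - ψ₁ y ≤ L (x - y) + α` (for `y < x`) forces `ψ₁ → -∞`: otherwise `1/|ψ₁|` would be
bounded below on unit intervals arbitrarily far out. So beyond some level `X` both fields satisfy
`ψᵢ / |ψ₁| ≤ -1/2`, and a trajectory above `X` spends time at most `2 ∫_{x(t)}^{x(0)} dx/|ψ₁|`;
hence at time `t` every trajectory lies below any `R` with `2 ∫_R^∞ dx/|ψ₁| < t`, whatever its
starting point, and no solution started above `X` dies before the one started at `X`.
Grönwall's inequality for `|φ₂(x₀,t) - φ₁(x₀,t)|`, whose right derivative is at most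
`L |φ₂ - φ₁| + α + sup |ψ₂ - ψ₁|`, bounds the difference uniformly in `x₀` by a quantity
vanishing as `t → 0`; monotonicity of the flows in `x₀` passes the bound to the suprema.
-/

open Real Set Filter MeasureTheory ENNReal

/-- The set of values at time `t` of the flow `φ` of lifetime `T` on `(0,∞)`,
over all admissible initial conditions; its supremum is the monotone limit
`φ(∞,t)`. -/
def flowVals (T : ℝ → ℝ≥0∞) (φ : ℝ → ℝ → ℝ) (t : ℝ) : Set ℝ :=
  {y : ℝ | ∃ x₀ ∈ Set.Ioi (0 : ℝ), ENNReal.ofReal t < T x₀ ∧ y = φ x₀ t}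

open Topology

theorem locallyLipschitzOn_of_exists_mem_nhdsWithin {α β : Type*} [PseudoEMetricSpace α]
    [PseudoEMetricSpace β] {s : Set α} {f : α → β}
    (hf : ∀ x ∈ s, ∃ t ∈ 𝓝[s] x, ∃ K, LipschitzOnWith K f t) : LocallyLipschitzOn s f :=
  fun x hx => let ⟨t, ht, K, hK⟩ := hf x hx; ⟨K, t, ht, hK⟩

theorem sign_mul_le_abs (x y : ℝ) : (SignType.sign x : ℝ) * y ≤ |y| := by
  rcases lt_trichotomy x 0 with h | rfl | h
  · simp [_root_.sign_neg h, neg_le_abs]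
  · simp
  · simp [sign_pos h, le_abs_self]

theorem tendsto_setIntegral_Ioi_atTop {E : Type*} [NormedAddCommGroup E] [NormedSpace ℝ E]
    {μ : Measure ℝ} {f : ℝ → E} {a : ℝ} (hf : IntegrableOn f (Ioi a) μ) :
    Tendsto (fun x => ∫ y in Ioi x, f y ∂μ) atTop (𝓝 0) := by
  have hempty : ⋂ x : ℝ, Ioi x = ∅ := iInter_eq_empty_iff.2 fun y => ⟨y, lt_irrefl y⟩
  simpa [hempty] using tendsto_setIntegral_of_antitone (fun x => measurableSet_Ioi)
    (fun x y hxy => Ioi_subset_Ioi hxy) ⟨a, hf⟩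

theorem intervalIntegral_le_setIntegral_Ioi {w : ℝ → ℝ} {R a b : ℝ} (hw : ∀ x, 0 ≤ w x)
    (hwi : IntegrableOn w (Ioi R)) (ha : R < a) : ∫ x in a..b, w x ≤ ∫ x in Ioi R, w x := by
  rcases le_total a b with hab | hba
  · rw [intervalIntegral.integral_of_le hab]
    exact setIntegral_mono_set hwi (ae_of_all _ hw)
      (Ioc_subset_Ioi_self.trans (Ioi_subset_Ioi ha.le)).eventuallyLE
  · rw [intervalIntegral.integral_symm]
    linarith [intervalIntegral.integral_nonneg (μ := volume) hba fun x _ => hw x,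
      setIntegral_nonneg (μ := volume) (measurableSet_Ioi (a := R)) fun x _ => hw x]

def IsNonexpansiveOn (ψ : ℝ → ℝ) (L α : ℝ) (U : Set ℝ) : Prop :=
  ∀ x ∈ U, ∀ y ∈ U, (ψ x - ψ y) * (x - y) ≤ L * (x - y) ^ 2 + α * |x - y|

namespace IsNonexpansiveOn

variable {ψ : ℝ → ℝ} {L α : ℝ} {U : Set ℝ}

theorem mono {V : Set ℝ} (hψ : IsNonexpansiveOn ψ L α U) (hVU : V ⊆ U) :
    IsNonexpansiveOn ψ L α V :=
  fun x hx y hy => hψ x (hVU hx) y (hVU hy)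

theorem sign_mul_sub_le (hψ : IsNonexpansiveOn ψ L α U) {x y : ℝ} (hx : x ∈ U) (hy : y ∈ U)
    (hxy : x ≠ y) : (SignType.sign (x - y) : ℝ) * (ψ x - ψ y) ≤ L * |x - y| + α := by
  have hd : 0 < |x - y| := abs_pos.2 (sub_ne_zero.2 hxy)
  refine le_of_mul_le_mul_right ?_ hd
  calc (SignType.sign (x - y) : ℝ) * (ψ x - ψ y) * |x - y|
      = (ψ x - ψ y) * (SignType.sign (x - y) * |x - y|) := by ring
    _ = (ψ x - ψ y) * (x - y) := by rw [sign_mul_abs]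
    _ ≤ L * (x - y) ^ 2 + α * |x - y| := hψ x hx y hy
    _ = (L * |x - y| + α) * |x - y| := by rw [← sq_abs]; ring

end IsNonexpansiveOn

theorem tendsto_atBot_of_integrableOn_one_div_abs {ψ : ℝ → ℝ} {L α u : ℝ}
    (hψ : IsNonexpansiveOn ψ L α (Ioi u)) (hneg : ∀ᶠ x in atTop, ψ x < 0)
    (hint : IntegrableOn (fun x => 1 / |ψ x|) (Ioi u)) : Tendsto ψ atTop atBot := by
  refine tendsto_atBot.2 fun M => ?_
  set c := |M| + |L| + |α| + 1
  have hc : 0 < c := by positivity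
  obtain ⟨x₁, hx₁⟩ := eventually_atTop.1 hneg
  have htail : ∀ᶠ x in atTop, ∫ y in Ioi (x - 1), 1 / |ψ y| < 1 / c :=
    ((tendsto_setIntegral_Ioi_atTop hint).comp (tendsto_atTop_add_const_right _ (-1) tendsto_id)
      ).eventually (gt_mem_nhds (by positivity))
  filter_upwards [htail, eventually_ge_atTop (max x₁ u + 1)] with x hx hxlarge
  by_contra! hMx
  have hmem : ∀ y ∈ Ioc (x - 1) x, x₁ ≤ y ∧ u < y := fun y hy =>
    ⟨by linarith [le_max_left x₁ u, hy.1], by linarith [le_max_right x₁ u, hy.1]⟩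
  -- the one-sided Lipschitz bound keeps `ψ` above `-c` on `(x - 1, x]`
  have hlow : ∀ y ∈ Ioc (x - 1) x, 1 / c ≤ 1 / |ψ y| := by
    intro y hy
    have hψy : ψ y < 0 := hx₁ y (hmem y hy).1
    have hdrop : ψ x - ψ y ≤ |L| + |α| := by
      rcases hy.2.lt_or_eq with hyx | rfl
      · have h := hψ.sign_mul_sub_le (hmem x ⟨by linarith [hy.1], le_rfl⟩).2 (hmem y hy).2 hyx.ne'
        rw [sign_pos (sub_pos.2 hyx), SignType.coe_one, one_mul, abs_of_pos (sub_pos.2 hyx)] at h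
        nlinarith [le_abs_self L, le_abs_self α, neg_abs_le L, hy.1]
      · rw [sub_self]; positivity
    rw [abs_of_neg hψy]
    exact one_div_le_one_div_of_le (neg_pos.2 hψy) (by linarith [neg_abs_le M])
  have hIoc : 1 / c ≤ ∫ y in Ioc (x - 1) x, 1 / |ψ y| := by
    simpa [Measure.real, Real.volume_Ioc] using setIntegral_ge_of_const_le measurableSet_Ioc
      (by simp [Real.volume_Ioc]) hlow (hint.mono_set fun y hy => (hmem y hy).2)
  have hIoi : ∫ y in Ioc (x - 1) x, 1 / |ψ y| ≤ ∫ y in Ioi (x - 1), 1 / |ψ y| :=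
    setIntegral_mono_set (hint.mono_set (Ioi_subset_Ioi (by linarith [le_max_right x₁ u])))
      (ae_of_all _ fun y => by positivity) Ioc_subset_Ioi_self.eventuallyLE
  linarith

def IsSolutionOn {E : Type*} [NormedAddCommGroup E] [NormedSpace ℝ E] (ψ : E → E) (U : Set E)
    (f : ℝ → E) (a b : ℝ) : Prop :=
  ∀ s ∈ Icc a b, HasDerivAt f (ψ (f s)) s ∧ f s ∈ U

namespace IsSolutionOn

section General

variable {E : Type*} [NormedAddCommGroup E] [NormedSpace ℝ E] {ψ : E → E} {U : Set E}
  {f g : ℝ → E} {a b : ℝ}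

theorem mono (hf : IsSolutionOn ψ U f a b) {a' b' : ℝ} (ha : a ≤ a') (hb : b' ≤ b) :
    IsSolutionOn ψ U f a' b' :=
  fun s hs => hf s ⟨ha.trans hs.1, hs.2.trans hb⟩

theorem continuousOn (hf : IsSolutionOn ψ U f a b) : ContinuousOn f (Icc a b) :=
  fun s hs => (hf s hs).1.continuousAt.continuousWithinAt

theorem hasDerivWithinAt (hf : IsSolutionOn ψ U f a b) {s : ℝ} (hs : s ∈ Ico a b) :
    HasDerivWithinAt f (ψ (f s)) (Ici s) s :=
  (hf s (Ico_subset_Icc_self hs)).1.hasDerivWithinAt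

-- Both trajectories stay in a compact subset of `U`, on which `ψ` is Lipschitz.
theorem eqOn (hψ : LocallyLipschitzOn U ψ) (hf : IsSolutionOn ψ U f a b)
    (hg : IsSolutionOn ψ U g a b) (ha : f a = g a) : EqOn f g (Icc a b) := by
  set K := f '' Icc a b ∪ g '' Icc a b
  have hK : IsCompact K := (isCompact_Icc.image_of_continuousOn hf.continuousOn).union
    (isCompact_Icc.image_of_continuousOn hg.continuousOn)
  have hKU : K ⊆ U := union_subset (image_subset_iff.2 fun s hs => (hf s hs).2)
    (image_subset_iff.2 fun s hs => (hg s hs).2)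
  obtain ⟨k, hk⟩ := (hψ.mono hKU).exists_lipschitzOnWith_of_compact hK
  exact ODE_solution_unique_of_mem_Icc_right (v := fun _ => ψ) (s := fun _ => K)
    (fun _ _ => hk) hf.continuousOn (fun _ hs => hf.hasDerivWithinAt hs)
    (fun _ hs => Or.inl (mem_image_of_mem f (Ico_subset_Icc_self hs))) hg.continuousOn
    (fun _ hs => hg.hasDerivWithinAt hs)
    (fun _ hs => Or.inr (mem_image_of_mem g (Ico_subset_Icc_self hs))) ha

end General

variable {ψ : ℝ → ℝ} {U : Set ℝ} {f g : ℝ → ℝ} {a b : ℝ}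

-- Trajectories that crossed would have to meet, and then coincide by uniqueness.
theorem le_of_le (hψ : LocallyLipschitzOn U ψ) (hf : IsSolutionOn ψ U f a b)
    (hg : IsSolutionOn ψ U g a b) (hab : a ≤ b) (ha : f a ≤ g a) : f b ≤ g b := by
  by_contra! hb
  obtain ⟨c, hc, hfgc⟩ := intermediate_value_Icc' hab (hg.continuousOn.sub hf.continuousOn)
    ⟨(sub_neg.2 hb).le, sub_nonneg.2 ha⟩
  have hc' : f c = g c := (sub_eq_zero.1 hfgc).symm
  exact hb.ne' ((hf.mono hc.1 le_rfl).eqOn hψ (hg.mono hc.1 le_rfl) hc' (right_mem_Icc.2 hc.2))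

theorem le_max_of_neg {X : ℝ} (hf : IsSolutionOn ψ U f a b) (hψ : ∀ x, X ≤ x → ψ x < 0)
    (hab : a ≤ b) : f b ≤ max (f a) X :=
  image_le_of_deriv_right_lt_deriv_boundary (B := fun _ => max (f a) X) (B' := fun _ => 0)
    hf.continuousOn (fun _ hs => hf.hasDerivWithinAt hs) (le_max_left _ _)
    (fun _ => hasDerivAt_const _ _) (fun _ _ hs => hψ _ (hs ▸ le_max_right _ _))
    (right_mem_Icc.2 hab)

theorem mul_sub_le_intervalIntegral {w : ℝ → ℝ} {X c : ℝ} (hf : IsSolutionOn ψ (Ioi X) f a b)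
    (hw : ContinuousOn w (Ioi X)) (hψw : ∀ x ∈ Ioi X, ψ x * w x ≤ -c) (hab : a ≤ b) :
    c * (b - a) ≤ ∫ x in f b..f a, w x := by
  set H : ℝ → ℝ := fun s => (∫ x in f a..f s, w x) + c * s
  have hH : ∀ s ∈ Icc a b, HasDerivAt H (w (f s) * ψ (f s) + c) s := by
    intro s hs
    have hfs := (hf s hs).2
    have hfa := (hf a (left_mem_Icc.2 hab)).2
    have hprim : HasDerivAt (fun y => ∫ x in f a..y, w x) (w (f s)) (f s) :=
      intervalIntegral.integral_hasDerivAt_right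
        (hw.mono (ordConnected_Ioi.uIcc_subset hfa hfs)).intervalIntegrable
        (hw.stronglyMeasurableAtFilter isOpen_Ioi _ hfs) (hw.continuousAt (isOpen_Ioi.mem_nhds hfs))
    exact (hprim.comp s (hf s hs).1).add ((hasDerivAt_id s).const_mul c |>.congr_deriv (mul_one c))
  have hanti : AntitoneOn H (Icc a b) := by
    refine antitoneOn_of_deriv_nonpos (convex_Icc a b)
      (fun s hs => (hH s hs).continuousAt.continuousWithinAt)
      (fun s hs => (hH s (interior_subset hs)).differentiableAt.differentiableWithinAt)
      fun s hs => ?_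
    rw [(hH s (interior_subset hs)).deriv, mul_comm]
    linarith [hψw _ (hf s (interior_subset hs)).2]
  have := hanti (left_mem_Icc.2 hab) (right_mem_Icc.2 hab) hab
  simp only [H, intervalIntegral.integral_same, zero_add] at this
  rw [intervalIntegral.integral_symm]
  linarith

theorem le_of_setIntegral_Ioi_lt {w : ℝ → ℝ} {X c R : ℝ} (hf : IsSolutionOn ψ U f a b)
    (hw₀ : ∀ x, 0 ≤ w x) (hwc : ContinuousOn w (Ioi X)) (hwi : IntegrableOn w (Ioi X))
    (hψw : ∀ x, X ≤ x → ψ x * w x ≤ -c) (hc : 0 < c) (hab : a ≤ b) (hXR : X ≤ R)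
    (hR : ∫ x in Ioi R, w x < c * (b - a)) : f b ≤ R := by
  by_cases hX : ∀ s ∈ Icc a b, f s ∈ Ioi X
  · by_contra! hfR
    have hf' : IsSolutionOn ψ (Ioi X) f a b := fun s hs => ⟨(hf s hs).1, hX s hs⟩
    linarith [hf'.mul_sub_le_intervalIntegral hwc (fun x hx => hψw x (le_of_lt hx)) hab,
      intervalIntegral_le_setIntegral_Ioi (b := f a) hw₀ (hwi.mono_set (Ioi_subset_Ioi hXR)) hfR]
  · obtain ⟨s, hs, hfs⟩ := not_forall₂.1 hX
    have hneg : ∀ x, X ≤ x → ψ x < 0 := fun x hx =>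
      neg_of_mul_neg_left ((hψw x hx).trans_lt (neg_neg_of_pos hc)) (hw₀ x)
    calc f b ≤ max (f s) X := (hf.mono hs.1 le_rfl).le_max_of_neg hneg hs.2
      _ ≤ R := max_le ((not_lt.1 hfs).trans hXR) hXR

end IsSolutionOn

theorem frequently_slope_abs_lt {u : ℝ → ℝ} {u' s r : ℝ} (hu : HasDerivAt u u' s)
    (h₀ : u s = 0 → |u'| < r) (h₁ : u s ≠ 0 → (SignType.sign (u s) : ℝ) * u' < r) :
    ∃ᶠ z in 𝓝[>] s, (z - s)⁻¹ * (|u z| - |u s|) < r := by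
  by_cases hs : u s = 0
  · simpa only [Real.norm_eq_abs] using hu.hasDerivWithinAt.liminf_right_slope_norm_le (h₀ hs)
  · simpa only [slope_def_module, smul_eq_mul, Function.comp_def] using
      ((hasDerivAt_abs hs).comp s hu).hasDerivWithinAt.liminf_right_slope_le (h₁ hs)

theorem IsSolutionOn.abs_sub_le_gronwallBound {ψ₁ ψ₂ : ℝ → ℝ} {U : Set ℝ} {f g : ℝ → ℝ}
    {L α C a b : ℝ} (hψ₁ : IsNonexpansiveOn ψ₁ L α U) (hα : 0 ≤ α)
    (hC : ∀ x ∈ U, |ψ₂ x - ψ₁ x| ≤ C) (hf : IsSolutionOn ψ₁ U f a b)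
    (hg : IsSolutionOn ψ₂ U g a b) (ha : f a = g a) (hab : a ≤ b) :
    |g b - f b| ≤ gronwallBound 0 L (α + C) (b - a) := by
  refine le_gronwallBound_of_liminf_deriv_right_le (f := fun s => |g s - f s|)
    (f' := fun s => L * |g s - f s| + (α + C)) ((hg.continuousOn.sub hf.continuousOn).abs)
    (fun s hs r hr => ?_) (by simp [ha]) (fun _ _ => le_rfl) b (right_mem_Icc.2 hab)
  have hs := Ico_subset_Icc_self hs
  obtain ⟨hfs, hfU⟩ := hf s hs
  obtain ⟨hgs, hgU⟩ := hg s hs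
  have hCs := hC _ hgU
  refine frequently_slope_abs_lt (hgs.sub hfs) (fun h => ?_) (fun h => ?_)
  · rw [← sub_eq_zero.1 h]
    rw [h, abs_zero, mul_zero, zero_add] at hr
    linarith
  · have hψ₁s := hψ₁.sign_mul_sub_le hgU hfU (sub_ne_zero.1 h)
    have hψ₂s := sign_mul_le_abs (g s - f s) (ψ₂ (g s) - ψ₁ (g s))
    calc (SignType.sign (g s - f s) : ℝ) * (ψ₂ (g s) - ψ₁ (f s))
        = (SignType.sign (g s - f s) : ℝ) * (ψ₁ (g s) - ψ₁ (f s))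
          + (SignType.sign (g s - f s) : ℝ) * (ψ₂ (g s) - ψ₁ (g s)) := by ring
      _ < r := by linarith

structure IsMaximalFlow (ψ : ℝ → ℝ) (T : ℝ → ℝ≥0∞) (φ : ℝ → ℝ → ℝ) : Prop where
  lifetime_pos : ∀ x₀ ∈ Ioi (0 : ℝ), 0 < T x₀
  apply_zero : ∀ x₀ ∈ Ioi (0 : ℝ), φ x₀ 0 = x₀
  mem_Ioi : ∀ x₀ ∈ Ioi (0 : ℝ), ∀ t : ℝ, 0 ≤ t → ENNReal.ofReal t < T x₀ →
    φ x₀ t ∈ Ioi (0 : ℝ)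
  hasDerivAt : ∀ x₀ ∈ Ioi (0 : ℝ), ∀ t : ℝ, 0 ≤ t → ENNReal.ofReal t < T x₀ →
    HasDerivAt (φ x₀) (ψ (φ x₀ t)) t
  eventually_notMem : ∀ x₀ ∈ Ioi (0 : ℝ), T x₀ ≠ ⊤ → ∀ K : Set ℝ, IsCompact K →
    K ⊆ Ioi (0 : ℝ) → ∀ᶠ t in 𝓝[<] (T x₀).toReal, φ x₀ t ∉ K

namespace IsMaximalFlow

variable {ψ : ℝ → ℝ} {T : ℝ → ℝ≥0∞} {φ : ℝ → ℝ → ℝ} {x₀ t : ℝ}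

theorem isSolutionOn (hφ : IsMaximalFlow ψ T φ) (hx₀ : x₀ ∈ Ioi 0)
    (hT : ENNReal.ofReal t < T x₀) : IsSolutionOn ψ (Ioi 0) (φ x₀) 0 t := fun s hs =>
  have hTs := (ENNReal.ofReal_le_ofReal hs.2).trans_lt hT
  ⟨hφ.hasDerivAt x₀ hx₀ s hs.1 hTs, hφ.mem_Ioi x₀ hx₀ s hs.1 hTs⟩

theorem apply_le_apply (hφ : IsMaximalFlow ψ T φ) (hψ : LocallyLipschitzOn (Ioi 0) ψ)
    {y₀ : ℝ} (hx₀ : x₀ ∈ Ioi 0) (hxy : x₀ ≤ y₀) (ht : 0 ≤ t) (hTx : ENNReal.ofReal t < T x₀)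
    (hTy : ENNReal.ofReal t < T y₀) : φ x₀ t ≤ φ y₀ t := by
  have hy₀ : y₀ ∈ Ioi 0 := lt_of_lt_of_le hx₀ hxy
  refine (hφ.isSolutionOn hx₀ hTx).le_of_le hψ (hφ.isSolutionOn hy₀ hTy) ht ?_
  rwa [hφ.apply_zero x₀ hx₀, hφ.apply_zero y₀ hy₀]

-- Up to a finite lifetime, the solution from `x₀` would be trapped between the solution
-- from `X` and the level `x₀`.
theorem lt_lifetime_of_le (hφ : IsMaximalFlow ψ T φ) (hψ : LocallyLipschitzOn (Ioi 0) ψ)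
    {X : ℝ} (hX : 0 < X) (hneg : ∀ x, X ≤ x → ψ x < 0) (ht : 0 ≤ t)
    (hTX : ENNReal.ofReal t < T X) (hx₀ : X ≤ x₀) : ENNReal.ofReal t < T x₀ := by
  by_contra! hT
  have hx₀' : x₀ ∈ Ioi 0 := hX.trans_le hx₀
  have hTtop : T x₀ ≠ ⊤ := ne_top_of_le_ne_top ofReal_ne_top hT
  have hτ : 0 < (T x₀).toReal := ENNReal.toReal_pos (hφ.lifetime_pos x₀ hx₀').ne' hTtop
  have hτt : (T x₀).toReal ≤ t := ENNReal.toReal_le_of_le_ofReal ht hT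
  have hsolX := hφ.isSolutionOn hX hTX
  obtain ⟨s₀, hs₀, hmin⟩ := isCompact_Icc.exists_isMinOn (nonempty_Icc.2 ht) hsolX.continuousOn
  have htrap : ∀ s ∈ Ioo 0 (T x₀).toReal, φ x₀ s ∈ Icc (φ X s₀) x₀ := by
    intro s hs
    have hTs : ENNReal.ofReal s < T x₀ := (ofReal_lt_iff_lt_toReal hs.1.le hTtop).2 hs.2
    have hst : s ≤ t := hs.2.le.trans hτt
    refine ⟨(hmin ⟨hs.1.le, hst⟩).trans ?_, ?_⟩
    · exact hφ.apply_le_apply hψ hX hx₀ hs.1.le ((ofReal_le_ofReal hst).trans_lt hTX) hTs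
    · calc φ x₀ s ≤ max (φ x₀ 0) X := (hφ.isSolutionOn hx₀' hTs).le_max_of_neg hneg hs.1.le
        _ = x₀ := by rw [hφ.apply_zero x₀ hx₀', max_eq_left hx₀]
  have hK : Icc (φ X s₀) x₀ ⊆ Ioi 0 := fun y hy => lt_of_lt_of_le (hsolX s₀ hs₀).2 hy.1
  obtain ⟨s, hsK, hs⟩ := ((hφ.eventually_notMem x₀ hx₀' hTtop _ isCompact_Icc hK).and
    (Ioo_mem_nhdsLT hτ)).exists
  exact hsK (htrap s hs)

theorem bddAbove_flowVals (hφ : IsMaximalFlow ψ T φ) {w : ℝ → ℝ} {X c : ℝ}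
    (hw₀ : ∀ x, 0 ≤ w x) (hwc : ContinuousOn w (Ioi X)) (hwi : IntegrableOn w (Ioi X))
    (hψw : ∀ x, X ≤ x → ψ x * w x ≤ -c) (hc : 0 < c) (ht : 0 < t) :
    BddAbove (flowVals T φ t) := by
  obtain ⟨R, hR, hXR⟩ := (((tendsto_setIntegral_Ioi_atTop hwi).eventually
    (gt_mem_nhds (mul_pos hc ht))).and (eventually_ge_atTop X)).exists
  refine ⟨R, ?_⟩
  rintro _ ⟨x₀, hx₀, hT, rfl⟩
  exact (hφ.isSolutionOn hx₀ hT).le_of_setIntegral_Ioi_lt hw₀ hwc hwi hψw hc ht.le hXR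
    (by rwa [sub_zero])

theorem abs_sub_le_gronwallBound {ψ₂ : ℝ → ℝ} {T₂ : ℝ → ℝ≥0∞} {φ₂ : ℝ → ℝ → ℝ} {L α C : ℝ}
    (hφ : IsMaximalFlow ψ T φ) (hφ₂ : IsMaximalFlow ψ₂ T₂ φ₂) (hψ : IsNonexpansiveOn ψ L α (Ioi 0))
    (hα : 0 ≤ α) (hC : ∀ x ∈ Ioi (0 : ℝ), |ψ₂ x - ψ x| ≤ C) (hx₀ : x₀ ∈ Ioi 0) (ht : 0 ≤ t)
    (hT : ENNReal.ofReal t < T x₀) (hT₂ : ENNReal.ofReal t < T₂ x₀) :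
    |φ₂ x₀ t - φ x₀ t| ≤ gronwallBound 0 L (α + C) t := by
  simpa using (hφ.isSolutionOn hx₀ hT).abs_sub_le_gronwallBound hψ hα hC
    (hφ₂.isSolutionOn hx₀ hT₂) (by rw [hφ.apply_zero x₀ hx₀, hφ₂.apply_zero x₀ hx₀]) ht

theorem sSup_flowVals_le_add (hφ : IsMaximalFlow ψ T φ) (hψ : LocallyLipschitzOn (Ioi 0) ψ)
    {T' : ℝ → ℝ≥0∞} {φ' : ℝ → ℝ → ℝ} {X G : ℝ} (hX : 0 < X) (ht : 0 ≤ t)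
    (hT : ∀ x₀, X ≤ x₀ → ENNReal.ofReal t < T x₀) (hT' : ∀ x₀, X ≤ x₀ → ENNReal.ofReal t < T' x₀)
    (hb' : BddAbove (flowVals T' φ' t)) (hle : ∀ x₀, X ≤ x₀ → φ x₀ t ≤ φ' x₀ t + G) :
    sSup (flowVals T φ t) ≤ sSup (flowVals T' φ' t) + G := by
  refine csSup_le ⟨_, X, hX, hT X le_rfl, rfl⟩ ?_
  rintro _ ⟨x₀, hx₀, hTx₀, rfl⟩
  have hX₀ : X ≤ max x₀ X := le_max_right _ _
  calc φ x₀ t ≤ φ (max x₀ X) t := hφ.apply_le_apply hψ hx₀ (le_max_left _ _) ht hTx₀ (hT _ hX₀)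
    _ ≤ φ' (max x₀ X) t + G := hle _ hX₀
    _ ≤ sSup (flowVals T' φ' t) + G :=
      add_le_add_left (le_csSup hb' ⟨_, hX.trans_le hX₀, hT' _ hX₀, rfl⟩) G

theorem lifetime_and_bddAbove (hφ : IsMaximalFlow ψ T φ) (hψ : LocallyLipschitzOn (Ioi 0) ψ)
    {w : ℝ → ℝ} {X c : ℝ} (hX : 0 < X) (hw₀ : ∀ x, 0 ≤ w x) (hwc : ContinuousOn w (Ioi X))
    (hwi : IntegrableOn w (Ioi X)) (hψw : ∀ x, X ≤ x → ψ x * w x ≤ -c) (hc : 0 < c)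
    (ht : 0 < t) (hTX : ENNReal.ofReal t < T X) :
    (∀ x₀, X ≤ x₀ → ENNReal.ofReal t < T x₀) ∧ BddAbove (flowVals T φ t) :=
  have hneg : ∀ x, X ≤ x → ψ x < 0 := fun x hx =>
    neg_of_mul_neg_left ((hψw x hx).trans_lt (neg_neg_of_pos hc)) (hw₀ x)
  ⟨fun _ => hφ.lt_lifetime_of_le hψ hX hneg ht.le hTX,
    hφ.bddAbove_flowVals hw₀ hwc hwi hψw hc ht⟩

theorem abs_sSup_flowVals_sub_le {ψ₂ : ℝ → ℝ} {T₂ : ℝ → ℝ≥0∞} {φ₂ : ℝ → ℝ → ℝ} {L α C X : ℝ}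
    (hφ : IsMaximalFlow ψ T φ) (hφ₂ : IsMaximalFlow ψ₂ T₂ φ₂)
    (hψ : LocallyLipschitzOn (Ioi 0) ψ) (hψ₂ : LocallyLipschitzOn (Ioi 0) ψ₂)
    (hnonexp : IsNonexpansiveOn ψ L α (Ioi 0)) (hα : 0 ≤ α)
    (hC : ∀ x ∈ Ioi (0 : ℝ), |ψ₂ x - ψ x| ≤ C) (hX : 0 < X) (ht : 0 ≤ t)
    (hT : ∀ x₀, X ≤ x₀ → ENNReal.ofReal t < T x₀) (hT₂ : ∀ x₀, X ≤ x₀ → ENNReal.ofReal t < T₂ x₀)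
    (hb : BddAbove (flowVals T φ t)) (hb₂ : BddAbove (flowVals T₂ φ₂ t)) :
    |sSup (flowVals T₂ φ₂ t) - sSup (flowVals T φ t)| ≤ gronwallBound 0 L (α + C) t := by
  have hclose : ∀ x₀, X ≤ x₀ → |φ₂ x₀ t - φ x₀ t| ≤ gronwallBound 0 L (α + C) t :=
    fun x₀ hx₀ => hφ.abs_sub_le_gronwallBound hφ₂ hnonexp hα hC (hX.trans_le hx₀) ht
      (hT x₀ hx₀) (hT₂ x₀ hx₀)
  refine abs_sub_le_iff.2 ⟨sub_le_iff_le_add'.2 ?_, sub_le_iff_le_add'.2 ?_⟩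
  · refine hφ₂.sSup_flowVals_le_add hψ₂ hX ht hT₂ hT hb fun x₀ hx₀ => ?_
    linarith [(abs_sub_le_iff.1 (hclose x₀ hx₀)).1]
  · refine hφ.sSup_flowVals_le_add hψ hX ht hT hT₂ hb₂ fun x₀ hx₀ => ?_
    linarith [(abs_sub_le_iff.1 (hclose x₀ hx₀)).2]

theorem comesDown_and_tendsto_sSup_sub {ψ ψ₂ w : ℝ → ℝ} {T T₂ : ℝ → ℝ≥0∞}
    {φ φ₂ : ℝ → ℝ → ℝ} {L α C X c : ℝ} (hφ : IsMaximalFlow ψ T φ)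
    (hφ₂ : IsMaximalFlow ψ₂ T₂ φ₂) (hψ : LocallyLipschitzOn (Ioi 0) ψ)
    (hψ₂ : LocallyLipschitzOn (Ioi 0) ψ₂) (hnonexp : IsNonexpansiveOn ψ L α (Ioi 0))
    (hα : 0 ≤ α) (hC : ∀ x ∈ Ioi (0 : ℝ), |ψ₂ x - ψ x| ≤ C) (hX : 0 < X) (hc : 0 < c)
    (hw₀ : ∀ x, 0 ≤ w x) (hwc : ContinuousOn w (Ioi X)) (hwi : IntegrableOn w (Ioi X))
    (hψw : ∀ x, X ≤ x → ψ x * w x ≤ -c) (hψ₂w : ∀ x, X ≤ x → ψ₂ x * w x ≤ -c) :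
    (∃ tstar > (0 : ℝ), ∀ t ∈ Ioo (0 : ℝ) tstar,
      (∀ M : ℝ, ∃ x₀ ∈ Ioi (0 : ℝ), M ≤ x₀ ∧ ENNReal.ofReal t < T₂ x₀) ∧
      BddAbove (flowVals T₂ φ₂ t)) ∧
    Tendsto (fun t : ℝ => sSup (flowVals T₂ φ₂ t) - sSup (flowVals T φ t)) (𝓝[>] 0) (𝓝 0) := by
  obtain ⟨t₀, ht₀, hT, hT₂⟩ : ∃ t₀ : ℝ, 0 < t₀ ∧
      ENNReal.ofReal t₀ < T X ∧ ENNReal.ofReal t₀ < T₂ X := by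
    obtain ⟨r, -, hr, hrT⟩ :=
      ENNReal.lt_iff_exists_real_btwn.1 (lt_min (hφ.lifetime_pos X hX) (hφ₂.lifetime_pos X hX))
    exact ⟨r, ENNReal.ofReal_pos.1 hr, lt_min_iff.1 hrT⟩
  have hdown : ∀ t ∈ Ioo 0 t₀,
      ((∀ x₀, X ≤ x₀ → ENNReal.ofReal t < T x₀) ∧ BddAbove (flowVals T φ t)) ∧
      ((∀ x₀, X ≤ x₀ → ENNReal.ofReal t < T₂ x₀) ∧ BddAbove (flowVals T₂ φ₂ t)) :=
    fun t ht => have hTt := ENNReal.ofReal_le_ofReal ht.2.le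
      ⟨hφ.lifetime_and_bddAbove hψ hX hw₀ hwc hwi hψw hc ht.1 (hTt.trans_lt hT),
        hφ₂.lifetime_and_bddAbove hψ₂ hX hw₀ hwc hwi hψ₂w hc ht.1 (hTt.trans_lt hT₂)⟩
  refine ⟨⟨t₀, ht₀, fun t ht => ⟨fun M => ⟨max M X, hX.trans_le (le_max_right _ _),
    le_max_left _ _, (hdown t ht).2.1 _ (le_max_right _ _)⟩, (hdown t ht).2.2⟩⟩, ?_⟩
  have hG : Tendsto (gronwallBound 0 L (α + C)) (𝓝[>] 0) (𝓝 0) := by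
    simpa only [gronwallBound_x0] using
      (hasDerivAt_gronwallBound 0 L (α + C) 0).continuousAt.tendsto.mono_left nhdsWithin_le_nhds
  refine squeeze_zero_norm' ?_ hG
  filter_upwards [Ioo_mem_nhdsGT ht₀] with t ht
  obtain ⟨⟨hTt, hb⟩, hT₂t, hb₂⟩ := hdown t ht
  exact hφ.abs_sSup_flowVals_sub_le hφ₂ hψ hψ₂ hnonexp hα hC hX ht.1.le hTt hT₂t hb hb₂

end IsMaximalFlow

theorem mul_one_div_abs_le_neg_half {a b C : ℝ} (ha : a < -(2 * C)) (hb : |b - a| ≤ C) :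
    b * (1 / |a|) ≤ -(1 / 2) := by
  have ha' : a < 0 := by linarith [(abs_nonneg _).trans hb]
  rw [abs_of_neg ha', mul_one_div, div_le_iff₀ (neg_pos.2 ha')]
  linarith [(abs_le.1 hb).2]

theorem stmt16_general (ψ₁ ψ₂ : ℝ → ℝ) (L α : ℝ) (hα : 0 ≤ α)
    (hLip₁ : ∀ x ∈ Set.Ioi (0 : ℝ), ∃ s ∈ nhdsWithin x (Set.Ioi (0 : ℝ)),
      ∃ K : NNReal, LipschitzOnWith K ψ₁ s)
    (hLip₂ : ∀ x ∈ Set.Ioi (0 : ℝ), ∃ s ∈ nhdsWithin x (Set.Ioi (0 : ℝ)),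
      ∃ K : NNReal, LipschitzOnWith K ψ₂ s)
    (hneg : ∃ x₁ : ℝ, ∀ x : ℝ, x₁ ≤ x → ψ₁ x < 0)
    (hint : ∃ u ∈ Set.Ioi (0 : ℝ),
      MeasureTheory.IntegrableOn (fun x => 1 / |ψ₁ x|) (Set.Ioi u))
    (hnonexp : ∀ x ∈ Set.Ioi (0 : ℝ), ∀ y ∈ Set.Ioi (0 : ℝ),
      (ψ₁ x - ψ₁ y) * (x - y) ≤ L * (x - y) ^ 2 + α * |x - y|)
    (hbdd : ∃ Ch : ℝ, ∀ x ∈ Set.Ioi (0 : ℝ), |ψ₂ x - ψ₁ x| ≤ Ch)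
    (T₁ T₂ : ℝ → ℝ≥0∞) (φ₁ φ₂ : ℝ → ℝ → ℝ)
    -- `φ₁` is the (maximal) flow of `ψ₁` on `(0,∞)`
    (hT₁pos : ∀ x₀ ∈ Set.Ioi (0 : ℝ), 0 < T₁ x₀)
    (hinit₁ : ∀ x₀ ∈ Set.Ioi (0 : ℝ), φ₁ x₀ 0 = x₀)
    (hmem₁ : ∀ x₀ ∈ Set.Ioi (0 : ℝ), ∀ t : ℝ, 0 ≤ t → ENNReal.ofReal t < T₁ x₀ →
      φ₁ x₀ t ∈ Set.Ioi (0 : ℝ))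
    (hder₁ : ∀ x₀ ∈ Set.Ioi (0 : ℝ), ∀ t : ℝ, 0 ≤ t → ENNReal.ofReal t < T₁ x₀ →
      HasDerivAt (φ₁ x₀) (ψ₁ (φ₁ x₀ t)) t)
    (hmax₁ : ∀ x₀ ∈ Set.Ioi (0 : ℝ), T₁ x₀ ≠ ⊤ → ∀ K : Set ℝ, IsCompact K →
      K ⊆ Set.Ioi (0 : ℝ) →
      ∀ᶠ t in nhdsWithin (T₁ x₀).toReal (Set.Iio (T₁ x₀).toReal), φ₁ x₀ t ∉ K)
    -- `φ₂` is the (maximal) flow of `ψ₂` on `(0,∞)`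
    (hT₂pos : ∀ x₀ ∈ Set.Ioi (0 : ℝ), 0 < T₂ x₀)
    (hinit₂ : ∀ x₀ ∈ Set.Ioi (0 : ℝ), φ₂ x₀ 0 = x₀)
    (hmem₂ : ∀ x₀ ∈ Set.Ioi (0 : ℝ), ∀ t : ℝ, 0 ≤ t → ENNReal.ofReal t < T₂ x₀ →
      φ₂ x₀ t ∈ Set.Ioi (0 : ℝ))
    (hder₂ : ∀ x₀ ∈ Set.Ioi (0 : ℝ), ∀ t : ℝ, 0 ≤ t → ENNReal.ofReal t < T₂ x₀ →
      HasDerivAt (φ₂ x₀) (ψ₂ (φ₂ x₀ t)) t)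
    (hmax₂ : ∀ x₀ ∈ Set.Ioi (0 : ℝ), T₂ x₀ ≠ ⊤ → ∀ K : Set ℝ, IsCompact K →
      K ⊆ Set.Ioi (0 : ℝ) →
      ∀ᶠ t in nhdsWithin (T₂ x₀).toReal (Set.Iio (T₂ x₀).toReal), φ₂ x₀ t ∉ K) :
    (∃ tstar > (0 : ℝ), ∀ t ∈ Set.Ioo (0 : ℝ) tstar,
      (∀ M : ℝ, ∃ x₀ ∈ Set.Ioi (0 : ℝ), M ≤ x₀ ∧ ENNReal.ofReal t < T₂ x₀) ∧
      BddAbove (flowVals T₂ φ₂ t)) ∧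
    Filter.Tendsto (fun t : ℝ => sSup (flowVals T₂ φ₂ t) - sSup (flowVals T₁ φ₁ t))
      (nhdsWithin 0 (Set.Ioi 0)) (nhds 0) := by
  obtain ⟨u, hu, hint⟩ := hint
  obtain ⟨C, hC⟩ := hbdd
  have hψ₁ := locallyLipschitzOn_of_exists_mem_nhdsWithin hLip₁
  obtain ⟨X, hX⟩ := eventually_atTop.1 (((tendsto_atBot_of_integrableOn_one_div_abs
    (IsNonexpansiveOn.mono hnonexp (Ioi_subset_Ioi hu.le)) (eventually_atTop.2 hneg)
    hint).eventually_lt_atBot (-(2 * C))).and (eventually_gt_atTop u))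
  have hX₀ : 0 < X := hu.trans (hX X le_rfl).2
  have hwc : ContinuousOn (fun x => 1 / |ψ₁ x|) (Ioi X) :=
    continuousOn_const.div (hψ₁.continuousOn.mono (Ioi_subset_Ioi hX₀.le)).abs fun x hx =>
      abs_ne_zero.2 (by linarith [hX x (le_of_lt hx), (abs_nonneg _).trans (hC x (hX₀.trans hx))])
  refine IsMaximalFlow.comesDown_and_tendsto_sSup_sub ⟨hT₁pos, hinit₁, hmem₁, hder₁, hmax₁⟩
    ⟨hT₂pos, hinit₂, hmem₂, hder₂, hmax₂⟩ hψ₁ (locallyLipschitzOn_of_exists_mem_nhdsWithin hLip₂)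
    hnonexp hα hC hX₀ one_half_pos (fun x => by positivity) hwc
    (hint.mono_set (Ioi_subset_Ioi (hX X le_rfl).2.le)) (fun x hx => ?_) fun x hx => ?_
  · exact mul_one_div_abs_le_neg_half (hX x hx).1
      (by simpa using (abs_nonneg _).trans (hC x (hX₀.trans_le hx)))
  · exact mul_one_div_abs_le_neg_half (hX x hx).1 (hC x (hX₀.trans_le hx))

/-- A bounded perturbation of a non-expansive field coming down from infinity
also comes down from infinity, with the same monotone limit flow as `t → 0+`. -/
theorem stmt16 (ψ₁ ψ₂ : ℝ → ℝ) (L α : ℝ) (hL : 0 ≤ L) (hα : 0 ≤ α)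
    (hLip₁ : ∀ x ∈ Set.Ioi (0 : ℝ), ∃ s ∈ nhdsWithin x (Set.Ioi (0 : ℝ)),
      ∃ K : NNReal, LipschitzOnWith K ψ₁ s)
    (hLip₂ : ∀ x ∈ Set.Ioi (0 : ℝ), ∃ s ∈ nhdsWithin x (Set.Ioi (0 : ℝ)),
      ∃ K : NNReal, LipschitzOnWith K ψ₂ s)
    (hneg : ∃ x₁ : ℝ, ∀ x : ℝ, x₁ ≤ x → ψ₁ x < 0)
    (hint : ∃ u ∈ Set.Ioi (0 : ℝ),
      MeasureTheory.IntegrableOn (fun x => 1 / |ψ₁ x|) (Set.Ioi u))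
    (hnonexp : ∀ x ∈ Set.Ioi (0 : ℝ), ∀ y ∈ Set.Ioi (0 : ℝ),
      (ψ₁ x - ψ₁ y) * (x - y) ≤ L * (x - y) ^ 2 + α * |x - y|)
    (hbdd : ∃ Ch : ℝ, ∀ x ∈ Set.Ioi (0 : ℝ), |ψ₂ x - ψ₁ x| ≤ Ch)
    (T₁ T₂ : ℝ → ℝ≥0∞) (φ₁ φ₂ : ℝ → ℝ → ℝ)
    -- `φ₁` is the (maximal) flow of `ψ₁` on `(0,∞)`
    (hT₁pos : ∀ x₀ ∈ Set.Ioi (0 : ℝ), 0 < T₁ x₀)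
    (hinit₁ : ∀ x₀ ∈ Set.Ioi (0 : ℝ), φ₁ x₀ 0 = x₀)
    (hmem₁ : ∀ x₀ ∈ Set.Ioi (0 : ℝ), ∀ t : ℝ, 0 ≤ t → ENNReal.ofReal t < T₁ x₀ →
      φ₁ x₀ t ∈ Set.Ioi (0 : ℝ))
    (hder₁ : ∀ x₀ ∈ Set.Ioi (0 : ℝ), ∀ t : ℝ, 0 ≤ t → ENNReal.ofReal t < T₁ x₀ →
      HasDerivAt (φ₁ x₀) (ψ₁ (φ₁ x₀ t)) t)
    (hmax₁ : ∀ x₀ ∈ Set.Ioi (0 : ℝ), T₁ x₀ ≠ ⊤ → ∀ K : Set ℝ, IsCompact K →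
      K ⊆ Set.Ioi (0 : ℝ) →
      ∀ᶠ t in nhdsWithin (T₁ x₀).toReal (Set.Iio (T₁ x₀).toReal), φ₁ x₀ t ∉ K)
    -- `φ₂` is the (maximal) flow of `ψ₂` on `(0,∞)`
    (hT₂pos : ∀ x₀ ∈ Set.Ioi (0 : ℝ), 0 < T₂ x₀)
    (hinit₂ : ∀ x₀ ∈ Set.Ioi (0 : ℝ), φ₂ x₀ 0 = x₀)
    (hmem₂ : ∀ x₀ ∈ Set.Ioi (0 : ℝ), ∀ t : ℝ, 0 ≤ t → ENNReal.ofReal t < T₂ x₀ →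
      φ₂ x₀ t ∈ Set.Ioi (0 : ℝ))
    (hder₂ : ∀ x₀ ∈ Set.Ioi (0 : ℝ), ∀ t : ℝ, 0 ≤ t → ENNReal.ofReal t < T₂ x₀ →
      HasDerivAt (φ₂ x₀) (ψ₂ (φ₂ x₀ t)) t)
    (hmax₂ : ∀ x₀ ∈ Set.Ioi (0 : ℝ), T₂ x₀ ≠ ⊤ → ∀ K : Set ℝ, IsCompact K →
      K ⊆ Set.Ioi (0 : ℝ) →
      ∀ᶠ t in nhdsWithin (T₂ x₀).toReal (Set.Iio (T₂ x₀).toReal), φ₂ x₀ t ∉ K) :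
    (∃ tstar > (0 : ℝ), ∀ t ∈ Set.Ioo (0 : ℝ) tstar,
      (∀ M : ℝ, ∃ x₀ ∈ Set.Ioi (0 : ℝ), M ≤ x₀ ∧ ENNReal.ofReal t < T₂ x₀) ∧
      BddAbove (flowVals T₂ φ₂ t)) ∧
    Filter.Tendsto (fun t : ℝ => sSup (flowVals T₂ φ₂ t) - sSup (flowVals T₁ φ₁ t))
      (nhdsWithin 0 (Set.Ioi 0)) (nhds 0) :=
  stmt16_general ψ₁ ψ₂ L α hα hLip₁ hLip₂ hneg hint hnonexp hbdd T₁ T₂ φ₁ φ₂ hT₁pos hinit₁ hmem₁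
    hder₁ hmax₁ hT₂pos hinit₂ hmem₂ hder₂ hmax₂
end

section
/- Let ψ₁, ψ₂ : (0,∞) → ℝ be locally Lipschitz with ψ₁(x) < 0 for all large x, ∫^∞ dx/|ψ₁(x)| < ∞, and ψ₂(x)/ψ₁(x) → 1 as x → ∞. Then ∫^∞ dx/|ψ₂(x)| < ∞ and the flow φ₂ of ψ₂ comes down from infinity (φ₂(∞,t) < ∞ for all small t > 0). If moreover there exist α > 0 and c > 0 such that φ₁(∞,t) ∼ c t^{−α} as t → 0+, then also φ₂(∞,t) ∼ c t^{−α} as t → 0+. -/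
/-
Where `ψ < 0`, the descent time `D(z) = ∫_z^∞ dx/|ψ x|` grows at unit speed along the flow:
`D(φ(x₀,t)) = D(x₀) + t`. A flow line started high enough therefore stays high on `[0,t]`, and
no flow line can sit above the level `z` with `D(z) = t` at time `t`; so `φ(∞,t) = D⁻¹(t)` for
small `t`. If `ψ₂ ∼ ψ₁`, then `D₁ ≤ k D₂` and `D₂ ≤ k D₁` near `∞` for every `k > 1`, whence
`φ₁(∞,kt) ≤ φ₂(∞,t)` and `φ₂(∞,kt) ≤ φ₁(∞,t)` for small `t`. When `φ₁(∞,t) ∼ c t^(-α)`, letting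
`k → 1` squeezes `φ₂(∞,t) / (c t^(-α))` to `1`.
-/

open Real Set Filter MeasureTheory ENNReal

open Topology

lemma continuousOn_of_forall_exists_lipschitzOnWith {α β : Type*} [PseudoEMetricSpace α]
    [PseudoEMetricSpace β] {f : α → β} {s : Set α}
    (h : ∀ x ∈ s, ∃ t ∈ 𝓝[s] x, ∃ K : NNReal, LipschitzOnWith K f t) : ContinuousOn f s :=
  LocallyLipschitzOn.continuousOn fun x hx =>
    let ⟨t, ht, K, hK⟩ := h x hx
    ⟨K, t, ht, hK⟩

lemma forall_mem_Icc_of_continuation {P : ℝ → Prop} {a b : ℝ}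
    (hlim : ∀ τ ∈ Icc a b, (∀ u ∈ Ico a τ, P u) → P τ)
    (hstep : ∀ τ ∈ Ico a b, (∀ u ∈ Icc a τ, P u) → ∀ᶠ u in 𝓝[>] τ, P u) :
    ∀ u ∈ Icc a b, P u := by
  intro u hu
  set S := {s ∈ Icc a b | ∀ u ∈ Icc a s, P u}
  have haS : a ∈ S := ⟨⟨le_rfl, hu.1.trans hu.2⟩, fun u hu' => by
    obtain rfl : u = a := le_antisymm hu'.2 hu'.1
    exact hlim u ⟨le_rfl, hu.1.trans hu.2⟩ fun v hv => absurd hv.2 (not_lt.2 hv.1)⟩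
  have hSbdd : BddAbove S := ⟨b, fun s hs => hs.1.2⟩
  set τ := sSup S
  have hτ : τ ∈ Icc a b := ⟨le_csSup hSbdd haS, csSup_le ⟨a, haS⟩ fun s hs => hs.1.2⟩
  have hbelow : ∀ v ∈ Ico a τ, P v := fun v hv => by
    obtain ⟨s, hs, hvs⟩ := exists_lt_of_lt_csSup ⟨a, haS⟩ hv.2
    exact hs.2 v ⟨hv.1, hvs.le⟩
  have hτS : ∀ v ∈ Icc a τ, P v := fun v hv =>
    hv.2.lt_or_eq.elim (fun h => hbelow v ⟨hv.1, h⟩) fun h => h ▸ hlim τ hτ hbelow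
  suffices τ = b from hτS u (this ▸ hu)
  by_contra hτb
  have hτb' : τ < b := hτ.2.lt_of_ne hτb
  obtain ⟨m, hτm, hm⟩ := (mem_nhdsGT_iff_exists_Ioo_subset' hτb').1
    (hstep τ ⟨hτ.1, hτb'⟩ hτS)
  obtain ⟨s, hτs, hs⟩ := exists_between (lt_min hτm hτb')
  have hsS : s ∈ S := by
    refine ⟨⟨hτ.1.trans hτs.le, hs.le.trans (min_le_right _ _)⟩, fun v hv => ?_⟩
    rcases le_or_gt v τ with hvτ | hτv
    · exact hτS v ⟨hv.1, hvτ⟩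
    · exact hm ⟨hτv, hv.2.trans_lt (hs.trans_le (min_le_left _ _))⟩
  exact (le_csSup hSbdd hsS).not_gt hτs

lemma exists_mem_Icc_forall_le_of_continuousOn {f : ℝ → ℝ} {s t c : ℝ}
    (hf : ContinuousOn f (Icc s t)) (hst : s ≤ t) (hc : c ≤ f t) :
    ∃ s₀ ∈ Icc s t, (s₀ = s ∨ f s₀ = c) ∧ ∀ u ∈ Icc s₀ t, c ≤ f u := by
  by_cases hall : ∀ u ∈ Icc s t, c ≤ f u
  · exact ⟨s, ⟨le_rfl, hst⟩, Or.inl rfl, hall⟩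
  push Not at hall
  obtain ⟨u₁, hu₁, hfu₁⟩ := hall
  set Q := {u ∈ Icc s t | f u ≤ c}
  have hQbdd : BddAbove Q := ⟨t, fun u hu => hu.1.2⟩
  have hs₀ : sSup Q ∈ Q :=
    (hf.preimage_isClosed_of_isClosed isClosed_Icc isClosed_Iic).csSup_mem ⟨u₁, hu₁, hfu₁.le⟩ hQbdd
  obtain ⟨v, hv, hfv⟩ := intermediate_value_Icc hs₀.1.2 (hf.mono (Icc_subset_Icc_left hs₀.1.1))
    ⟨hs₀.2, hc⟩
  have hvs₀ : v = sSup Q := le_antisymm (le_csSup hQbdd ⟨⟨hs₀.1.1.trans hv.1, hv.2⟩, hfv.le⟩) hv.1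
  refine ⟨sSup Q, hs₀.1, Or.inr (hvs₀ ▸ hfv), fun u hu => ?_⟩
  by_contra! hfu
  have huv : u = v := hvs₀ ▸ le_antisymm (le_csSup hQbdd ⟨⟨hs₀.1.1.trans hu.1, hu.2⟩, hfu.le⟩) hu.1
  exact hfu.ne (huv ▸ hfv)

lemma continuousOn_one_div_abs_s17 {ψ : ℝ → ℝ} {s : Set ℝ} (hc : ContinuousOn ψ s)
    (hne : ∀ x ∈ s, ψ x ≠ 0) : ContinuousOn (fun x => 1 / |ψ x|) s :=
  continuousOn_const.div hc.abs fun x hx => abs_ne_zero.2 (hne x hx)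

lemma one_div_abs_le_mul_one_div_abs {p q k : ℝ} (hq : q ≠ 0) (h : |q| ≤ k * |p|) :
    1 / |p| ≤ k * (1 / |q|) := by
  rcases eq_or_ne p 0 with rfl | hp
  · simp only [abs_zero, mul_zero] at h
    exact absurd h (abs_pos.2 hq).not_ge
  rw [mul_one_div, div_le_div_iff₀ (abs_pos.2 hp) (abs_pos.2 hq)]
  linarith

lemma eventually_abs_le_mul_abs {α : Type*} {f g : α → ℝ} {l : Filter α} {k : ℝ}
    (h : Tendsto (fun x => f x / g x) l (𝓝 1)) (hk : 1 < k) :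
    ∀ᶠ x in l, |f x| ≤ k * |g x| := by
  filter_upwards [h.eventually (Ioo_mem_nhds zero_lt_one hk)] with x ⟨hpos, hlt⟩
  have hg : g x ≠ 0 := by
    rintro hg
    simp [hg] at hpos
  rw [← div_le_iff₀ (abs_pos.2 hg), ← abs_div, abs_of_pos hpos]
  exact hlt.le

lemma tendsto_comp_mul_div_rpow {S : ℝ → ℝ} {c α k : ℝ} (hk : 0 < k)
    (h : Tendsto (fun t => S t / (c * t ^ (-α))) (𝓝[>] 0) (𝓝 1)) :
    Tendsto (fun t => S (k * t) / (c * t ^ (-α))) (𝓝[>] 0) (𝓝 (k ^ (-α))) := by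
  have hmul : Tendsto (k * ·) (𝓝[>] (0 : ℝ)) (𝓝[>] 0) :=
    tendsto_iff_comap.2 (comap_mulLeft_nhdsGT_zero hk).ge
  have := (h.comp hmul).mul_const (k ^ (-α))
  rw [one_mul] at this
  refine this.congr' ?_
  filter_upwards [self_mem_nhdsWithin] with t (ht : 0 < t)
  simp only [Function.comp_apply, mul_rpow hk.le ht.le]
  field_simp

lemma tendsto_div_rpow_of_eventually_le {S₁ S₂ : ℝ → ℝ} {c α : ℝ} (hc : 0 < c)
    (h₁ : Tendsto (fun t => S₁ t / (c * t ^ (-α))) (𝓝[>] 0) (𝓝 1))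
    (h₁₂ : ∀ k > 1, ∀ᶠ t in 𝓝[>] 0, S₁ (k * t) ≤ S₂ t)
    (h₂₁ : ∀ k > 1, ∀ᶠ t in 𝓝[>] 0, S₂ (k * t) ≤ S₁ t) :
    Tendsto (fun t => S₂ t / (c * t ^ (-α))) (𝓝[>] 0) (𝓝 1) := by
  have hdiv : ∀ᶠ t in 𝓝[>] (0 : ℝ), ∀ x y : ℝ, x ≤ y →
      x / (c * t ^ (-α)) ≤ y / (c * t ^ (-α)) := by
    filter_upwards [self_mem_nhdsWithin] with t (ht : 0 < t) x y hxy
    exact div_le_div_of_nonneg_right hxy (mul_pos hc (rpow_pos_of_pos ht _)).le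
  refine tendsto_order.2 ⟨fun b hb => ?_, fun b hb => ?_⟩
  · have hcont : ContinuousAt (fun k : ℝ => k ^ (-α)) 1 :=
      continuousAt_rpow_const _ _ (Or.inl one_ne_zero)
    obtain ⟨k, hbk, hk⟩ := (((hcont.eventually (lt_mem_nhds (by simpa using hb))).filter_mono
      nhdsWithin_le_nhds).and (self_mem_nhdsWithin (s := Ioi 1))).exists
    filter_upwards [(tendsto_comp_mul_div_rpow (zero_lt_one.trans hk) h₁).eventually
      (lt_mem_nhds hbk), h₁₂ k hk, hdiv] with t hb₁ h₁₂t hdivt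
    exact hb₁.trans_le (hdivt _ _ h₁₂t)
  · have hcont : ContinuousAt (fun k : ℝ => k⁻¹ ^ (-α)) 1 :=
      ((continuousAt_inv₀ one_ne_zero).rpow_const (Or.inl (by norm_num)))
    obtain ⟨k, hbk, hk⟩ := (((hcont.eventually (gt_mem_nhds (by simpa using hb))).filter_mono
      nhdsWithin_le_nhds).and (self_mem_nhdsWithin (s := Ioi 1))).exists
    have hk₀ : 0 < k := zero_lt_one.trans hk
    filter_upwards [(tendsto_comp_mul_div_rpow (inv_pos.2 hk₀) h₁).eventually (gt_mem_nhds hbk),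
      eventually_nhdsGT_zero_mul_left (inv_pos.2 hk₀) (h₂₁ k hk), hdiv] with t hb₁ h₂₁t hdivt
    rw [mul_inv_cancel_left₀ hk₀.ne'] at h₂₁t
    exact (hdivt _ _ h₂₁t).trans_lt hb₁

structure ComesDownAbove (ψ : ℝ → ℝ) (a : ℝ) : Prop where
  continuousOn : ContinuousOn ψ (Ioi a)
  neg : ∀ x > a, ψ x < 0
  integrableOn : IntegrableOn (fun x => 1 / |ψ x|) (Ioi a)

/-- The time the flow of `ψ` needs to come down from `+∞` to `z`. -/
noncomputable def descentTime (ψ : ℝ → ℝ) (z : ℝ) : ℝ := ∫ x in Ioi z, 1 / |ψ x|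

lemma descentTime_nonneg (ψ : ℝ → ℝ) (z : ℝ) : 0 ≤ descentTime ψ z :=
  setIntegral_nonneg measurableSet_Ioi fun _ _ => by positivity

namespace ComesDownAbove

variable {ψ : ℝ → ℝ} {a : ℝ} (h : ComesDownAbove ψ a)
include h

lemma mono {b : ℝ} (hab : a ≤ b) : ComesDownAbove ψ b where
  continuousOn := h.continuousOn.mono (Ioi_subset_Ioi hab)
  neg x hx := h.neg x (hab.trans_lt hx)
  integrableOn := h.integrableOn.mono_set (Ioi_subset_Ioi hab)

lemma descentTime_eq_integral_add {y z : ℝ} (hy : a ≤ y) (hyz : y ≤ z) :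
    descentTime ψ y = (∫ x in Ioc y z, 1 / |ψ x|) + descentTime ψ z := by
  have hint := (h.mono hy).integrableOn
  rw [descentTime, descentTime, ← Ioc_union_Ioi_eq_Ioi hyz,
    setIntegral_union (Ioc_disjoint_Ioi le_rfl) measurableSet_Ioi
      (hint.mono_set Ioc_subset_Ioi_self) (hint.mono_set (Ioi_subset_Ioi hyz))]

lemma descentTime_strictAntiOn : StrictAntiOn (descentTime ψ) (Ici a) := by
  intro y hy z _ hyz
  have hpos : 0 < ∫ x in Ioc y z, 1 / |ψ x| := by
    have hint : IntervalIntegrable (fun x => 1 / |ψ x|) volume y z :=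
      (intervalIntegrable_iff_integrableOn_Ioc_of_le hyz.le).2
        ((h.mono hy).integrableOn.mono_set Ioc_subset_Ioi_self)
    rw [← intervalIntegral.integral_of_le hyz.le]
    refine intervalIntegral.intervalIntegral_pos_of_pos_on hint (fun x hx => ?_) hyz
    exact one_div_pos.2 (abs_pos.2 (h.neg x (hy.trans_lt hx.1)).ne)
  linarith [h.descentTime_eq_integral_add hy hyz.le]

lemma descentTime_pos {z : ℝ} (hz : a ≤ z) : 0 < descentTime ψ z :=
  (descentTime_nonneg ψ (z + 1)).trans_lt
    (h.descentTime_strictAntiOn hz (show a ≤ z + 1 by linarith) (by linarith))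

lemma tendsto_descentTime_atTop : Tendsto (descentTime ψ) atTop (𝓝 0) := by
  have := tendsto_setIntegral_of_antitone (μ := volume) (f := fun x => 1 / |ψ x|)
    (fun _ => measurableSet_Ioi) (fun _ _ hyz => Ioi_subset_Ioi hyz) ⟨a, h.integrableOn⟩
  have hempty : ⋂ z : ℝ, Ioi z = ∅ := iInter_eq_empty_iff.2 fun x => ⟨x, lt_irrefl x⟩
  rwa [hempty, Measure.restrict_empty, integral_zero_measure] at this

lemma hasDerivAt_descentTime {z : ℝ} (hz : a < z) :
    HasDerivAt (descentTime ψ) (ψ z)⁻¹ z := by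
  have hcont := continuousOn_one_div_abs_s17 h.continuousOn fun x hx => (h.neg x hx).ne
  have hFTC := intervalIntegral.integral_hasDerivAt_right
    ((intervalIntegrable_iff_integrableOn_Ioc_of_le hz.le).2
      (h.integrableOn.mono_set Ioc_subset_Ioi_self))
    (hcont.stronglyMeasurableAtFilter isOpen_Ioi _ hz)
    (hcont.continuousAt (isOpen_Ioi.mem_nhds hz))
  have hval : 1 / |ψ z| = -(ψ z)⁻¹ := by
    rw [abs_of_neg (h.neg z hz), one_div, inv_neg]
  rw [hval] at hFTC
  refine (((hasDerivAt_const z (descentTime ψ a)).sub hFTC).congr_of_eventuallyEq ?_).congr_deriv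
    (by ring)
  filter_upwards [Ioi_mem_nhds hz] with y hy
  show descentTime ψ y = descentTime ψ a - ∫ x in a..y, 1 / |ψ x|
  rw [h.descentTime_eq_integral_add le_rfl hy.le, intervalIntegral.integral_of_le hy.le]
  ring

lemma continuousOn_descentTime : ContinuousOn (descentTime ψ) (Ioi a) := fun _ hz =>
  (h.hasDerivAt_descentTime hz).continuousAt.continuousWithinAt

lemma exists_descentTime_eq {A t : ℝ} (hA : a < A) (ht : 0 < t) (htA : t < descentTime ψ A) :
    ∃ z, A < z ∧ descentTime ψ z = t := by
  obtain ⟨C, hCt, hAC⟩ :=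
    ((h.tendsto_descentTime_atTop.eventually_lt_const ht).and (eventually_ge_atTop A)).exists
  obtain ⟨z, hz, hzt⟩ := intermediate_value_Icc' hAC
    (h.continuousOn_descentTime.mono fun x hx => hA.trans_le hx.1) ⟨hCt.le, htA.le⟩
  exact ⟨z, hz.1.lt_of_ne (by rintro rfl; linarith), hzt⟩

end ComesDownAbove

lemma eventually_comesDownAbove {ψ : ℝ → ℝ} {b u : ℝ} (hc : ContinuousOn ψ (Ioi b))
    (hneg : ∀ᶠ x in atTop, ψ x < 0) (hint : IntegrableOn (fun x => 1 / |ψ x|) (Ioi u)) :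
    ∀ᶠ a in atTop, ComesDownAbove ψ a := by
  filter_upwards [eventually_forall_ge_atTop.2 hneg, eventually_ge_atTop b,
    eventually_ge_atTop u] with a hneg' hb hu
  exact ⟨hc.mono (Ioi_subset_Ioi hb), fun x hx => hneg' x hx.le,
    hint.mono_set (Ioi_subset_Ioi hu)⟩

lemma eventually_comesDownAbove_of_tendsto_div {ψ₁ ψ₂ : ℝ → ℝ} {b : ℝ}
    (h₁ : ∀ᶠ a in atTop, ComesDownAbove ψ₁ a) (hc : ContinuousOn ψ₂ (Ioi b))
    (h : Tendsto (fun x => ψ₂ x / ψ₁ x) atTop (𝓝 1)) :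
    ∀ᶠ a in atTop, ComesDownAbove ψ₂ a := by
  have h' : Tendsto (fun x => ψ₁ x / ψ₂ x) atTop (𝓝 1) := by
    simpa using h.inv₀ one_ne_zero
  obtain ⟨a, ha, hab, hpos, hle⟩ := (h₁.and ((eventually_ge_atTop b).and
    ((eventually_forall_ge_atTop.2 (h.eventually (lt_mem_nhds zero_lt_one))).and
      (eventually_forall_ge_atTop.2 (eventually_abs_le_mul_abs h' one_lt_two))))).exists
  have hneg : ∀ x > a, ψ₂ x < 0 := fun x hx => by
    rw [← div_mul_cancel₀ (ψ₂ x) (ha.neg x hx).ne]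
    exact mul_neg_of_pos_of_neg (hpos x hx.le) (ha.neg x hx)
  have hc' : ContinuousOn ψ₂ (Ioi a) := hc.mono (Ioi_subset_Ioi hab)
  refine eventually_atTop.2 ⟨a, fun a' ha' => ComesDownAbove.mono ⟨hc', hneg, ?_⟩ ha'⟩
  refine Integrable.mono' (ha.integrableOn.const_mul 2)
    ((continuousOn_one_div_abs_s17 hc' fun x hx => (hneg x hx).ne).aestronglyMeasurable
      measurableSet_Ioi) ?_
  filter_upwards [ae_restrict_mem measurableSet_Ioi] with x hx
  rw [Real.norm_of_nonneg (by positivity)]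
  exact one_div_abs_le_mul_one_div_abs (ha.neg x hx).ne (hle x (le_of_lt hx))

lemma eventually_descentTime_le_mul {ψ₁ ψ₂ : ℝ → ℝ} {k : ℝ}
    (h₁ : ∀ᶠ a in atTop, ComesDownAbove ψ₁ a) (h₂ : ∀ᶠ a in atTop, ComesDownAbove ψ₂ a)
    (hle : ∀ᶠ x in atTop, |ψ₂ x| ≤ k * |ψ₁ x|) :
    ∀ᶠ z in atTop, descentTime ψ₁ z ≤ k * descentTime ψ₂ z := by
  obtain ⟨a, ha₁, ha₂, hak⟩ := (h₁.and (h₂.and (eventually_forall_ge_atTop.2 hle))).exists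
  filter_upwards [eventually_ge_atTop a] with z hz
  rw [descentTime, descentTime, ← integral_const_mul]
  exact setIntegral_mono_on (ha₁.mono hz).integrableOn
    ((ha₂.mono hz).integrableOn.const_mul k) measurableSet_Ioi fun x hx =>
      one_div_abs_le_mul_one_div_abs (ha₂.neg x (hz.trans_lt hx)).ne (hak x (hz.trans hx.le))

structure IsMaximalFlow_s17 (ψ : ℝ → ℝ) (T : ℝ → ℝ≥0∞) (φ : ℝ → ℝ → ℝ) : Prop where
  lifetime_pos : ∀ x₀ ∈ Ioi (0 : ℝ), 0 < T x₀
  initial : ∀ x₀ ∈ Ioi (0 : ℝ), φ x₀ 0 = x₀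
  hasDerivAt : ∀ x₀ ∈ Ioi (0 : ℝ), ∀ t : ℝ, 0 ≤ t → ENNReal.ofReal t < T x₀ →
    HasDerivAt (φ x₀) (ψ (φ x₀ t)) t
  eventually_notMem : ∀ x₀ ∈ Ioi (0 : ℝ), T x₀ ≠ ⊤ → ∀ K : Set ℝ, IsCompact K →
    K ⊆ Ioi (0 : ℝ) → ∀ᶠ t in 𝓝[<] (T x₀).toReal, φ x₀ t ∉ K

namespace IsMaximalFlow_s17

variable {ψ : ℝ → ℝ} {T : ℝ → ℝ≥0∞} {φ : ℝ → ℝ → ℝ} (hφ : IsMaximalFlow_s17 ψ T φ)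
include hφ

lemma ofReal_lt_of_forall_mem {x₀ τ : ℝ} (hx₀ : 0 < x₀) {K : Set ℝ} (hK : IsCompact K)
    (hK₀ : K ⊆ Ioi 0) (hτ : ∀ u ∈ Ico 0 τ, φ x₀ u ∈ K) : ENNReal.ofReal τ < T x₀ := by
  by_contra! hTτ
  have hT₀ := hφ.lifetime_pos x₀ hx₀
  have hTtop : T x₀ ≠ ⊤ := ne_top_of_le_ne_top ofReal_ne_top hTτ
  have hTpos : 0 < (T x₀).toReal := toReal_pos hT₀.ne' hTtop
  have hTle : (T x₀).toReal ≤ τ :=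
    toReal_le_of_le_ofReal (ofReal_pos.1 (hT₀.trans_le hTτ)).le hTτ
  obtain ⟨u, hu, huK⟩ := ((hφ.eventually_notMem x₀ hx₀ hTtop K hK hK₀).and
    (Ioo_mem_nhdsLT hTpos)).exists
  exact hu (hτ u ⟨huK.1.le, huK.2.trans_le hTle⟩)

lemma continuousOn_Icc {x₀ t : ℝ} (hx₀ : 0 < x₀) (ht : ENNReal.ofReal t < T x₀) :
    ContinuousOn (φ x₀) (Icc 0 t) := fun s hs =>
  (hφ.hasDerivAt x₀ hx₀ s hs.1
    ((ofReal_le_ofReal hs.2).trans_lt ht)).continuousAt.continuousWithinAt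

end IsMaximalFlow_s17

section FlowFromInfinity

variable {ψ : ℝ → ℝ} {a : ℝ} {T : ℝ → ℝ≥0∞} {φ : ℝ → ℝ → ℝ}

lemma descentTime_flow_eq (h : ComesDownAbove ψ a) (hφ : IsMaximalFlow_s17 ψ T φ) {x₀ u v : ℝ}
    (hx₀ : 0 < x₀) (hu : 0 ≤ u) (huv : u ≤ v)
    (hall : ∀ s ∈ Icc u v, ENNReal.ofReal s < T x₀ ∧ a < φ x₀ s) :
    descentTime ψ (φ x₀ v) = descentTime ψ (φ x₀ u) + (v - u) := by
  have hderiv : ∀ s ∈ Icc u v, HasDerivAt (fun r => descentTime ψ (φ x₀ r) - r) 0 s := by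
    intro s hs
    obtain ⟨hsT, hsa⟩ := hall s hs
    have := ((h.hasDerivAt_descentTime hsa).comp s
      (hφ.hasDerivAt x₀ hx₀ s (hu.trans hs.1) hsT)).sub (hasDerivAt_id s)
    rwa [inv_mul_cancel₀ (h.neg _ hsa).ne, sub_self] at this
  have := constant_of_has_deriv_right_zero
    (fun s hs => (hderiv s hs).continuousAt.continuousWithinAt)
    (fun s hs => (hderiv s (Ico_subset_Icc_self hs)).hasDerivWithinAt) v (right_mem_Icc.2 huv)
  linarith

lemma flow_ge_of_descentTime_add_lt (h : ComesDownAbove ψ a) (ha : 0 ≤ a)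
    (hφ : IsMaximalFlow_s17 ψ T φ) {A x₀ t : ℝ} (hA : a < A) (hAx₀ : A ≤ x₀)
    (hbudget : descentTime ψ x₀ + t < descentTime ψ A) :
    ∀ s ∈ Icc 0 t, ENNReal.ofReal s < T x₀ ∧ A ≤ φ x₀ s := by
  have hA₀ : 0 < A := ha.trans_lt hA
  have hx₀ : 0 < x₀ := hA₀.trans_le hAx₀
  have hbound : ∀ s ∈ Icc 0 t, (∀ u ∈ Icc 0 s, ENNReal.ofReal u < T x₀ ∧ A ≤ φ x₀ u) →
      A < φ x₀ s ∧ φ x₀ s ≤ x₀ := by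
    intro s hs hgood
    have hid := descentTime_flow_eq h hφ hx₀ le_rfl hs.1
      fun u hu => ⟨(hgood u hu).1, hA.trans_le (hgood u hu).2⟩
    rw [hφ.initial x₀ hx₀, sub_zero] at hid
    have hφs : φ x₀ s ∈ Ici a := hA.le.trans (hgood s ⟨hs.1, le_rfl⟩).2
    exact ⟨(h.descentTime_strictAntiOn.lt_iff_gt hφs hA.le).1 (by linarith [hs.2]),
      (h.descentTime_strictAntiOn.le_iff_ge (hA.le.trans hAx₀) hφs).1 (by linarith [hs.1])⟩
  refine forall_mem_Icc_of_continuation (fun τ hτ hbelow => ?_) fun τ hτ hgood => ?_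
  · -- before `τ` the flow stays in the compact `[A, x₀]`, so it cannot die at `τ`
    have hτT : ENNReal.ofReal τ < T x₀ :=
      hφ.ofReal_lt_of_forall_mem hx₀ isCompact_Icc (fun y hy => hA₀.trans_le hy.1)
        fun u hu => (hbound u ⟨hu.1, hu.2.le.trans hτ.2⟩
          fun v hv => hbelow v ⟨hv.1, hv.2.trans_lt hu.2⟩).imp le_of_lt id
    refine ⟨hτT, ?_⟩
    rcases hτ.1.eq_or_lt with rfl | hτ₀
    · rw [hφ.initial x₀ hx₀]
      exact hAx₀
    · refine ge_of_tendsto ((hφ.hasDerivAt x₀ hx₀ τ hτ.1 hτT).continuousAt.tendsto.mono_left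
        (nhdsWithin_le_nhds (s := Iio τ))) ?_
      filter_upwards [Ioo_mem_nhdsLT hτ₀] with u hu
      exact (hbelow u ⟨hu.1.le, hu.2⟩).2
  · have hτT := (hgood τ ⟨hτ.1, le_rfl⟩).1
    have hAτ := (hbound τ ⟨hτ.1, hτ.2.le⟩ hgood).1
    refine nhdsWithin_le_nhds ?_
    filter_upwards [(ENNReal.continuous_ofReal.tendsto τ).eventually_lt_const hτT,
      (hφ.hasDerivAt x₀ hx₀ τ hτ.1 hτT).continuousAt.eventually (lt_mem_nhds hAτ)]
      with u hu hAu
    exact ⟨hu, hAu.le⟩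

lemma exists_flow_ge (h : ComesDownAbove ψ a) (ha : 0 ≤ a) (hφ : IsMaximalFlow_s17 ψ T φ)
    {w t : ℝ} (hw : a < w) (ht : 0 ≤ t) (htw : t < descentTime ψ w) (M : ℝ) :
    ∃ x₀, 0 < x₀ ∧ M ≤ x₀ ∧ ENNReal.ofReal t < T x₀ ∧ w ≤ φ x₀ t := by
  obtain ⟨x₀, hDx₀, hx₀⟩ := ((h.tendsto_descentTime_atTop.eventually_lt_const
    (sub_pos.2 htw)).and (eventually_ge_atTop (max M w))).exists
  have hx₀w : w ≤ x₀ := le_of_max_le_right hx₀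
  exact ⟨x₀, (ha.trans_lt hw).trans_le hx₀w, le_of_max_le_left hx₀,
    flow_ge_of_descentTime_add_lt h ha hφ hw hx₀w (by linarith) t ⟨ht, le_rfl⟩⟩

lemma flow_le_max_of_descentTime_lt (h : ComesDownAbove ψ a) (hφ : IsMaximalFlow_s17 ψ T φ)
    {b B t x₀ : ℝ} (hb : a < b) (hB : a ≤ B) (hBt : descentTime ψ B < t) (hx₀ : 0 < x₀)
    (ht : ENNReal.ofReal t < T x₀) : φ x₀ t ≤ max b B := by
  have ht₀ : 0 < t := (descentTime_nonneg ψ B).trans_lt hBt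
  by_contra! hgt
  have hbφ : b < φ x₀ t := (le_max_left _ _).trans_lt hgt
  have hφt : φ x₀ t ∈ Ici a := hb.le.trans hbφ.le
  -- look at the flow since its last visit to `b` (or since time `0`)
  obtain ⟨s₀, hs₀, hs₀b, hge⟩ := exists_mem_Icc_forall_le_of_continuousOn
    (hφ.continuousOn_Icc hx₀ ht) ht₀.le hbφ.le
  have hid := descentTime_flow_eq h hφ hx₀ hs₀.1 hs₀.2
    fun s hs => ⟨(ofReal_le_ofReal hs.2).trans_lt ht, hb.trans_le (hge s hs)⟩
  rcases hs₀b with rfl | hφs₀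
  · rw [hφ.initial x₀ hx₀] at hid
    have := (h.descentTime_strictAntiOn.lt_iff_gt hB hφt).1
      (by linarith [descentTime_nonneg ψ x₀])
    linarith [le_max_right b B]
  · rw [hφs₀] at hid
    have := (h.descentTime_strictAntiOn.le_iff_ge hb.le hφt).1 (by linarith [hs₀.2])
    linarith [le_max_left b B]

lemma isLUB_flowVals (h : ComesDownAbove ψ a) (ha : 0 ≤ a) (hφ : IsMaximalFlow_s17 ψ T φ)
    {A t : ℝ} (hA : a < A) (ht : 0 < t) (htA : t < descentTime ψ A) :
    ∃ z, A < z ∧ descentTime ψ z = t ∧ IsLUB (flowVals T φ t) z := by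
  obtain ⟨z, hAz, hzt⟩ := h.exists_descentTime_eq hA ht htA
  have hanti := h.descentTime_strictAntiOn
  have hza : z ∈ Ici a := hA.le.trans hAz.le
  refine ⟨z, hAz, hzt, ?_, fun ub hub => le_of_forall_lt fun c hc => ?_⟩
  · rintro _ ⟨x₀, hx₀, hT, rfl⟩
    refine le_of_forall_gt_imp_ge_of_dense fun z' hz' => ?_
    have hz'a : a ≤ z' := hza.trans hz'.le
    exact (flow_le_max_of_descentTime_lt h hφ hA hz'a (hzt ▸ hanti hza hz'a hz') hx₀ hT).trans
      (max_le (hAz.trans hz').le le_rfl)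
  · obtain ⟨w, hw, hwz⟩ := exists_between (max_lt hc hAz)
    have hAw : A < w := (le_max_right c A).trans_lt hw
    obtain ⟨x₀, hx₀, -, hT, hwφ⟩ := exists_flow_ge h ha hφ (hA.trans hAw) ht.le
      (hzt ▸ hanti (hA.trans hAw).le hza hwz) 0
    exact ((le_max_left c A).trans_lt hw).trans_le (hwφ.trans (hub ⟨x₀, hx₀, hT, rfl⟩))

lemma eventually_descentTime_sSup_flowVals (h : ∀ᶠ a in atTop, ComesDownAbove ψ a)
    (hφ : IsMaximalFlow_s17 ψ T φ) (A : ℝ) :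
    ∀ᶠ t in 𝓝[>] 0, A < sSup (flowVals T φ t) ∧ descentTime ψ (sSup (flowVals T φ t)) = t := by
  obtain ⟨a, ha, ha₀⟩ := (h.and (eventually_ge_atTop 0)).exists
  have haA : a < max A (a + 1) := (lt_add_one a).trans_le (le_max_right _ _)
  filter_upwards [Ioo_mem_nhdsGT (ha.descentTime_pos haA.le)] with t ht
  obtain ⟨z, hz, hzt, hlub⟩ := isLUB_flowVals ha ha₀ hφ haA ht.1 ht.2
  rw [hlub.csSup_eq hlub.nonempty]
  exact ⟨(le_max_left _ _).trans_lt hz, hzt⟩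

end FlowFromInfinity

lemma eventually_sSup_flowVals_le {ψ₁ ψ₂ : ℝ → ℝ} {T₁ T₂ : ℝ → ℝ≥0∞} {φ₁ φ₂ : ℝ → ℝ → ℝ}
    (h₁ : ∀ᶠ a in atTop, ComesDownAbove ψ₁ a) (h₂ : ∀ᶠ a in atTop, ComesDownAbove ψ₂ a)
    (hφ₁ : IsMaximalFlow_s17 ψ₁ T₁ φ₁) (hφ₂ : IsMaximalFlow_s17 ψ₂ T₂ φ₂) {k : ℝ} (hk : 0 < k)
    (hD : ∀ᶠ z in atTop, descentTime ψ₁ z ≤ k * descentTime ψ₂ z) :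
    ∀ᶠ t in 𝓝[>] 0, sSup (flowVals T₁ φ₁ (k * t)) ≤ sSup (flowVals T₂ φ₂ t) := by
  obtain ⟨A, hA, hAD⟩ := (h₁.and (eventually_forall_ge_atTop.2 hD)).exists
  filter_upwards [eventually_descentTime_sSup_flowVals h₂ hφ₂ A,
    eventually_nhdsGT_zero_mul_left hk (eventually_descentTime_sSup_flowVals h₁ hφ₁ A)]
    with t ⟨hA₂, hD₂⟩ ⟨hA₁, hD₁⟩
  refine (hA.descentTime_strictAntiOn.le_iff_ge hA₂.le hA₁.le).1 ?_
  calc descentTime ψ₁ (sSup (flowVals T₂ φ₂ t))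
      ≤ k * descentTime ψ₂ (sSup (flowVals T₂ φ₂ t)) := hAD _ hA₂.le
    _ = descentTime ψ₁ (sSup (flowVals T₁ φ₁ (k * t))) := by rw [hD₂, hD₁]

theorem stmt17_general (ψ₁ ψ₂ : ℝ → ℝ)
    (hLip₁ : ∀ x ∈ Set.Ioi (0 : ℝ), ∃ s ∈ nhdsWithin x (Set.Ioi (0 : ℝ)),
      ∃ K : NNReal, LipschitzOnWith K ψ₁ s)
    (hLip₂ : ∀ x ∈ Set.Ioi (0 : ℝ), ∃ s ∈ nhdsWithin x (Set.Ioi (0 : ℝ)),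
      ∃ K : NNReal, LipschitzOnWith K ψ₂ s)
    (hneg : ∃ x₁ : ℝ, ∀ x : ℝ, x₁ ≤ x → ψ₁ x < 0)
    (hint : ∃ u ∈ Set.Ioi (0 : ℝ),
      MeasureTheory.IntegrableOn (fun x => 1 / |ψ₁ x|) (Set.Ioi u))
    (hequiv : Filter.Tendsto (fun x => ψ₂ x / ψ₁ x) Filter.atTop (nhds 1))
    (T₁ T₂ : ℝ → ℝ≥0∞) (φ₁ φ₂ : ℝ → ℝ → ℝ)
    -- `φ₁` is the (maximal) flow of `ψ₁` on `(0,∞)`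
    (hT₁pos : ∀ x₀ ∈ Set.Ioi (0 : ℝ), 0 < T₁ x₀)
    (hinit₁ : ∀ x₀ ∈ Set.Ioi (0 : ℝ), φ₁ x₀ 0 = x₀)
    (hder₁ : ∀ x₀ ∈ Set.Ioi (0 : ℝ), ∀ t : ℝ, 0 ≤ t → ENNReal.ofReal t < T₁ x₀ →
      HasDerivAt (φ₁ x₀) (ψ₁ (φ₁ x₀ t)) t)
    (hmax₁ : ∀ x₀ ∈ Set.Ioi (0 : ℝ), T₁ x₀ ≠ ⊤ → ∀ K : Set ℝ, IsCompact K →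
      K ⊆ Set.Ioi (0 : ℝ) →
      ∀ᶠ t in nhdsWithin (T₁ x₀).toReal (Set.Iio (T₁ x₀).toReal), φ₁ x₀ t ∉ K)
    -- `φ₂` is the (maximal) flow of `ψ₂` on `(0,∞)`
    (hT₂pos : ∀ x₀ ∈ Set.Ioi (0 : ℝ), 0 < T₂ x₀)
    (hinit₂ : ∀ x₀ ∈ Set.Ioi (0 : ℝ), φ₂ x₀ 0 = x₀)
    (hder₂ : ∀ x₀ ∈ Set.Ioi (0 : ℝ), ∀ t : ℝ, 0 ≤ t → ENNReal.ofReal t < T₂ x₀ →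
      HasDerivAt (φ₂ x₀) (ψ₂ (φ₂ x₀ t)) t)
    (hmax₂ : ∀ x₀ ∈ Set.Ioi (0 : ℝ), T₂ x₀ ≠ ⊤ → ∀ K : Set ℝ, IsCompact K →
      K ⊆ Set.Ioi (0 : ℝ) →
      ∀ᶠ t in nhdsWithin (T₂ x₀).toReal (Set.Iio (T₂ x₀).toReal), φ₂ x₀ t ∉ K) :
    (∃ u ∈ Set.Ioi (0 : ℝ),
      MeasureTheory.IntegrableOn (fun x => 1 / |ψ₂ x|) (Set.Ioi u)) ∧
    (∃ tstar > (0 : ℝ), ∀ t ∈ Set.Ioo (0 : ℝ) tstar,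
      (∀ M : ℝ, ∃ x₀ ∈ Set.Ioi (0 : ℝ), M ≤ x₀ ∧ ENNReal.ofReal t < T₂ x₀) ∧
      BddAbove (flowVals T₂ φ₂ t)) ∧
    (∀ α : ℝ, 0 < α → ∀ c : ℝ, 0 < c →
      Filter.Tendsto (fun t : ℝ => sSup (flowVals T₁ φ₁ t) / (c * t ^ (-α)))
        (nhdsWithin 0 (Set.Ioi 0)) (nhds 1) →
      Filter.Tendsto (fun t : ℝ => sSup (flowVals T₂ φ₂ t) / (c * t ^ (-α)))
        (nhdsWithin 0 (Set.Ioi 0)) (nhds 1)) := by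
  have hφ₁ : IsMaximalFlow_s17 ψ₁ T₁ φ₁ := ⟨hT₁pos, hinit₁, hder₁, hmax₁⟩
  have hφ₂ : IsMaximalFlow_s17 ψ₂ T₂ φ₂ := ⟨hT₂pos, hinit₂, hder₂, hmax₂⟩
  obtain ⟨x₁, hx₁⟩ := hneg
  obtain ⟨u, -, hu⟩ := hint
  have h₁ := eventually_comesDownAbove (continuousOn_of_forall_exists_lipschitzOnWith hLip₁)
    (eventually_atTop.2 ⟨x₁, hx₁⟩) hu
  have h₂ := eventually_comesDownAbove_of_tendsto_div h₁
    (continuousOn_of_forall_exists_lipschitzOnWith hLip₂) hequiv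
  have hequiv' : Tendsto (fun x => ψ₁ x / ψ₂ x) atTop (𝓝 1) := by
    simpa using hequiv.inv₀ one_ne_zero
  obtain ⟨a, ha, ha₀⟩ := (h₂.and (eventually_gt_atTop 0)).exists
  refine ⟨⟨a, ha₀, ha.integrableOn⟩, ⟨descentTime ψ₂ (a + 1), ha.descentTime_pos (by linarith),
    fun t ht => ⟨fun M => ?_, ?_⟩⟩, fun α _ c hc hS₁ => ?_⟩
  · obtain ⟨x₀, hx₀, hMx₀, hT, -⟩ := exists_flow_ge ha ha₀.le hφ₂ (lt_add_one a) ht.1.le ht.2 M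
    exact ⟨x₀, hx₀, hMx₀, hT⟩
  · obtain ⟨z, -, -, hz⟩ := isLUB_flowVals ha ha₀.le hφ₂ (lt_add_one a) ht.1 ht.2
    exact hz.bddAbove
  · exact tendsto_div_rpow_of_eventually_le hc hS₁
      (fun k hk => eventually_sSup_flowVals_le h₁ h₂ hφ₁ hφ₂ (zero_lt_one.trans hk)
        (eventually_descentTime_le_mul h₁ h₂ (eventually_abs_le_mul_abs hequiv hk)))
      (fun k hk => eventually_sSup_flowVals_le h₂ h₁ hφ₂ hφ₁ (zero_lt_one.trans hk)
        (eventually_descentTime_le_mul h₂ h₁ (eventually_abs_le_mul_abs hequiv' hk)))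

/-- If `ψ₂ ∼ ψ₁` at infinity and the flow of `ψ₁` comes down from infinity,
then so does the flow of `ψ₂`, with the same polynomial small-time speed
whenever `φ₁(∞,t) ∼ c t^{−α}`. -/
theorem stmt17 (ψ₁ ψ₂ : ℝ → ℝ)
    (hLip₁ : ∀ x ∈ Set.Ioi (0 : ℝ), ∃ s ∈ nhdsWithin x (Set.Ioi (0 : ℝ)),
      ∃ K : NNReal, LipschitzOnWith K ψ₁ s)
    (hLip₂ : ∀ x ∈ Set.Ioi (0 : ℝ), ∃ s ∈ nhdsWithin x (Set.Ioi (0 : ℝ)),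
      ∃ K : NNReal, LipschitzOnWith K ψ₂ s)
    (hneg : ∃ x₁ : ℝ, ∀ x : ℝ, x₁ ≤ x → ψ₁ x < 0)
    (hint : ∃ u ∈ Set.Ioi (0 : ℝ),
      MeasureTheory.IntegrableOn (fun x => 1 / |ψ₁ x|) (Set.Ioi u))
    (hequiv : Filter.Tendsto (fun x => ψ₂ x / ψ₁ x) Filter.atTop (nhds 1))
    (T₁ T₂ : ℝ → ℝ≥0∞) (φ₁ φ₂ : ℝ → ℝ → ℝ)
    -- `φ₁` is the (maximal) flow of `ψ₁` on `(0,∞)`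
    (hT₁pos : ∀ x₀ ∈ Set.Ioi (0 : ℝ), 0 < T₁ x₀)
    (hinit₁ : ∀ x₀ ∈ Set.Ioi (0 : ℝ), φ₁ x₀ 0 = x₀)
    (hmem₁ : ∀ x₀ ∈ Set.Ioi (0 : ℝ), ∀ t : ℝ, 0 ≤ t → ENNReal.ofReal t < T₁ x₀ →
      φ₁ x₀ t ∈ Set.Ioi (0 : ℝ))
    (hder₁ : ∀ x₀ ∈ Set.Ioi (0 : ℝ), ∀ t : ℝ, 0 ≤ t → ENNReal.ofReal t < T₁ x₀ →
      HasDerivAt (φ₁ x₀) (ψ₁ (φ₁ x₀ t)) t)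
    (hmax₁ : ∀ x₀ ∈ Set.Ioi (0 : ℝ), T₁ x₀ ≠ ⊤ → ∀ K : Set ℝ, IsCompact K →
      K ⊆ Set.Ioi (0 : ℝ) →
      ∀ᶠ t in nhdsWithin (T₁ x₀).toReal (Set.Iio (T₁ x₀).toReal), φ₁ x₀ t ∉ K)
    -- `φ₂` is the (maximal) flow of `ψ₂` on `(0,∞)`
    (hT₂pos : ∀ x₀ ∈ Set.Ioi (0 : ℝ), 0 < T₂ x₀)
    (hinit₂ : ∀ x₀ ∈ Set.Ioi (0 : ℝ), φ₂ x₀ 0 = x₀)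
    (hmem₂ : ∀ x₀ ∈ Set.Ioi (0 : ℝ), ∀ t : ℝ, 0 ≤ t → ENNReal.ofReal t < T₂ x₀ →
      φ₂ x₀ t ∈ Set.Ioi (0 : ℝ))
    (hder₂ : ∀ x₀ ∈ Set.Ioi (0 : ℝ), ∀ t : ℝ, 0 ≤ t → ENNReal.ofReal t < T₂ x₀ →
      HasDerivAt (φ₂ x₀) (ψ₂ (φ₂ x₀ t)) t)
    (hmax₂ : ∀ x₀ ∈ Set.Ioi (0 : ℝ), T₂ x₀ ≠ ⊤ → ∀ K : Set ℝ, IsCompact K →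
      K ⊆ Set.Ioi (0 : ℝ) →
      ∀ᶠ t in nhdsWithin (T₂ x₀).toReal (Set.Iio (T₂ x₀).toReal), φ₂ x₀ t ∉ K) :
    (∃ u ∈ Set.Ioi (0 : ℝ),
      MeasureTheory.IntegrableOn (fun x => 1 / |ψ₂ x|) (Set.Ioi u)) ∧
    (∃ tstar > (0 : ℝ), ∀ t ∈ Set.Ioo (0 : ℝ) tstar,
      (∀ M : ℝ, ∃ x₀ ∈ Set.Ioi (0 : ℝ), M ≤ x₀ ∧ ENNReal.ofReal t < T₂ x₀) ∧
      BddAbove (flowVals T₂ φ₂ t)) ∧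
    (∀ α : ℝ, 0 < α → ∀ c : ℝ, 0 < c →
      Filter.Tendsto (fun t : ℝ => sSup (flowVals T₁ φ₁ t) / (c * t ^ (-α)))
        (nhdsWithin 0 (Set.Ioi 0)) (nhds 1) →
      Filter.Tendsto (fun t : ℝ => sSup (flowVals T₂ φ₂ t) / (c * t ^ (-α)))
        (nhdsWithin 0 (Set.Ioi 0)) (nhds 1)) :=
  stmt17_general ψ₁ ψ₂ hLip₁ hLip₂ hneg hint hequiv T₁ T₂ φ₁ φ₂ hT₁pos hinit₁ hder₁ hmax₁ hT₂pos
    hinit₂ hder₂ hmax₂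
end

section
/- Let D ⊆ ℝ^d be open and let ψ and ψ^K (K ≥ 1) be locally Lipschitz vector fields on the closure of D. Assume there exist A ≥ 1, c > 0, μ > 0 and ε ∈ (0,1] such that: (A1) (ψ(x) − ψ(y))·(x − y) ≤ −μ ‖x‖₂ ‖x − y‖₂² for every x ∈ D with ‖x‖₂ ≥ A and every y ∈ D with ‖y − x‖₂ ≤ ε; (A2) ‖ψ(x) − ψ^K(x)‖₂ ≤ c (1 + ‖x‖₂)/K for every x ∈ D and K ≥ 1. Let φ and φ^K be the flows of ψ and ψ^K, with T_D(x₀) and T^K_D(x₁) the maximal times during which they remain in D, and T_{D,ε}(x₀) = sup{ t ∈ [0, T_D(x₀)) : for all s ≤ t, the closed ball of radius ε around φ(x₀,s) is contained in D }. Then, setting M = 3c/μ, there exists L ≥ 0 such that for all T ≥ 0, η > 0, all K ≥ 2·max(M,η)·exp((L + 1/M)T)/ε, all x₀ ∈ D and all x₁ ∈ D with ‖x₁ − x₀‖₂ ≤ η/K: T^K_D(x₁) ≥ min(T_{D,ε}(x₀), T) and sup_{t < min(T_{D,ε}(x₀), T)} ‖φ(x₀,t) − φ^K(x₁,t)‖₂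 ≤ max(M,η)·exp((L + 1/M)T)/K. -/
/-!
Write `u = φ(x₀,·) - φ^K(x₁,·)`. Then `⟪u', u⟫` splits into `⟪ψ(φ) - ψ(φ^K), u⟫` and the
perturbation `⟪ψ(φ^K) - ψ^K(φ^K), u⟫ ≤ c (1 + ‖φ^K‖) ‖u‖ / K`. As long as
`3c/(μK) ≤ ‖u‖ ≤ ε`, the sum is at most `(ℓ + μA) ‖u‖²`: where `‖φ‖ ≥ A` the dissipativity
(A1) absorbs the perturbation, and on the ball of radius `A + 1` the field `ψ` is
`ℓ`-Lipschitz. So `‖u‖` never reaches the barrier `M e^{(ℓ + μA + 1/M) t} / K`, which starts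
above `‖x₁ - x₀‖`, stays above `3c/(μK)`, and by the choice of `K` stays below `ε` up to
time `T`. In particular `φ^K(x₁,·)` stays in the compact `ε`-neighbourhood of
`φ(x₀, [0, t])`, which lies in `D`, so it cannot blow up before `min(T_{D,ε}(x₀), T)`.
-/

open Real Set Filter ENNReal

/-- `T_{D,ε}(x₀)`: the supremum of the times `s` (smaller than the lifetime
`Tmax x₀`) such that, up to time `s`, the closed `ε`-ball around the flow
`φ x₀` stays inside `D`. -/
noncomputable def TDeps {n : ℕ} (D : Set (EuclideanSpace ℝ (Fin n))) (ε : ℝ)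
    (Tmax : EuclideanSpace ℝ (Fin n) → ℝ≥0∞)
    (φ : EuclideanSpace ℝ (Fin n) → ℝ → EuclideanSpace ℝ (Fin n))
    (x₀ : EuclideanSpace ℝ (Fin n)) : ℝ≥0∞ :=
  sSup {s : ℝ≥0∞ | s < Tmax x₀ ∧ ∀ u : ℝ, 0 ≤ u → ENNReal.ofReal u ≤ s →
    Metric.closedBall (φ x₀ u) ε ⊆ D}

open Topology Metric

section

variable {E : Type*} [NormedAddCommGroup E] [InnerProductSpace ℝ E]

theorem norm_le_mul_exp_of_inner_lt {u u' : ℝ → E} {a b C κ : ℝ}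
    (hu : ContinuousOn u (Icc a b)) (hu' : ∀ s ∈ Ico a b, HasDerivWithinAt u (u' s) (Ici s) s)
    (ha : ‖u a‖ ≤ C)
    (hbound : ∀ s ∈ Ico a b, ‖u s‖ = C * exp (κ * (s - a)) →
      inner ℝ (u' s) (u s) < κ * ‖u s‖ ^ 2) :
    ∀ s ∈ Icc a b, ‖u s‖ ≤ C * exp (κ * (s - a)) := by
  set B : ℝ → ℝ := fun s => C * exp (κ * (s - a))
  have hB0 : ∀ s, 0 ≤ B s := fun s => mul_nonneg ((norm_nonneg _).trans ha) (exp_nonneg _)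
  have hB : ∀ s, HasDerivAt B (κ * B s) s := fun s => by
    refine ((((hasDerivAt_id' s).sub_const a).const_mul κ).exp.const_mul C).congr_deriv ?_
    simp only [B]; ring
  have hsq := image_le_of_deriv_right_lt_deriv_boundary (hu.norm.pow 2)
    (fun s hs => (hu' s hs).norm_sq) (B := fun s => B s ^ 2)
    (by simpa [B] using pow_le_pow_left₀ (norm_nonneg _) ha 2)
    (fun s => (hB s).pow 2) fun s hs hs2 => by
      have hs' : ‖u s‖ = B s := (sq_eq_sq₀ (norm_nonneg _) (hB0 s)).1 hs2
      have := hbound s hs hs'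
      rw [real_inner_comm, ← hs']
      simp only [Nat.reduceSub, pow_one, Nat.cast_ofNat]
      linarith
  exact fun s hs => (pow_le_pow_iff_left₀ (norm_nonneg _) (hB0 s) two_ne_zero).1 (hsq hs)

theorem inner_sub_le_of_dissipative {D : Set E} {ψ G : E → E} {A μ ε δ : ℝ} {ℓ : NNReal}
    (hA : 1 ≤ A) (hμ : 0 ≤ μ) (hε : ε ≤ 1)
    (hA1 : ∀ x ∈ D, A ≤ ‖x‖ → ∀ y ∈ D, ‖y - x‖ ≤ ε →
      inner ℝ (ψ x - ψ y) (x - y) ≤ -μ * ‖x‖ * ‖x - y‖ ^ 2)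
    (hG : ∀ x ∈ D, ‖ψ x - G x‖ ≤ δ * (1 + ‖x‖))
    (hℓ : LipschitzOnWith ℓ ψ (closedBall 0 (A + 1) ∩ D))
    {x y : E} (hx : x ∈ D) (hy : y ∈ D) (hxyε : ‖x - y‖ ≤ ε) (hxyδ : 3 * δ ≤ μ * ‖x - y‖) :
    inner ℝ (ψ x - G y) (x - y) ≤ (ℓ + μ * A) * ‖x - y‖ ^ 2 := by
  set r := ‖x - y‖
  have hr : 0 ≤ r := norm_nonneg _
  have hδ : 0 ≤ δ := nonneg_of_mul_nonneg_left ((norm_nonneg _).trans (hG y hy)) (by positivity)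
  have hsplit : inner ℝ (ψ x - G y) (x - y) =
      inner ℝ (ψ x - ψ y) (x - y) + inner ℝ (ψ y - G y) (x - y) := by
    rw [← inner_add_left, sub_add_sub_cancel]
  have hpert : inner ℝ (ψ y - G y) (x - y) ≤ δ * (1 + ‖y‖) * r :=
    (real_inner_le_norm _ _).trans (mul_le_mul_of_nonneg_right (hG y hy) hr)
  have hy_le : ‖y‖ ≤ ‖x‖ + r := norm_le_insert x y
  rcases le_or_gt A ‖x‖ with hfar | hnear
  · have hdiss := hA1 x hx hfar y hy (by rwa [norm_sub_rev])
    have hx1 : 1 ≤ ‖x‖ := hA.trans hfar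
    have hpert' : δ * (1 + ‖y‖) ≤ μ * r * ‖x‖ := by nlinarith
    have : 0 ≤ (ℓ + μ * A) * r ^ 2 := by positivity
    nlinarith [mul_le_mul_of_nonneg_right hpert' hr]
  · have hxB : x ∈ closedBall 0 (A + 1) ∩ D := ⟨by rw [mem_closedBall_zero_iff]; linarith, hx⟩
    have hyB : y ∈ closedBall 0 (A + 1) ∩ D := ⟨by rw [mem_closedBall_zero_iff]; linarith, hy⟩
    have hlip : inner ℝ (ψ x - ψ y) (x - y) ≤ ℓ * r ^ 2 := by
      calc inner ℝ (ψ x - ψ y) (x - y) ≤ ‖ψ x - ψ y‖ * r := real_inner_le_norm _ _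
        _ ≤ ℓ * r * r := by
          gcongr; simpa only [dist_eq_norm] using hℓ.dist_le_mul x hxB y hyB
        _ = ℓ * r ^ 2 := by ring
    have hpert' : δ * (1 + ‖y‖) ≤ μ * A * r := by nlinarith
    nlinarith [mul_le_mul_of_nonneg_right hpert' hr]

theorem norm_sub_le_mul_exp_of_dissipative {D : Set E} {ψ G : E → E} {A μ ε δ : ℝ}
    {ℓ : NNReal} (hA : 1 ≤ A) (hμ : 0 ≤ μ) (hε : ε ≤ 1)
    (hA1 : ∀ x ∈ D, A ≤ ‖x‖ → ∀ y ∈ D, ‖y - x‖ ≤ ε →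
      inner ℝ (ψ x - ψ y) (x - y) ≤ -μ * ‖x‖ * ‖x - y‖ ^ 2)
    (hG : ∀ x ∈ D, ‖ψ x - G x‖ ≤ δ * (1 + ‖x‖))
    (hℓ : LipschitzOnWith ℓ ψ (closedBall 0 (A + 1) ∩ D))
    {x y : ℝ → E} {b C κ : ℝ}
    (hx : ∀ s ∈ Icc 0 b, HasDerivAt x (ψ (x s)) s ∧ x s ∈ D)
    (hy : ∀ s ∈ Icc 0 b, HasDerivAt y (G (y s)) s ∧ y s ∈ D)
    (hb : 0 ≤ b) (h0 : ‖x 0 - y 0‖ ≤ C) (hC : 0 < C) (hδC : 3 * δ ≤ μ * C)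
    (hCb : C * exp (κ * b) ≤ ε) (hκ : ℓ + μ * A < κ) :
    ‖x b - y b‖ ≤ C * exp (κ * b) := by
  have hκ0 : 0 ≤ κ := le_trans (by positivity) hκ.le
  have hu : ∀ s ∈ Icc 0 b, HasDerivAt (x - y) (ψ (x s) - G (y s)) s :=
    fun s hs => (hx s hs).1.sub (hy s hs).1
  have hbound : ∀ s ∈ Ico 0 b, ‖(x - y) s‖ = C * exp (κ * (s - 0)) →
      inner ℝ (ψ (x s) - G (y s)) ((x - y) s) < κ * ‖(x - y) s‖ ^ 2 := by
    rintro s ⟨hs0, hsb⟩ hs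
    rw [sub_zero] at hs
    rw [Pi.sub_apply] at hs ⊢
    have hexp : 1 ≤ exp (κ * s) := one_le_exp (by positivity)
    have hr : 0 < ‖x s - y s‖ := by rw [hs]; positivity
    have hrε : ‖x s - y s‖ ≤ ε := hs ▸ hCb.trans' (by gcongr)
    have hrδ : 3 * δ ≤ μ * ‖x s - y s‖ := hδC.trans (by rw [hs]; gcongr; nlinarith)
    calc _ ≤ (ℓ + μ * A) * ‖x s - y s‖ ^ 2 := inner_sub_le_of_dissipative hA hμ hε hA1 hG hℓ
            (hx s ⟨hs0, hsb.le⟩).2 (hy s ⟨hs0, hsb.le⟩).2 hrε hrδ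
      _ < κ * ‖x s - y s‖ ^ 2 := by gcongr
  simpa using norm_le_mul_exp_of_inner_lt (fun s hs => (hu s hs).continuousAt.continuousWithinAt)
    (fun s hs => (hu s (Ico_subset_Icc_self hs)).hasDerivWithinAt) h0 hbound b ⟨hb, le_rfl⟩

end

theorem exists_isCompact_frequently_mem {α : Type*} [PseudoMetricSpace α] [ProperSpace α]
    {D : Set α} {x y : ℝ → α} {τ ε : ℝ} (hτ : 0 < τ) (hε : 0 ≤ ε)
    (hx : ContinuousOn x (Icc 0 τ)) (hD : ∀ s ∈ Icc 0 τ, closedBall (x s) ε ⊆ D)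
    (hxy : ∀ s ∈ Ioo 0 τ, dist (y s) (x s) ≤ ε) :
    ∃ Kc, IsCompact Kc ∧ Kc ⊆ D ∧ ∃ᶠ t in 𝓝[<] τ, y t ∈ Kc := by
  have hK := isCompact_Icc.image_of_continuousOn hx
  refine ⟨cthickening ε (x '' Icc 0 τ), hK.cthickening, ?_, ?_⟩
  · rw [hK.cthickening_eq_biUnion_closedBall hε]
    exact iUnion₂_subset <| forall_mem_image.2 hD
  · refine (eventually_of_mem (Ioo_mem_nhdsLT hτ) fun s hs => ?_).frequently
    exact mem_cthickening_of_dist_le _ _ _ _ (mem_image_of_mem x (Ioo_subset_Icc_self hs))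
      (hxy s hs)

theorem LocallyLipschitzOn.exists_lipschitzOnWith_closedBall_inter {α β : Type*}
    [PseudoMetricSpace α] [ProperSpace α] [PseudoMetricSpace β] {D : Set α} {f : α → β}
    (hf : LocallyLipschitzOn (closure D) f) (a : α) (r : ℝ) :
    ∃ ℓ, LipschitzOnWith ℓ f (closedBall a r ∩ D) :=
  ((hf.mono inter_subset_right).exists_lipschitzOnWith_of_compact
    ((isCompact_closedBall a r).inter_right isClosed_closure)).imp
    fun _ h => h.mono (inter_subset_inter_right _ subset_closure)

section TDeps

variable {n : ℕ} {D : Set (EuclideanSpace ℝ (Fin n))} {ε : ℝ}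
  {Tmax : EuclideanSpace ℝ (Fin n) → ℝ≥0∞}
  {φ : EuclideanSpace ℝ (Fin n) → ℝ → EuclideanSpace ℝ (Fin n)} {x₀ : EuclideanSpace ℝ (Fin n)}

theorem tDeps_le : TDeps D ε Tmax φ x₀ ≤ Tmax x₀ :=
  sSup_le fun _ hs => hs.1.le

theorem closedBall_subset_of_lt_tDeps {s : ℝ} (hs : 0 ≤ s)
    (hsT : ENNReal.ofReal s < TDeps D ε Tmax φ x₀) : closedBall (φ x₀ s) ε ⊆ D := by
  obtain ⟨b, hb, hsb⟩ := lt_sSup_iff.1 hsT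
  exact hb.2 s hs hsb.le

end TDeps

theorem forall_mem_Icc_of_ofReal_lt {P : ℝ → Prop} {T : ℝ≥0∞} {t : ℝ}
    (hP : ∀ s, 0 ≤ s → ENNReal.ofReal s < T → P s) (ht : ENNReal.ofReal t < T) :
    ∀ s ∈ Icc 0 t, P s :=
  fun s hs => hP s hs.1 ((ENNReal.ofReal_le_ofReal hs.2).trans_lt ht)

theorem le_lifetime_of_dist_le {α : Type*} [PseudoMetricSpace α] [ProperSpace α] {D : Set α}
    {x y : ℝ → α} {S Ty : ℝ≥0∞} {ε : ℝ} (hε : 0 ≤ ε) (hTy : 0 < Ty)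
    (hleave : Ty ≠ ⊤ → ∀ Kc, IsCompact Kc → Kc ⊆ D → ∀ᶠ t in 𝓝[<] Ty.toReal, y t ∉ Kc)
    (hx : ∀ s, 0 ≤ s → ENNReal.ofReal s < S → ContinuousAt x s ∧ closedBall (x s) ε ⊆ D)
    (hxy : ∀ s, 0 ≤ s → ENNReal.ofReal s < S → ENNReal.ofReal s < Ty → dist (y s) (x s) ≤ ε) :
    S ≤ Ty := by
  by_contra! hlt
  have hτ : ENNReal.ofReal Ty.toReal = Ty := ofReal_toReal hlt.ne_top
  have hτx := forall_mem_Icc_of_ofReal_lt hx (hτ ▸ hlt)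
  obtain ⟨Kc, hKc, hKcD, hfreq⟩ := exists_isCompact_frequently_mem (y := y)
    (toReal_pos hTy.ne' hlt.ne_top) hε (fun s hs => (hτx s hs).1.continuousWithinAt)
    (fun s hs => (hτx s hs).2) fun s hs => by
      have hsTy : ENNReal.ofReal s < Ty :=
        hτ ▸ (ENNReal.ofReal_lt_ofReal_iff_of_nonneg hs.1.le).2 hs.2
      exact hxy s hs.1.le (hsTy.trans hlt) hsTy
  exact hfreq (hleave hlt.ne_top Kc hKc hKcD)

theorem stmt19_general {n : ℕ} (D : Set (EuclideanSpace ℝ (Fin n)))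
    (ψ : EuclideanSpace ℝ (Fin n) → EuclideanSpace ℝ (Fin n))
    (ψK : ℝ → EuclideanSpace ℝ (Fin n) → EuclideanSpace ℝ (Fin n))
    (hψLip : ∀ x ∈ closure D, ∃ s ∈ nhdsWithin x (closure D), ∃ L : NNReal,
      LipschitzOnWith L ψ s)
    (A c μ ε : ℝ) (hA : 1 ≤ A) (hc : 0 < c) (hμ : 0 < μ) (hε : ε ∈ Set.Ioc (0 : ℝ) 1)
    -- (A1)
    (hA1 : ∀ x ∈ D, A ≤ ‖x‖ → ∀ y ∈ D, ‖y - x‖ ≤ ε →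
      inner ℝ (ψ x - ψ y) (x - y) ≤ -μ * ‖x‖ * ‖x - y‖ ^ 2)
    -- (A2)
    (hA2 : ∀ x ∈ D, ∀ K : ℝ, 1 ≤ K → ‖ψ x - ψK K x‖ ≤ c * (1 + ‖x‖) / K)
    -- `φ` is the (maximal) flow of `ψ` in `D`, with lifetime `Tmax`
    (Tmax : EuclideanSpace ℝ (Fin n) → ℝ≥0∞)
    (φ : EuclideanSpace ℝ (Fin n) → ℝ → EuclideanSpace ℝ (Fin n))
    (hinit : ∀ x₀ ∈ D, φ x₀ 0 = x₀)
    (hmem : ∀ x₀ ∈ D, ∀ t : ℝ, 0 ≤ t → ENNReal.ofReal t < Tmax x₀ → φ x₀ t ∈ D)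
    (hder : ∀ x₀ ∈ D, ∀ t : ℝ, 0 ≤ t → ENNReal.ofReal t < Tmax x₀ →
      HasDerivAt (φ x₀) (ψ (φ x₀ t)) t)
    -- for each `K ≥ 1`, `φK K` is the (maximal) flow of `ψK K` in `D`,
    -- with lifetime `TK K`
    (TK : ℝ → EuclideanSpace ℝ (Fin n) → ℝ≥0∞)
    (φK : ℝ → EuclideanSpace ℝ (Fin n) → ℝ → EuclideanSpace ℝ (Fin n))
    (hTKpos : ∀ K : ℝ, 1 ≤ K → ∀ x₀ ∈ D, 0 < TK K x₀)
    (hinitK : ∀ K : ℝ, 1 ≤ K → ∀ x₀ ∈ D, φK K x₀ 0 = x₀)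
    (hmemK : ∀ K : ℝ, 1 ≤ K → ∀ x₀ ∈ D, ∀ t : ℝ, 0 ≤ t →
      ENNReal.ofReal t < TK K x₀ → φK K x₀ t ∈ D)
    (hderK : ∀ K : ℝ, 1 ≤ K → ∀ x₀ ∈ D, ∀ t : ℝ, 0 ≤ t →
      ENNReal.ofReal t < TK K x₀ → HasDerivAt (φK K x₀) (ψK K (φK K x₀ t)) t)
    (hmaxK : ∀ K : ℝ, 1 ≤ K → ∀ x₀ ∈ D, TK K x₀ ≠ ⊤ →
      ∀ Kc : Set (EuclideanSpace ℝ (Fin n)), IsCompact Kc → Kc ⊆ D →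
      ∀ᶠ t in nhdsWithin (TK K x₀).toReal (Set.Iio (TK K x₀).toReal),
        φK K x₀ t ∉ Kc) :
    ∃ L : ℝ, 0 ≤ L ∧ ∀ T : ℝ, 0 ≤ T → ∀ η : ℝ, 0 < η → ∀ K : ℝ, 1 ≤ K →
      2 * max (3 * c / μ) η * Real.exp ((L + 1 / (3 * c / μ)) * T) / ε ≤ K →
      ∀ x₀ ∈ D, ∀ x₁ ∈ D, ‖x₁ - x₀‖ ≤ η / K →
        min (TDeps D ε Tmax φ x₀) (ENNReal.ofReal T) ≤ TK K x₁ ∧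
        ∀ t : ℝ, 0 ≤ t →
          ENNReal.ofReal t < min (TDeps D ε Tmax φ x₀) (ENNReal.ofReal T) →
          ‖φ x₀ t - φK K x₁ t‖ ≤
            max (3 * c / μ) η * Real.exp ((L + 1 / (3 * c / μ)) * T) / K := by
  obtain ⟨ℓ, hℓ⟩ := LocallyLipschitzOn.exists_lipschitzOnWith_closedBall_inter
    (fun x hx => let ⟨s, hs, L, hL⟩ := hψLip x hx; ⟨L, s, hs, hL⟩) 0 (A + 1)
  refine ⟨ℓ + μ * A, by positivity, fun T hT η hη K hK hKbig x₀ hx₀ x₁ hx₁ hx01 => ?_⟩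
  set M := max (3 * c / μ) η
  set κ := ℓ + μ * A + 1 / (3 * c / μ)
  have hK0 : 0 < K := by linarith
  have hM : 0 < M := lt_max_of_lt_right hη
  have hκ : ℓ + μ * A < κ := lt_add_of_pos_right _ (by positivity)
  have hκ0 : 0 < κ := by positivity
  have hbarrier : M * exp (κ * T) / K ≤ ε := by
    rw [div_le_iff₀ hε.1] at hKbig
    rw [div_le_iff₀ hK0]
    nlinarith [mul_pos hM (exp_pos (κ * T))]
  have hclose : ∀ t, 0 ≤ t → ENNReal.ofReal t < min (TDeps D ε Tmax φ x₀) (ENNReal.ofReal T) →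
      ENNReal.ofReal t < TK K x₁ → ‖φ x₀ t - φK K x₁ t‖ ≤ M * exp (κ * T) / K := by
    intro t ht htD htK
    have hmono : M / K * exp (κ * t) ≤ M * exp (κ * T) / K := by
      rw [div_mul_eq_mul_div]
      gcongr
      exact ((ENNReal.ofReal_lt_ofReal_iff_of_nonneg ht).1 (htD.trans_le (min_le_right _ _))).le
    refine (norm_sub_le_mul_exp_of_dissipative hA hμ.le hε.2 hA1 (G := ψK K) (δ := c / K)
      (fun x hx => (hA2 x hx K hK).trans_eq (by ring)) hℓ
      (forall_mem_Icc_of_ofReal_lt (fun s hs hsT => ⟨hder x₀ hx₀ s hs hsT, hmem x₀ hx₀ s hs hsT⟩)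
        (htD.trans_le ((min_le_left _ _).trans tDeps_le)))
      (forall_mem_Icc_of_ofReal_lt (fun s hs hsT => ⟨hderK K hK x₁ hx₁ s hs hsT,
        hmemK K hK x₁ hx₁ s hs hsT⟩) htK)
      ht ?_ (by positivity) ?_ (hmono.trans hbarrier) hκ).trans hmono
    · rw [hinit x₀ hx₀, hinitK K hK x₁ hx₁, norm_sub_rev]
      exact hx01.trans (by gcongr; exact le_max_right _ _)
    · rw [← mul_div_assoc, ← mul_div_assoc]
      exact div_le_div_of_nonneg_right ((div_le_iff₀' hμ).1 (le_max_left _ _)) hK0.le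
  have hlife : min (TDeps D ε Tmax φ x₀) (ENNReal.ofReal T) ≤ TK K x₁ :=
    le_lifetime_of_dist_le hε.1.le (hTKpos K hK x₁ hx₁) (hmaxK K hK x₁ hx₁) (fun s hs hsT =>
      ⟨(hder x₀ hx₀ s hs (hsT.trans_le ((min_le_left _ _).trans tDeps_le))).continuousAt,
        closedBall_subset_of_lt_tDeps hs (hsT.trans_le (min_le_left _ _))⟩)
      fun s hs hsT hsTK => by
        rw [dist_comm, dist_eq_norm]
        exact (hclose s hs hsT hsTK).trans hbarrier
  exact ⟨hlife, fun t ht htlt => hclose t ht htlt (htlt.trans_le hlife)⟩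

/-- Uniform approximation of the flow of `ψ` by the flows of the perturbed
fields `ψ^K`, under the strengthened non-expansivity (A1) and the `O(1/K)`
closeness (A2). Here `M = 3c/μ`. -/
theorem stmt19 {n : ℕ} (D : Set (EuclideanSpace ℝ (Fin n))) (hD : IsOpen D)
    (ψ : EuclideanSpace ℝ (Fin n) → EuclideanSpace ℝ (Fin n))
    (ψK : ℝ → EuclideanSpace ℝ (Fin n) → EuclideanSpace ℝ (Fin n))
    (hψLip : ∀ x ∈ closure D, ∃ s ∈ nhdsWithin x (closure D), ∃ L : NNReal,
      LipschitzOnWith L ψ s)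
    (hψKLip : ∀ K : ℝ, 1 ≤ K → ∀ x ∈ closure D, ∃ s ∈ nhdsWithin x (closure D),
      ∃ L : NNReal, LipschitzOnWith L (ψK K) s)
    (A c μ ε : ℝ) (hA : 1 ≤ A) (hc : 0 < c) (hμ : 0 < μ) (hε : ε ∈ Set.Ioc (0 : ℝ) 1)
    -- (A1)
    (hA1 : ∀ x ∈ D, A ≤ ‖x‖ → ∀ y ∈ D, ‖y - x‖ ≤ ε →
      inner ℝ (ψ x - ψ y) (x - y) ≤ -μ * ‖x‖ * ‖x - y‖ ^ 2)
    -- (A2)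
    (hA2 : ∀ x ∈ D, ∀ K : ℝ, 1 ≤ K → ‖ψ x - ψK K x‖ ≤ c * (1 + ‖x‖) / K)
    -- `φ` is the (maximal) flow of `ψ` in `D`, with lifetime `Tmax`
    (Tmax : EuclideanSpace ℝ (Fin n) → ℝ≥0∞)
    (φ : EuclideanSpace ℝ (Fin n) → ℝ → EuclideanSpace ℝ (Fin n))
    (hTpos : ∀ x₀ ∈ D, 0 < Tmax x₀)
    (hinit : ∀ x₀ ∈ D, φ x₀ 0 = x₀)
    (hmem : ∀ x₀ ∈ D, ∀ t : ℝ, 0 ≤ t → ENNReal.ofReal t < Tmax x₀ → φ x₀ t ∈ D)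
    (hder : ∀ x₀ ∈ D, ∀ t : ℝ, 0 ≤ t → ENNReal.ofReal t < Tmax x₀ →
      HasDerivAt (φ x₀) (ψ (φ x₀ t)) t)
    (hmax : ∀ x₀ ∈ D, Tmax x₀ ≠ ⊤ → ∀ Kc : Set (EuclideanSpace ℝ (Fin n)),
      IsCompact Kc → Kc ⊆ D →
      ∀ᶠ t in nhdsWithin (Tmax x₀).toReal (Set.Iio (Tmax x₀).toReal), φ x₀ t ∉ Kc)
    -- for each `K ≥ 1`, `φK K` is the (maximal) flow of `ψK K` in `D`,
    -- with lifetime `TK K`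
    (TK : ℝ → EuclideanSpace ℝ (Fin n) → ℝ≥0∞)
    (φK : ℝ → EuclideanSpace ℝ (Fin n) → ℝ → EuclideanSpace ℝ (Fin n))
    (hTKpos : ∀ K : ℝ, 1 ≤ K → ∀ x₀ ∈ D, 0 < TK K x₀)
    (hinitK : ∀ K : ℝ, 1 ≤ K → ∀ x₀ ∈ D, φK K x₀ 0 = x₀)
    (hmemK : ∀ K : ℝ, 1 ≤ K → ∀ x₀ ∈ D, ∀ t : ℝ, 0 ≤ t →
      ENNReal.ofReal t < TK K x₀ → φK K x₀ t ∈ D)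
    (hderK : ∀ K : ℝ, 1 ≤ K → ∀ x₀ ∈ D, ∀ t : ℝ, 0 ≤ t →
      ENNReal.ofReal t < TK K x₀ → HasDerivAt (φK K x₀) (ψK K (φK K x₀ t)) t)
    (hmaxK : ∀ K : ℝ, 1 ≤ K → ∀ x₀ ∈ D, TK K x₀ ≠ ⊤ →
      ∀ Kc : Set (EuclideanSpace ℝ (Fin n)), IsCompact Kc → Kc ⊆ D →
      ∀ᶠ t in nhdsWithin (TK K x₀).toReal (Set.Iio (TK K x₀).toReal),
        φK K x₀ t ∉ Kc) :
    ∃ L : ℝ, 0 ≤ L ∧ ∀ T : ℝ, 0 ≤ T → ∀ η : ℝ, 0 < η → ∀ K : ℝ, 1 ≤ K →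
      2 * max (3 * c / μ) η * Real.exp ((L + 1 / (3 * c / μ)) * T) / ε ≤ K →
      ∀ x₀ ∈ D, ∀ x₁ ∈ D, ‖x₁ - x₀‖ ≤ η / K →
        min (TDeps D ε Tmax φ x₀) (ENNReal.ofReal T) ≤ TK K x₁ ∧
        ∀ t : ℝ, 0 ≤ t →
          ENNReal.ofReal t < min (TDeps D ε Tmax φ x₀) (ENNReal.ofReal T) →
          ‖φ x₀ t - φK K x₁ t‖ ≤
            max (3 * c / μ) η * Real.exp ((L + 1 / (3 * c / μ)) * T) / K :=
  stmt19_general D ψ ψK hψLip A c μ ε hA hc hμ hε hA1 hA2 Tmax φ hinit hmem hder TK φK hTKpos hinitK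
    hmemK hderK hmaxK
end
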